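/- arXiv:1904.11159 — 15 statements merged into one kernel-verified Lean document; each statement's English description precedes it below -/
import Mathlib

section
/- Let x_1, ..., x_N be N unit vectors in ℝ^d representing pairwise distinct lines (i.e. x_i ≠ x_j and x_i ≠ -x_j for i ≠ j), and suppose there is a constant α such that |⟨x_i, x_j⟩| = α for all i ≠ j. Then N ≤ d(d+1)/2. -/
open Finset

lemma swap_sum_aux {d : ℕ} (u v : Fin d → ℝ) :
    ∑ p ∈ univ.filter (fun p : Fin d × Fin d => p.2 < p.1), u p.1 * v p.2
      = ∑ p ∈ univ.filter (fun p : Fin d × Fin d => p.1 < p.2), u p.2 * v p.1 := by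
  refine Finset.sum_nbij' (fun p => p.swap) (fun p => p.swap) ?_ ?_ ?_ ?_ ?_ <;>
    simp [mul_comm]

lemma key_sum {d : ℕ} (u : Fin d → ℝ) :
    ∑ p : {p : Fin d × Fin d // p.1 ≤ p.2},
      ((if p.1.1 = p.1.2 then (1:ℝ) else 2) * (u p.1.1 * u p.1.2)) = (∑ a, u a) ^ 2 := by
  classical
  have hsub : ∑ p : {p : Fin d × Fin d // p.1 ≤ p.2},
      ((if p.1.1 = p.1.2 then (1:ℝ) else 2) * (u p.1.1 * u p.1.2))
      = ∑ p ∈ univ.filter (fun p : Fin d × Fin d => p.1 ≤ p.2),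
          ((if p.1 = p.2 then (1:ℝ) else 2) * (u p.1 * u p.2)) := by
    rw [Finset.sum_subtype (p := fun p : Fin d × Fin d => p.1 ≤ p.2)
      (univ.filter (fun p : Fin d × Fin d => p.1 ≤ p.2))
      (by simp) (fun p => (if p.1 = p.2 then (1:ℝ) else 2) * (u p.1 * u p.2))]
  rw [hsub]
  have hsq : (∑ a, u a) ^ 2 = ∑ p : Fin d × Fin d, u p.1 * u p.2 := by
    rw [sq, Finset.sum_mul_sum, Fintype.sum_prod_type (f := fun p : Fin d × Fin d => u p.1 * u p.2)]
  rw [hsq]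
  -- split the full sum
  rw [← Finset.sum_filter_add_sum_filter_not univ (fun p : Fin d × Fin d => p.1 ≤ p.2)
    (fun p => u p.1 * u p.2)]
  have hnotle : univ.filter (fun p : Fin d × Fin d => ¬ p.1 ≤ p.2)
      = univ.filter (fun p : Fin d × Fin d => p.2 < p.1) := by
    apply Finset.filter_congr; intro p _; simp [not_le]
  rw [hnotle, swap_sum_aux u u]
  -- split the ≤ part on both sides into = and <
  rw [← Finset.sum_filter_add_sum_filter_not (univ.filter (fun p : Fin d × Fin d => p.1 ≤ p.2))
    (fun p : Fin d × Fin d => p.1 = p.2)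
    (fun p => (if p.1 = p.2 then (1:ℝ) else 2) * (u p.1 * u p.2)),
    ← Finset.sum_filter_add_sum_filter_not (univ.filter (fun p : Fin d × Fin d => p.1 ≤ p.2))
    (fun p : Fin d × Fin d => p.1 = p.2) (fun p => u p.1 * u p.2)]
  have heqset : (univ.filter (fun p : Fin d × Fin d => p.1 ≤ p.2)).filter
      (fun p : Fin d × Fin d => ¬ p.1 = p.2)
      = univ.filter (fun p : Fin d × Fin d => p.1 < p.2) := by
    rw [Finset.filter_filter]
    apply Finset.filter_congr; intro p _
    constructor
    · rintro ⟨h1, h2⟩; exact lt_of_le_of_ne h1 h2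
    · intro h; exact ⟨le_of_lt h, ne_of_lt h⟩
  have h1 : ∑ p ∈ (univ.filter (fun p : Fin d × Fin d => p.1 ≤ p.2)).filter
      (fun p : Fin d × Fin d => p.1 = p.2),
      ((if p.1 = p.2 then (1:ℝ) else 2) * (u p.1 * u p.2))
      = ∑ p ∈ (univ.filter (fun p : Fin d × Fin d => p.1 ≤ p.2)).filter
          (fun p : Fin d × Fin d => p.1 = p.2), u p.1 * u p.2 := by
    apply Finset.sum_congr rfl; intro p hp
    simp only [Finset.mem_filter] at hp
    rw [if_pos hp.2, one_mul]
  have h2 : ∑ p ∈ (univ.filter (fun p : Fin d × Fin d => p.1 ≤ p.2)).filter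
      (fun p : Fin d × Fin d => ¬ p.1 = p.2),
      ((if p.1 = p.2 then (1:ℝ) else 2) * (u p.1 * u p.2))
      = ∑ p ∈ univ.filter (fun p : Fin d × Fin d => p.1 < p.2),
          (2 : ℝ) * (u p.1 * u p.2) := by
    rw [heqset.symm]
    apply Finset.sum_congr rfl; intro p hp
    simp only [Finset.mem_filter] at hp
    rw [if_neg hp.2]
  have h3 : ∑ p ∈ univ.filter (fun p : Fin d × Fin d => p.1 < p.2), u p.2 * u p.1
      = ∑ p ∈ univ.filter (fun p : Fin d × Fin d => p.1 < p.2), u p.1 * u p.2 := by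
    apply Finset.sum_congr rfl; intro p _; ring
  rw [h1, h2, heqset, h3, ← Finset.mul_sum]; ring

/-- A regular simplex in `RP^{d-1}`, given by unit-length representatives spanning pairwise
distinct lines and with a common absolute inner product `α`, has at most `d(d+1)/2` points. -/
theorem regular_simplex_card_le_real (d N : ℕ)
    (x : Fin N → EuclideanSpace ℝ (Fin d))
    (hnorm : ∀ i, ‖x i‖ = 1)
    (hlines : ∀ i j, i ≠ j → x i ≠ x j ∧ x i ≠ -x j)
    (α : ℝ)
    (hang : ∀ i j, i ≠ j → |(inner ℝ (x i) (x j) : ℝ)| = α) :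
    N ≤ d * (d + 1) / 2 := by
  classical
  rcases Nat.eq_zero_or_pos N with rfl | hN
  · exact Nat.zero_le _
  -- d ≥ 1, since a unit vector exists
  have hd : 0 < d := by
    by_contra hd
    have hd0 : d = 0 := by omega
    subst hd0
    have hx0 : x ⟨0, hN⟩ = 0 := Subsingleton.elim _ _
    have := hnorm ⟨0, hN⟩
    rw [hx0, norm_zero] at this
    norm_num at this
  have htarget : 1 ≤ d * (d + 1) / 2 := by
    rw [Nat.le_div_iff_mul_le (by norm_num)]
    nlinarith
  rcases Nat.lt_or_ge N 2 with hN2 | hN2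
  · omega
  -- Now N ≥ 2.
  have h01 : (⟨0, by omega⟩ : Fin N) ≠ ⟨1, by omega⟩ := by
    intro h; simp [Fin.ext_iff] at h
  have hα0 : 0 ≤ α := (hang _ _ h01) ▸ abs_nonneg _
  have hα1 : α < 1 := by
    rcases lt_or_ge α 1 with h | h
    · exact h
    have hle : |(inner ℝ (x ⟨0, by omega⟩) (x ⟨1, by omega⟩) : ℝ)| ≤ 1 := by
      have := abs_real_inner_le_norm (x ⟨0, by omega⟩) (x ⟨1, by omega⟩)
      rwa [hnorm, hnorm, one_mul] at this
    have hα : α = 1 := le_antisymm ((hang _ _ h01) ▸ hle) h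
    have hx0 : x (⟨0, by omega⟩ : Fin N) ≠ 0 := by
      intro h0; have := hnorm ⟨0, by omega⟩; rw [h0, norm_zero] at this; norm_num at this
    have hx1 : x (⟨1, by omega⟩ : Fin N) ≠ 0 := by
      intro h0; have := hnorm ⟨1, by omega⟩; rw [h0, norm_zero] at this; norm_num at this
    have heq : ‖(inner ℝ (x ⟨0, by omega⟩) (x ⟨1, by omega⟩) : ℝ)‖
        = ‖x (⟨0, by omega⟩ : Fin N)‖ * ‖x (⟨1, by omega⟩ : Fin N)‖ := by
      rw [hnorm, hnorm, one_mul, Real.norm_eq_abs, hang _ _ h01, hα]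
    obtain ⟨r, hr0, hr⟩ := (norm_inner_eq_norm_iff hx0 hx1).mp heq
    have hnr : |r| = 1 := by
      have := hnorm (⟨1, by omega⟩ : Fin N)
      rw [hr, norm_smul, hnorm, mul_one, Real.norm_eq_abs] at this
      exact this
    rcases abs_eq (by norm_num : (0:ℝ) ≤ 1) |>.mp hnr with h1 | h1
    · exfalso
      apply (hlines _ _ h01).1
      rw [hr, h1, one_smul]
    · exfalso
      apply (hlines _ _ h01).2
      rw [hr, h1]
      simp
  have hα2 : α ^ 2 < 1 := by nlinarith
  -- Define the lifted vectors
  set I := {p : Fin d × Fin d // p.1 ≤ p.2} with hI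
  let z : Fin N → EuclideanSpace ℝ I := fun i =>
    WithLp.toLp 2 (fun p : I => (if p.1.1 = p.1.2 then (1:ℝ) else Real.sqrt 2) * (x i p.1.1 * x i p.1.2))
  have hinner : ∀ i j, (inner ℝ (z i) (z j) : ℝ) = (inner ℝ (x i) (x j) : ℝ) ^ 2 := by
    intro i j
    have hx : (inner ℝ (x i) (x j) : ℝ) = ∑ a, x i a * x j a := by
      simp [PiLp.inner_apply, RCLike.inner_apply, conj_trivial, mul_comm]
    have hz : (inner ℝ (z i) (z j) : ℝ) = ∑ p : I, z i p * z j p := by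
      simp only [PiLp.inner_apply, RCLike.inner_apply, conj_trivial]
      exact Finset.sum_congr rfl (fun _ _ => mul_comm _ _)
    rw [hz, hx, ← key_sum (fun a => x i a * x j a)]
    apply Finset.sum_congr rfl
    intro p _
    show (if p.1.1 = p.1.2 then (1:ℝ) else Real.sqrt 2) * (x i p.1.1 * x i p.1.2) *
        ((if p.1.1 = p.1.2 then (1:ℝ) else Real.sqrt 2) * (x j p.1.1 * x j p.1.2))
      = (if p.1.1 = p.1.2 then (1:ℝ) else 2) * (x i p.1.1 * x j p.1.1 * (x i p.1.2 * x j p.1.2))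
    split_ifs with h
    · ring
    · have h2 : Real.sqrt 2 * Real.sqrt 2 = 2 := Real.mul_self_sqrt (by norm_num)
      linear_combination (x i p.1.1 * x i p.1.2 * x j p.1.1 * x j p.1.2) * h2
  -- z is linearly independent
  have hli : LinearIndependent ℝ z := by
    rw [Fintype.linearIndependent_iff]
    intro g hg
    have hTj : ∀ j, g j * (1 - α ^ 2) + α ^ 2 * (∑ i, g i) = 0 := by
      intro j
      have h0 : (inner ℝ (∑ i, g i • z i) (z j) : ℝ) = 0 := by rw [hg, inner_zero_left]
      rw [sum_inner] at h0
      have h1 : ∀ i, (inner ℝ (g i • z i) (z j) : ℝ) = g i * (inner ℝ (z i) (z j) : ℝ) := by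
        intro i; rw [real_inner_smul_left]
      rw [Finset.sum_congr rfl (fun i _ => h1 i)] at h0
      have h2 : ∀ i, g i * (inner ℝ (z i) (z j) : ℝ)
          = α ^ 2 * g i + (if i = j then (1 - α ^ 2) * g i else 0) := by
        intro i
        rw [hinner i j]
        by_cases hij : i = j
        · subst hij
          have : (inner ℝ (x i) (x i) : ℝ) = 1 := by
            rw [real_inner_self_eq_norm_sq, hnorm]; norm_num
          rw [this, if_pos rfl]; ring
        · have : (inner ℝ (x i) (x j) : ℝ) ^ 2 = α ^ 2 := by
            rw [← sq_abs, hang i j hij]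
          rw [this, if_neg hij]; ring
      rw [Finset.sum_congr rfl (fun i _ => h2 i), Finset.sum_add_distrib,
        Finset.sum_ite_eq' univ j (fun i => (1 - α ^ 2) * g i), if_pos (Finset.mem_univ j),
        ← Finset.mul_sum] at h0
      linarith
    -- Sum over j to get total sum zero
    have hT : (∑ i, g i) = 0 := by
      have hsum : ∑ j, (g j * (1 - α ^ 2) + α ^ 2 * (∑ i, g i)) = 0 := by
        rw [Finset.sum_congr rfl (fun j _ => hTj j)]; simp
      rw [Finset.sum_add_distrib, ← Finset.sum_mul, Finset.sum_const, Finset.card_univ,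
        Fintype.card_fin, nsmul_eq_mul] at hsum
      set T := ∑ i, g i
      have hpos : 0 < 1 - α ^ 2 + (N : ℝ) * α ^ 2 := by
        have : (0:ℝ) ≤ (N : ℝ) * α ^ 2 := by positivity
        nlinarith
      have : T * (1 - α ^ 2 + (N : ℝ) * α ^ 2) = 0 := by linear_combination hsum
      rcases mul_eq_zero.mp this with h | h
      · exact h
      · exact absurd h (ne_of_gt hpos)
    intro j
    have := hTj j
    rw [hT, mul_zero, add_zero, mul_eq_zero] at this
    rcases this with h | h
    · exact h
    · exfalso; nlinarith
  -- conclude via dimension count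
  have hcard : N ≤ Module.finrank ℝ (EuclideanSpace ℝ I) := by
    have := hli.fintype_card_le_finrank
    simpa using this
  rw [finrank_euclideanSpace] at hcard
  have hI2 : Fintype.card I = d * (d + 1) / 2 := by
    rw [← Fintype.card_congr (Sym2.sortEquiv (α := Fin d)), Sym2.card, Fintype.card_fin,
      Nat.choose_two_right]
    simp [Nat.mul_comm]
  rw [hI2] at hcard
  exact hcard
end

section
/- Let x_1, ..., x_N be N unit vectors in ℂ^d representing pairwise distinct complex lines (i.e. x_i is not a unit scalar multiple of x_j for i ≠ j), and suppose there is a constant α such that |⟨x_i, x_j⟩| = α for all i ≠ j. Then N ≤ d². -/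
/-- A regular simplex in `CP^{d-1}`, given by unit-length representatives spanning pairwise
distinct complex lines and with a common absolute inner product `α`, has at most `d²` points. -/
theorem regular_simplex_card_le_complex (d N : ℕ)
    (x : Fin N → EuclideanSpace ℂ (Fin d))
    (hnorm : ∀ i, ‖x i‖ = 1)
    (hlines : ∀ i j, i ≠ j → ∀ c : ℂ, ‖c‖ = 1 → x i ≠ c • x j)
    (α : ℝ)
    (hang : ∀ i j, i ≠ j → ‖(inner ℂ (x i) (x j) : ℂ)‖ = α) :
    N ≤ d ^ 2 := by
  classical
  rcases le_or_gt N 1 with hN | hN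
  · interval_cases N
    · exact Nat.zero_le _
    · rcases Nat.eq_zero_or_pos d with hd | hd
      · exfalso
        subst hd
        have h0 : x 0 = 0 := PiLp.ext fun i => Fin.elim0 i
        have := hnorm 0
        rw [h0, norm_zero] at this
        norm_num at this
      · nlinarith
  · -- main case: N ≥ 2
    set i0 : Fin N := ⟨0, by omega⟩ with hi0
    set i1 : Fin N := ⟨1, by omega⟩ with hi1
    have h01 : i0 ≠ i1 := by simp [hi0, hi1, Fin.ext_iff]
    have hx0 : x i0 ≠ 0 := fun h => by simpa [h] using hnorm i0
    have hx1 : x i1 ≠ 0 := fun h => by simpa [h] using hnorm i1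
    have hα0 : 0 ≤ α := (hang i0 i1 h01) ▸ norm_nonneg _
    have hαle : α ≤ 1 := by
      have := norm_inner_le_norm (𝕜 := ℂ) (x i0) (x i1)
      rwa [hnorm i0, hnorm i1, hang i0 i1 h01, mul_one] at this
    have hα1 : α < 1 := by
      rcases lt_or_eq_of_le hαle with h | h
      · exact h
      · exfalso
        have heq : ‖(inner ℂ (x i0) (x i1) : ℂ)‖ = ‖x i0‖ * ‖x i1‖ := by
          rw [hnorm i0, hnorm i1, hang i0 i1 h01, h, mul_one]
        obtain ⟨r, hr, hxy⟩ := (norm_inner_eq_norm_iff hx0 hx1).1 heq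
        have hrn : ‖r‖ = 1 := by
          have := hnorm i1
          rw [hxy, norm_smul, hnorm i0, mul_one] at this
          exact this
        exact hlines i1 i0 h01.symm r hrn hxy
    -- the outer products
    set P : Fin N → EuclideanSpace ℂ (Fin d × Fin d) :=
      fun i => WithLp.toLp 2 (fun p : Fin d × Fin d => x i p.1 * (starRingEnd ℂ) (x i p.2)) with hP
    have hinner : ∀ i j, (inner ℂ (P i) (P j) : ℂ)
        = (inner ℂ (x i) (x j) : ℂ) * (starRingEnd ℂ) (inner ℂ (x i) (x j) : ℂ) := by
      intro i j
      have : (inner ℂ (P i) (P j) : ℂ)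
          = ∑ p : Fin d × Fin d, (starRingEnd ℂ) (P i p) * P j p := by
        simp [PiLp.inner_apply, RCLike.inner_apply, mul_comm]
      rw [this]
      have hxin : ∀ k l : Fin N, (inner ℂ (x k) (x l) : ℂ)
          = ∑ a : Fin d, (starRingEnd ℂ) (x k a) * x l a := by
        intro k l
        simp [PiLp.inner_apply, RCLike.inner_apply, mul_comm]
      rw [hxin, map_sum, Finset.sum_mul_sum, Fintype.sum_prod_type]
      refine Finset.sum_congr rfl fun a _ => Finset.sum_congr rfl fun b _ => ?_
      simp [hP]
      ring
    have hdiag : ∀ i, (inner ℂ (P i) (P i) : ℂ) = 1 := by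
      intro i
      rw [hinner, inner_self_eq_norm_sq_to_K, hnorm i]
      norm_num
    have hoff : ∀ i j, i ≠ j → (inner ℂ (P i) (P j) : ℂ) = ((α ^ 2 : ℝ) : ℂ) := by
      intro i j hij
      rw [hinner]
      have : (inner ℂ (x i) (x j) : ℂ) * (starRingEnd ℂ) (inner ℂ (x i) (x j) : ℂ)
          = ((‖(inner ℂ (x i) (x j) : ℂ)‖ ^ 2 : ℝ) : ℂ) := by
        rw [Complex.mul_conj, Complex.normSq_eq_norm_sq]
      rw [this, hang i j hij]
    have hli : LinearIndependent ℂ P := by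
      rw [Fintype.linearIndependent_iff]
      intro g hg
      set S : ℂ := ∑ i, g i with hS
      have key : ∀ j, g j + ((α ^ 2 : ℝ) : ℂ) * (S - g j) = 0 := by
        intro j
        have h0 : (inner ℂ (P j) (∑ i, g i • P i) : ℂ) = 0 := by rw [hg, inner_zero_right]
        rw [inner_sum] at h0
        have hterm : ∀ i, (inner ℂ (P j) (g i • P i) : ℂ)
            = g i * (if i = j then 1 else ((α ^ 2 : ℝ) : ℂ)) := by
          intro i
          rw [inner_smul_right]
          by_cases hij : i = j
          · subst hij; rw [hdiag]; simp
          · rw [hoff j i (Ne.symm hij)]; simp [hij]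
        rw [Finset.sum_congr rfl fun i _ => hterm i] at h0
        have hsplit : ∑ i, g i * (if i = j then 1 else ((α ^ 2 : ℝ) : ℂ))
            = g j + ((α ^ 2 : ℝ) : ℂ) * (S - g j) := by
          rw [← Finset.add_sum_erase _ _ (Finset.mem_univ j)]
          have h1 : (g j * if j = j then (1:ℂ) else ((α ^ 2 : ℝ) : ℂ)) = g j := by simp
          rw [h1]
          congr 1
          have : ∀ i ∈ Finset.univ.erase j,
              g i * (if i = j then 1 else ((α ^ 2 : ℝ) : ℂ)) = ((α ^ 2 : ℝ) : ℂ) * g i := by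
            intro i hi
            rw [if_neg (Finset.mem_erase.1 hi).1, mul_comm]
          rw [Finset.sum_congr rfl this, ← Finset.mul_sum,
            Finset.sum_erase_eq_sub (Finset.mem_univ j), hS]
        rw [hsplit] at h0
        exact h0
      have hsum0 : S + ((α ^ 2 : ℝ) : ℂ) * ((N : ℂ) * S - S) = 0 := by
        have h := Finset.sum_eq_zero (fun j (_ : j ∈ Finset.univ) => key j)
        rw [Finset.sum_add_distrib, ← Finset.mul_sum, Finset.sum_sub_distrib,
          Finset.sum_const, Finset.card_univ, Fintype.card_fin, nsmul_eq_mul, ← hS] at h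
        exact h
      have hfac : S * (1 + ((α ^ 2 : ℝ) : ℂ) * ((N : ℂ) - 1)) = 0 := by
        linear_combination hsum0
      have hc : (1 + ((α ^ 2 : ℝ) : ℂ) * ((N : ℂ) - 1)) ≠ 0 := by
        have hr : (1 + α ^ 2 * ((N : ℝ) - 1) : ℝ) ≠ 0 := by
          have hN2 : (2 : ℝ) ≤ (N : ℝ) := by exact_mod_cast hN
          nlinarith [sq_nonneg α]
        have : ((1 + α ^ 2 * ((N : ℝ) - 1) : ℝ) : ℂ) ≠ 0 := by
          rwa [Complex.ofReal_ne_zero]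
        convert this using 1
        push_cast
        ring
      have hS0 : S = 0 := by
        rcases mul_eq_zero.1 hfac with h | h
        · exact h
        · exact absurd h hc
      intro j
      have := key j
      rw [hS0] at this
      have h1 : g j * (1 - ((α ^ 2 : ℝ) : ℂ)) = 0 := by linear_combination this
      have h2 : (1 - ((α ^ 2 : ℝ) : ℂ)) ≠ 0 := by
        have hr : (1 - α ^ 2 : ℝ) ≠ 0 := by nlinarith
        have : ((1 - α ^ 2 : ℝ) : ℂ) ≠ 0 := by rwa [Complex.ofReal_ne_zero]
        convert this using 1
        push_cast
        ring
      rcases mul_eq_zero.1 h1 with h | h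
      · exact h
      · exact absurd h h2
    have hcard := hli.fintype_card_le_finrank
    rwa [Fintype.card_fin, finrank_euclideanSpace, Fintype.card_prod, Fintype.card_fin,
      ← pow_two] at hcard
end

section
/- Let x_1, ..., x_N be N unit vectors in ℝ^d with |⟨x_i, x_j⟩| = α for all i ≠ j, where 0 ≤ α < 1, and suppose N = d(d+1)/2. Then Σ_{i=1}^N x_i x_iᵀ = (N/d) I_d, where I_d is the d×d identity matrix. -/
open Matrix Finset

/-- The submodule of symmetric `d × d` real matrices. -/
def symSub (d : ℕ) : Submodule ℝ (Matrix (Fin d) (Fin d) ℝ) where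
  carrier := {A | A.IsSymm}
  add_mem' ha hb := ha.add hb
  zero_mem' := Matrix.isSymm_zero
  smul_mem' c A h := h.smul c

/-- Symmetric matrices are determined by their upper-triangular entries. -/
noncomputable def symEquiv (d : ℕ) :
    symSub d ≃ₗ[ℝ] ({p : Fin d × Fin d // p.1 ≤ p.2} → ℝ) where
  toFun A p := A.1 p.1.1 p.1.2
  map_add' A B := rfl
  map_smul' c A := rfl
  invFun f := ⟨Matrix.of fun i j =>
      if h : i ≤ j then f ⟨(i, j), h⟩ else f ⟨(j, i), le_of_not_ge h⟩, by
    show Matrix.transpose _ = _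
    ext i j
    simp only [Matrix.transpose_apply, Matrix.of_apply]
    rcases le_or_gt i j with h | h
    · rcases eq_or_lt_of_le h with rfl | h'
      · rfl
      · rw [dif_neg (not_le.2 h'), dif_pos h]
    · rw [dif_pos h.le, dif_neg (not_le.2 h)]⟩
  left_inv A := by
    apply Subtype.ext
    ext i j
    show (if h : i ≤ j then _ else _) = A.1 i j
    rcases le_or_gt i j with h | h
    · rw [dif_pos h]
    · rw [dif_neg (not_le.2 h)]
      exact A.2.apply i j
  right_inv f := by
    funext p
    obtain ⟨⟨i, j⟩, h⟩ := p
    show (if h : i ≤ j then _ else _) = _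
    rw [dif_pos h]

/-- The "test against `y yᵀ`" linear functional on matrices. -/
def phiL (d : ℕ) (y : Fin d → ℝ) : Matrix (Fin d) (Fin d) ℝ →ₗ[ℝ] ℝ where
  toFun A := ∑ a, ∑ b, A a b * (y a * y b)
  map_add' A B := by
    simp [Matrix.add_apply, add_mul, Finset.sum_add_distrib]
  map_smul' r A := by
    simp [Matrix.smul_apply, Finset.mul_sum, smul_eq_mul, mul_assoc]

/-- A maximal regular simplex in `RP^{d-1}` (with `N = d(d+1)/2` points) resolves the identity:
`Σ_i x_i x_iᵀ = (N/d) I_d`. -/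
theorem maximal_simplex_tight (d N : ℕ)
    (x : Fin N → EuclideanSpace ℝ (Fin d))
    (hnorm : ∀ i, ‖x i‖ = 1)
    (α : ℝ) (hα0 : 0 ≤ α) (hα1 : α < 1)
    (hang : ∀ i j, i ≠ j → |(inner ℝ (x i) (x j) : ℝ)| = α)
    (hN : N = d * (d + 1) / 2) :
    ∑ i, Matrix.of (fun a b => x i a * x i b)
      = ((N : ℝ) / d) • (1 : Matrix (Fin d) (Fin d) ℝ) := by
  rcases Nat.eq_zero_or_pos d with rfl | hd
  · ext i j
    exact i.elim0
  -- basic facts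
  have hNpos : 0 < N := by
    rw [hN]
    have h2 : 2 ≤ d * (d + 1) := by nlinarith
    exact Nat.div_pos h2 two_pos
  have hα2 : α ^ 2 < 1 := by nlinarith
  set P : Fin N → Matrix (Fin d) (Fin d) ℝ :=
    fun i => Matrix.of (fun a b => x i a * x i b) with hP
  -- inner products of the x's
  have hinner : ∀ i j, (inner ℝ (x i) (x j) : ℝ) = ∑ a, x i a * x j a := by
    intro i j
    simp [PiLp.inner_apply, RCLike.inner_apply, mul_comm]
  have hii : ∀ i, (∑ a, x i a * x i a) = 1 := by
    intro i
    rw [← hinner i i, real_inner_self_eq_norm_mul_norm, hnorm, one_mul]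
  have hij : ∀ i j, i ≠ j → (∑ a, x i a * x j a) ^ 2 = α ^ 2 := by
    intro i j hne
    rw [← hinner i j, ← sq_abs, hang i j hne]
  -- values of the test functionals on P
  have hphiP : ∀ (j i : Fin N), phiL d (x j) (P i) = (∑ a, x i a * x j a) ^ 2 := by
    intro j i
    show (∑ a, ∑ b, (x i a * x i b) * (x j a * x j b)) = _
    rw [sq, Finset.sum_mul_sum]
    exact Finset.sum_congr rfl fun a _ => Finset.sum_congr rfl fun b _ => by ring
  have hphi1 : ∀ j : Fin N, phiL d (x j) (1 : Matrix (Fin d) (Fin d) ℝ) = 1 := by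
    intro j
    show (∑ a, ∑ b, (1 : Matrix (Fin d) (Fin d) ℝ) a b * (x j a * x j b)) = 1
    have : ∀ a : Fin d, (∑ b, (1 : Matrix (Fin d) (Fin d) ℝ) a b * (x j a * x j b))
        = x j a * x j a := by
      intro a
      simp [Matrix.one_apply, ite_mul]
    rw [Finset.sum_congr rfl fun a _ => this a, hii j]
  -- the key functional-equation tool
  have key : ∀ (c : Fin N → ℝ) (A : Matrix (Fin d) (Fin d) ℝ),
      (∑ i, c i • P i) = A → ∀ j, c j * (1 - α ^ 2) + α ^ 2 * (∑ i, c i)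
        = phiL d (x j) A := by
    intro c A hA j
    have h0 : (∑ i, c i * (∑ a, x i a * x j a) ^ 2) = phiL d (x j) A := by
      rw [← hA, map_sum]
      exact Finset.sum_congr rfl fun i _ => by
        rw [_root_.map_smul, smul_eq_mul, hphiP]
    have h1 : (∑ i ∈ Finset.univ.erase j, c i * (∑ a, x i a * x j a) ^ 2)
        = α ^ 2 * ∑ i ∈ Finset.univ.erase j, c i := by
      rw [Finset.mul_sum]
      refine Finset.sum_congr rfl fun i hi => ?_
      rw [hij i j (Finset.ne_of_mem_erase hi)]
      ring
    have hsplit : (∑ i, c i * (∑ a, x i a * x j a) ^ 2)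
        = c j + α ^ 2 * ∑ i ∈ Finset.univ.erase j, c i := by
      rw [← Finset.add_sum_erase _ _ (Finset.mem_univ j), h1, hii j]
      ring
    have hC : (∑ i, c i) = c j + ∑ i ∈ Finset.univ.erase j, c i :=
      (Finset.add_sum_erase _ c (Finset.mem_univ j)).symm
    rw [← h0, hsplit, hC]
    ring
  -- linear independence of the P i
  have hli : LinearIndependent ℝ P := by
    rw [Fintype.linearIndependent_iff]
    intro g hg j
    have hj := fun j => key g 0 hg j
    simp only [map_zero] at hj
    have hgc : ∀ k l : Fin N, g k = g l := by
      intro k l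
      have hk := hj k
      have hl := hj l
      have : (g k - g l) * (1 - α ^ 2) = 0 := by linarith
      rcases mul_eq_zero.1 this with h | h
      · linarith
      · linarith
    have hsum : (∑ i, g i) = N * g j :=
      by rw [Finset.sum_congr rfl fun i _ => hgc i j]; simp [Finset.card_univ, mul_comm]
    have := hj j
    rw [hsum] at this
    have hfac : g j * ((1 - α ^ 2) + α ^ 2 * N) = 0 := by ring_nf; ring_nf at this; linarith
    have hpos : (0 : ℝ) < (1 - α ^ 2) + α ^ 2 * N := by
      have : (0:ℝ) ≤ α ^ 2 * N := by positivity
      linarith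
    rcases mul_eq_zero.1 hfac with h | h
    · exact h
    · linarith
  -- lift to the submodule of symmetric matrices
  have hPsym : ∀ i, P i ∈ symSub d := by
    intro i
    show Matrix.transpose _ = _
    ext a b
    exact mul_comm _ _
  set Q : Fin N → symSub d := fun i => ⟨P i, hPsym i⟩ with hQ
  have hliQ : LinearIndependent ℝ Q :=
    LinearIndependent.of_comp (symSub d).subtype hli
  -- dimension count
  have hfr : Module.finrank ℝ (symSub d) = N := by
    rw [(symEquiv d).finrank_eq, Module.finrank_fintype_fun_eq_card,
      ← Fintype.card_congr (Sym2.sortEquiv (α := Fin d)), Sym2.card]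
    simp [Nat.choose_two_right, hN, Nat.mul_comm]
  have : Nonempty (Fin N) := ⟨⟨0, hNpos⟩⟩
  have hspan : Submodule.span ℝ (Set.range Q) = ⊤ :=
    hliQ.span_eq_top_of_card_eq_finrank (by simp [hfr])
  -- express the identity in the basis
  have hmem : (⟨1, Matrix.isSymm_one⟩ : symSub d) ∈ Submodule.span ℝ (Set.range Q) := by
    rw [hspan]; trivial
  obtain ⟨c, hc⟩ := Submodule.mem_span_range_iff_exists_fun ℝ |>.mp hmem
  have hc' : (∑ i, c i • P i) = (1 : Matrix (Fin d) (Fin d) ℝ) := by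
    have := congrArg Subtype.val hc
    simpa using this
  -- trace gives ∑ c = d
  have htrP : ∀ i, Matrix.trace (P i) = 1 := by
    intro i
    show (∑ a, x i a * x i a) = 1
    exact hii i
  have htr : (∑ i, c i) = (d : ℝ) := by
    have := congrArg Matrix.trace hc'
    rw [Matrix.trace_one] at this
    rw [show (∑ i, c i) = Matrix.trace (∑ i, c i • P i) by
      rw [Matrix.trace_sum]
      exact (Finset.sum_congr rfl fun i _ => by rw [Matrix.trace_smul, htrP, smul_eq_mul, mul_one]).symm,
      hc', Matrix.trace_one]
    simp
  -- all coefficients are equal, hence equal to d / N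
  have hj := fun j => key c 1 hc' j
  simp only [hphi1] at hj
  rw [htr] at hj
  have hcc : ∀ j, c j = (d : ℝ) / N := by
    have hconst : ∀ k l, c k = c l := by
      intro k l
      have hk := hj k
      have hl := hj l
      have : (c k - c l) * (1 - α ^ 2) = 0 := by linarith
      rcases mul_eq_zero.1 this with h | h
      · linarith
      · linarith
    intro j
    have hsum : (d : ℝ) = N * c j := by
      rw [← htr, Finset.sum_congr rfl fun i _ => hconst i j]
      simp [Finset.card_univ, mul_comm]
    have hN0 : (N : ℝ) ≠ 0 := Nat.cast_ne_zero.2 hNpos.ne'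
    field_simp [hsum]
    linarith [mul_comm (c j) (N : ℝ)]
  -- conclude
  have hdn : ((d : ℝ) / N) • (∑ i, P i) = (1 : Matrix (Fin d) (Fin d) ℝ) := by
    rw [Finset.smul_sum, ← hc']
    exact Finset.sum_congr rfl fun i _ => by rw [hcc i]
  have hd0 : (d : ℝ) ≠ 0 := Nat.cast_ne_zero.2 hd.ne'
  have hN0 : (N : ℝ) ≠ 0 := Nat.cast_ne_zero.2 hNpos.ne'
  calc (∑ i, P i) = ((N : ℝ) / d) • (((d : ℝ) / N) • (∑ i, P i)) := by
        rw [smul_smul]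
        rw [show (N : ℝ) / d * ((d : ℝ) / N) = 1 by field_simp, one_smul]
    _ = ((N : ℝ) / d) • (1 : Matrix (Fin d) (Fin d) ℝ) := by rw [hdn]
end

section
/- Let x_1, ..., x_N be unit vectors in ℂ^d with N ≥ 2, N > d, and let α = max_{i ≠ j} |⟨x_i, x_j⟩|. Then α² ≥ (N - d)/(d(N - 1)). -/
open Finset ComplexConjugate

/-- The Welch bound: for `N` unit vectors in `ℂ^d` with `N > d`, the maximal absolute inner
product `α` between distinct vectors satisfies `α² ≥ (N-d)/(d(N-1))`. -/
theorem welch_bound (d N : ℕ) (hN : 2 ≤ N) (hdN : d < N)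
    (x : Fin N → EuclideanSpace ℂ (Fin d))
    (hnorm : ∀ i, ‖x i‖ = 1)
    (α : ℝ)
    (hub : ∀ i j, i ≠ j → ‖(inner ℂ (x i) (x j) : ℂ)‖ ≤ α)
    (hattained : ∃ i j, i ≠ j ∧ ‖(inner ℂ (x i) (x j) : ℂ)‖ = α) :
    ((N : ℝ) - d) / (d * ((N : ℝ) - 1)) ≤ α ^ 2 := by
  obtain ⟨i0, j0, hij0, hatt⟩ := hattained
  have hα0 : 0 ≤ α := hatt ▸ norm_nonneg _
  have hN0 : 0 < N := by omega
  have hd : 0 < d := by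
    rcases Nat.eq_zero_or_pos d with h | h
    · exfalso
      have h1 := hnorm ⟨0, hN0⟩
      rw [EuclideanSpace.norm_eq] at h1
      subst h
      simp at h1
    · exact h
  set g : Fin N → Fin N → ℂ := fun i j => inner ℂ (x i) (x j) with hg
  have hinner : ∀ i j, g i j = ∑ k, conj (x i k) * (x j k) := by
    intro i j
    simp [hg, PiLp.inner_apply, RCLike.inner_apply, mul_comm]
  have hdiag : ∀ i, g i i = 1 := by
    intro i
    rw [hg]
    simp only
    rw [inner_self_eq_norm_sq_to_K, hnorm]
    norm_num
  set s : Fin d → Fin d → ℂ := fun k l => ∑ i, conj (x i k) * (x i l) with hs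
  -- Frobenius identity
  have hfrob : ∑ k, ∑ l, s k l * conj (s k l) = ∑ i, ∑ j, g i j * conj (g i j) := by
    calc ∑ k, ∑ l, s k l * conj (s k l)
        = ∑ k, ∑ l, ∑ i, ∑ j, (conj (x i k) * x i l) * (x j k * conj (x j l)) := by
          refine Finset.sum_congr rfl fun k _ => Finset.sum_congr rfl fun l _ => ?_
          rw [hs]
          simp only [map_sum, map_mul, Complex.conj_conj]
          rw [Finset.sum_mul_sum]
      _ = ∑ k, ∑ i, ∑ l, ∑ j, (conj (x i k) * x i l) * (x j k * conj (x j l)) := by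
          exact Finset.sum_congr rfl fun k _ => Finset.sum_comm
      _ = ∑ i, ∑ k, ∑ l, ∑ j, (conj (x i k) * x i l) * (x j k * conj (x j l)) :=
          Finset.sum_comm
      _ = ∑ i, ∑ k, ∑ j, ∑ l, (conj (x i k) * x i l) * (x j k * conj (x j l)) := by
          exact Finset.sum_congr rfl fun i _ => Finset.sum_congr rfl fun k _ => Finset.sum_comm
      _ = ∑ i, ∑ j, ∑ k, ∑ l, (conj (x i k) * x i l) * (x j k * conj (x j l)) := by
          exact Finset.sum_congr rfl fun i _ => Finset.sum_comm
      _ = ∑ i, ∑ j, ∑ k, ∑ l, (conj (x i k) * x j k) * (x i l * conj (x j l)) := by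
          refine Finset.sum_congr rfl fun i _ => Finset.sum_congr rfl fun j _ =>
            Finset.sum_congr rfl fun k _ => Finset.sum_congr rfl fun l _ => ?_
          ring
      _ = ∑ i, ∑ j, g i j * conj (g i j) := by
          refine Finset.sum_congr rfl fun i _ => Finset.sum_congr rfl fun j _ => ?_
          rw [hinner i j]
          simp only [map_sum, map_mul, Complex.conj_conj]
          rw [Finset.sum_mul_sum]
  -- real versions
  have hzconj : ∀ z : ℂ, z * conj z = ((‖z‖ ^ 2 : ℝ) : ℂ) := by
    intro z
    rw [Complex.mul_conj]
    norm_cast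
    rw [Complex.normSq_eq_norm_sq]
  have hfrobR : ∑ k, ∑ l, ‖s k l‖ ^ 2 = ∑ i, ∑ j, ‖g i j‖ ^ 2 := by
    have := hfrob
    simp_rw [hzconj] at this
    push_cast at this
    exact_mod_cast this
  -- trace
  set t : Fin d → ℝ := fun k => ∑ i, Complex.normSq (x i k) with ht
  have hskk : ∀ k, s k k = ((t k : ℝ) : ℂ) := by
    intro k
    rw [hs, ht]
    push_cast
    refine Finset.sum_congr rfl fun i _ => ?_
    rw [mul_comm, Complex.mul_conj]
  have htr : ∑ k, t k = N := by
    have h1 : ∑ k, ((t k : ℝ) : ℂ) = (N : ℂ) := by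
      calc ∑ k, ((t k : ℝ) : ℂ) = ∑ k, s k k := by
            exact Finset.sum_congr rfl fun k _ => (hskk k).symm
        _ = ∑ k, ∑ i, conj (x i k) * (x i k) := rfl
        _ = ∑ i, ∑ k, conj (x i k) * (x i k) := Finset.sum_comm
        _ = ∑ i, g i i := by
            exact Finset.sum_congr rfl fun i _ => (hinner i i).symm
        _ = (N : ℂ) := by simp [hdiag]
    have := h1
    push_cast at this
    exact_mod_cast this
  have ht0 : ∀ k, 0 ≤ t k := fun k =>
    Finset.sum_nonneg fun i _ => Complex.normSq_nonneg _
  -- Cauchy-Schwarz on the diagonal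
  have hCS : (N : ℝ) ^ 2 ≤ d * ∑ k, t k ^ 2 := by
    have := sq_sum_le_card_mul_sum_sq (s := (Finset.univ : Finset (Fin d))) (f := t)
    simpa [htr] using this
  have hdiagle : ∑ k, t k ^ 2 ≤ ∑ k, ∑ l, ‖s k l‖ ^ 2 := by
    refine Finset.sum_le_sum fun k _ => ?_
    have h1 : t k ^ 2 = ‖s k k‖ ^ 2 := by
      rw [hskk k, Complex.norm_real, Real.norm_eq_abs, abs_of_nonneg (ht0 k)]
    rw [h1]
    exact Finset.single_le_sum (f := fun l => ‖s k l‖ ^ 2) (fun l _ => by positivity) (Finset.mem_univ k)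
  -- sum over off-diagonal
  have hSS : ∑ i, ∑ j, ‖g i j‖ ^ 2 ≤ N * (1 + (N - 1) * α ^ 2) := by
    have hrow : ∀ i : Fin N, ∑ j, ‖g i j‖ ^ 2 ≤ 1 + (N - 1) * α ^ 2 := by
      intro i
      rw [← Finset.sum_erase_add _ _ (Finset.mem_univ i), hdiag i]
      have : ∑ j ∈ Finset.univ.erase i, ‖g i j‖ ^ 2 ≤ (N - 1) * α ^ 2 := by
        have hcard : ((Finset.univ.erase i).card : ℝ) = (N : ℝ) - 1 := by
          rw [Finset.card_erase_of_mem (Finset.mem_univ i), Finset.card_univ,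
            Fintype.card_fin, Nat.cast_sub (by omega), Nat.cast_one]
        calc ∑ j ∈ Finset.univ.erase i, ‖g i j‖ ^ 2
            ≤ ∑ _j ∈ Finset.univ.erase i, α ^ 2 := by
              refine Finset.sum_le_sum fun j hj => ?_
              have hne : i ≠ j := (Finset.ne_of_mem_erase hj).symm
              exact pow_le_pow_left₀ (norm_nonneg _) (hub i j hne) 2
          _ = (N - 1) * α ^ 2 := by rw [Finset.sum_const, nsmul_eq_mul, hcard]
      simp only [norm_one, one_pow]
      linarith
    calc ∑ i, ∑ j, ‖g i j‖ ^ 2 ≤ ∑ _i : Fin N, (1 + (N - 1) * α ^ 2) :=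
          Finset.sum_le_sum fun i _ => hrow i
      _ = N * (1 + (N - 1) * α ^ 2) := by rw [Finset.sum_const, nsmul_eq_mul]; simp
  -- combine
  have hkey : (N : ℝ) ^ 2 ≤ d * (N * (1 + (N - 1) * α ^ 2)) := by
    calc (N : ℝ) ^ 2 ≤ d * ∑ k, t k ^ 2 := hCS
      _ ≤ d * ∑ k, ∑ l, ‖s k l‖ ^ 2 := by
          exact mul_le_mul_of_nonneg_left hdiagle (by positivity)
      _ = d * ∑ i, ∑ j, ‖g i j‖ ^ 2 := by rw [hfrobR]
      _ ≤ d * (N * (1 + (N - 1) * α ^ 2)) :=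
          mul_le_mul_of_nonneg_left hSS (by positivity)
  have hdR : (1 : ℝ) ≤ d := by exact_mod_cast hd
  have hNR : (2 : ℝ) ≤ N := by exact_mod_cast hN
  rw [div_le_iff₀ (by nlinarith)]
  nlinarith [hkey, mul_pos (show (0:ℝ) < N by linarith) (show (0:ℝ) < d by linarith)]
end

section
/- Let v_1, ..., v_N be unit vectors in ℝ^d with N > d such that |⟨v_i, v_j⟩|² = (N - d)/(d(N - 1)) for all i ≠ j. Then {v_1, ..., v_N} is a tight frame with frame constant N/d, i.e. Σ_{i=1}^N |⟨x, v_i⟩|² = (N/d)‖x‖² for every x ∈ ℝ^d. -/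
private lemma sum_swap4 {α β : Type*} [Fintype α] [Fintype β] (f : α → α → β → β → ℝ) :
    ∑ a : β, ∑ b : β, ∑ i : α, ∑ j : α, f i j a b
      = ∑ i : α, ∑ j : α, ∑ a : β, ∑ b : β, f i j a b := by
  have h1 : ∑ a : β, ∑ b : β, ∑ i : α, ∑ j : α, f i j a b
      = ∑ a : β, ∑ i : α, ∑ b : β, ∑ j : α, f i j a b :=
    Finset.sum_congr rfl fun a _ => Finset.sum_comm
  have h2 : ∑ a : β, ∑ i : α, ∑ b : β, ∑ j : α, f i j a b
      = ∑ i : α, ∑ a : β, ∑ b : β, ∑ j : α, f i j a b := Finset.sum_comm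
  have h3 : ∑ i : α, ∑ a : β, ∑ b : β, ∑ j : α, f i j a b
      = ∑ i : α, ∑ a : β, ∑ j : α, ∑ b : β, f i j a b :=
    Finset.sum_congr rfl fun i _ => Finset.sum_congr rfl fun a _ => Finset.sum_comm
  have h4 : ∑ i : α, ∑ a : β, ∑ j : α, ∑ b : β, f i j a b
      = ∑ i : α, ∑ j : α, ∑ a : β, ∑ b : β, f i j a b :=
    Finset.sum_congr rfl fun i _ => Finset.sum_comm
  rw [h1, h2, h3, h4]

/-- Unit vectors attaining the Welch bound (`|⟨v_i, v_j⟩|² = (N-d)/(d(N-1))` for all `i ≠ j`)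
form a tight frame with frame constant `N/d`. -/
theorem welch_equality_tight_frame (d N : ℕ) (hdN : d < N)
    (v : Fin N → EuclideanSpace ℝ (Fin d))
    (hnorm : ∀ i, ‖v i‖ = 1)
    (hang : ∀ i j, i ≠ j →
      (inner ℝ (v i) (v j) : ℝ) ^ 2 = ((N : ℝ) - d) / (d * ((N : ℝ) - 1))) :
    ∀ x : EuclideanSpace ℝ (Fin d),
      ∑ i, (inner ℝ x (v i) : ℝ) ^ 2 = ((N : ℝ) / d) * ‖x‖ ^ 2 := by
  have hd : 0 < d := by
    by_contra h
    push_neg at h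
    interval_cases d
    have h1 := hnorm ⟨0, by omega⟩
    have : (v ⟨0, by omega⟩) = 0 := by
      ext k; exact absurd k.2 (by omega)
    rw [this, norm_zero] at h1
    norm_num at h1
  have hN2 : 2 ≤ N := by omega
  have hdR : (d : ℝ) ≠ 0 := Nat.cast_ne_zero.2 hd.ne'
  have hN1R : (N : ℝ) - 1 ≠ 0 := by
    have : (2 : ℝ) ≤ N := by exact_mod_cast hN2
    linarith
  have hip : ∀ a b : EuclideanSpace ℝ (Fin d), (inner ℝ a b : ℝ) = ∑ k, a k * b k := by
    intro a b
    simp [PiLp.inner_apply, RCLike.inner_apply, mul_comm]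
  have hnrm : ∀ a : EuclideanSpace ℝ (Fin d), ‖a‖ ^ 2 = ∑ k, a k * a k := by
    intro a
    rw [← real_inner_self_eq_norm_sq, hip]
  set q : ℝ := (N : ℝ) / d with hq
  set S : Fin d → Fin d → ℝ := fun a b => ∑ i, v i a * v i b with hS
  have htr : ∑ a, S a a = (N : ℝ) := by
    rw [hS, Finset.sum_comm]
    have : ∀ i : Fin N, ∑ a, v i a * v i a = 1 := by
      intro i
      rw [← hnrm, hnorm i]; norm_num
    simp [this]
  have hfrob : ∑ a, ∑ b, S a b ^ 2 = (N : ℝ) ^ 2 / d := by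
    have step1 : ∑ a, ∑ b, S a b ^ 2
        = ∑ i, ∑ j, (inner ℝ (v i) (v j) : ℝ) ^ 2 := by
      have he : ∀ a b, S a b ^ 2 = ∑ i, ∑ j, (v i a * v j a) * (v i b * v j b) := by
        intro a b
        rw [hS]
        simp only [sq]
        rw [Finset.sum_mul_sum]
        exact Finset.sum_congr rfl fun i _ => Finset.sum_congr rfl fun j _ => by ring
      simp only [he]
      rw [sum_swap4]
      apply Finset.sum_congr rfl; intro i _
      apply Finset.sum_congr rfl; intro j _
      rw [hip, sq, Finset.sum_mul_sum]
    rw [step1]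
    have hrow : ∀ i : Fin N, ∑ j, (inner ℝ (v i) (v j) : ℝ) ^ 2
        = 1 + ((N : ℝ) - 1) * (((N : ℝ) - d) / (d * ((N : ℝ) - 1))) := by
      intro i
      rw [← Finset.add_sum_erase _ _ (Finset.mem_univ i)]
      congr 1
      · rw [real_inner_self_eq_norm_sq, hnorm i]; norm_num
      · rw [Finset.sum_congr rfl (fun j hj => hang i j
          (fun h => (Finset.mem_erase.1 hj).1 h.symm))]
        rw [Finset.sum_const, Finset.card_erase_of_mem (Finset.mem_univ i)]
        simp only [Finset.card_univ, Fintype.card_fin, nsmul_eq_mul]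
        rw [Nat.cast_sub (by omega : 1 ≤ N)]
        norm_num
    simp only [hrow, Finset.sum_const, Finset.card_univ, Fintype.card_fin, nsmul_eq_mul]
    field_simp
    ring
  have hSval : ∀ a b : Fin d, S a b = if a = b then q else 0 := by
    have hzero : ∑ a, ∑ b, (S a b - (if a = b then q else 0)) ^ 2 = 0 := by
      have expand : ∀ a b : Fin d, (S a b - (if a = b then q else 0)) ^ 2
          = S a b ^ 2 - 2 * q * (if a = b then S a b else 0)
            + (if a = b then q ^ 2 else 0) := by
        intro a b
        by_cases h : a = b <;> simp [h] <;> try ring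
      simp only [expand, Finset.sum_add_distrib, Finset.sum_sub_distrib]
      have h1 : ∑ a : Fin d, ∑ b, (if a = b then S a b else 0) = ∑ a, S a a := by
        apply Finset.sum_congr rfl; intro a _
        simp
      have h2 : ∑ a : Fin d, ∑ b, (if a = b then q ^ 2 else 0) = d * q ^ 2 := by
        simp [Finset.sum_ite_eq, Finset.card_univ]
      have h3 : ∑ a : Fin d, ∑ b, 2 * q * (if a = b then S a b else 0)
          = 2 * q * (N : ℝ) := by
        simp only [← Finset.mul_sum]
        rw [h1, htr]
      rw [hfrob, h3, h2, hq]
      field_simp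
      ring
    intro a b
    have hnn : ∀ p ∈ (Finset.univ : Finset (Fin d)),
        ∑ b, (S p b - (if p = b then q else 0)) ^ 2 = 0 := by
      intro p _
      have := (Finset.sum_eq_zero_iff_of_nonneg (fun p _ =>
        Finset.sum_nonneg fun b _ => sq_nonneg _)).1 hzero p (Finset.mem_univ p)
      exact this
    have := (Finset.sum_eq_zero_iff_of_nonneg (fun c _ => sq_nonneg _)).1
      (hnn a (Finset.mem_univ a)) b (Finset.mem_univ b)
    have := pow_eq_zero_iff (n := 2) (by norm_num) |>.1 this
    linarith [this]
  intro x
  have step : ∑ i, (inner ℝ x (v i) : ℝ) ^ 2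
      = ∑ a, ∑ b, x a * x b * S a b := by
    have he : ∀ i, (inner ℝ x (v i) : ℝ) ^ 2
        = ∑ a, ∑ b, (x a * x b) * (v i a * v i b) := by
      intro i
      rw [hip, sq, Finset.sum_mul_sum]
      exact Finset.sum_congr rfl fun a _ => Finset.sum_congr rfl fun b _ => by ring
    simp only [he]
    rw [Finset.sum_comm]
    apply Finset.sum_congr rfl; intro a _
    rw [Finset.sum_comm]
    apply Finset.sum_congr rfl; intro b _
    rw [hS, Finset.mul_sum]
  rw [step]
  have : ∀ a : Fin d, ∑ b, x a * x b * S a b = q * (x a * x a) := by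
    intro a
    rw [Finset.sum_congr rfl (fun b _ => by rw [hSval a b])]
    simp [Finset.mul_sum, mul_ite, Finset.sum_ite_eq]
    ring
  simp only [this, ← Finset.mul_sum]
  rw [hnrm x]
end

section
/- Let q ∈ [1, 2] and let y_1, ..., y_N be vectors in ℝ^d (not necessarily unit) with N > d forming a tight frame with frame constant N/d, i.e. Σ_{i=1}^N y_i y_iᵀ = (N/d) I_d. Then Σ_{i ≠ j} |⟨y_i, y_j⟩|^q ≤ (N² - N) · ((N - d)/(d(N - 1)))^{q/2}. -/
/-- The `q`-energy (`q ∈ [1,2]`) of a tight frame of `N > d` vectors in `ℝ^d` with frame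
constant `N/d` is at most `(N² - N)·((N-d)/(d(N-1)))^{q/2}`. -/
theorem q_energy_tight_frame_real (d N : ℕ) (hdN : d < N)
    (q : ℝ) (hq1 : 1 ≤ q) (hq2 : q ≤ 2)
    (y : Fin N → EuclideanSpace ℝ (Fin d))
    (htf : ∑ i, Matrix.of (fun a b => y i a * y i b)
      = ((N : ℝ) / d) • (1 : Matrix (Fin d) (Fin d) ℝ)) :
    ∑ i, ∑ j, (if i = j then 0 else |(inner ℝ (y i) (y j) : ℝ)| ^ q)
      ≤ ((N : ℝ) ^ 2 - N) * (((N : ℝ) - d) / (d * ((N : ℝ) - 1))) ^ (q / 2) := by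
  have hqpos : (0:ℝ) < q := by linarith
  have hinner : ∀ i j, (inner ℝ (y i) (y j) : ℝ) = ∑ a, y i a * y j a := by
    intro i j; simp [PiLp.inner_apply, RCLike.inner_apply, mul_comm]
  by_cases hd : d = 0
  · subst hd
    have hL : ∀ i j : Fin N, (if i = j then 0 else |(inner ℝ (y i) (y j) : ℝ)| ^ q) = 0 := by
      intro i j
      by_cases h : i = j
      · simp [h]
      · rw [if_neg h, hinner]
        simp only [Finset.univ_eq_empty, Finset.sum_empty, abs_zero]
        exact Real.zero_rpow (ne_of_gt hqpos)
    simp only [hL, Finset.sum_const_zero]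
    have hb : ((N:ℝ) - (0:ℕ)) / ((0:ℕ) * ((N:ℝ) - 1)) = 0 := by simp
    rw [hb, Real.zero_rpow (by positivity), mul_zero]
  -- main case: d ≥ 1
  have hdR : (0:ℝ) < d := by exact_mod_cast Nat.pos_of_ne_zero hd
  have hN2 : 2 ≤ N := by omega
  have hNR : (1:ℝ) < N := by exact_mod_cast lt_of_le_of_lt (Nat.one_le_iff_ne_zero.mpr (by omega) : 1 ≤ d) hdN
  have h1 : ∀ a b : Fin d, ∑ i, y i a * y i b = (N : ℝ)/d * (if a = b then 1 else 0) := by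
    intro a b
    have := congrFun (congrFun htf a) b
    simpa [Matrix.sum_apply, Matrix.one_apply] using this
  -- trace: sum of squared norms
  have hS1 : ∑ i, ∑ a, y i a * y i a = (N:ℝ) := by
    rw [Finset.sum_comm]
    have : ∀ a : Fin d, ∑ i, y i a * y i a = (N:ℝ)/d := by
      intro a; rw [h1 a a]; simp
    rw [Finset.sum_congr rfl fun a _ => this a, Finset.sum_const, Finset.card_univ,
      Fintype.card_fin, nsmul_eq_mul]
    field_simp
  -- Frobenius: sum of all squared inner products
  have hS2 : ∑ i, ∑ j, (∑ a, y i a * y j a)^2 = (N:ℝ)^2/d := by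
    have expand : ∀ i j : Fin N, (∑ a, y i a * y j a)^2
        = ∑ a, ∑ b, (y i a * y i b) * (y j a * y j b) := by
      intro i j
      rw [sq, Finset.sum_mul_sum]
      exact Finset.sum_congr rfl fun a _ => Finset.sum_congr rfl fun b _ => by ring
    simp_rw [expand]
    have step1 : ∀ i : Fin N, ∑ j, ∑ a, ∑ b, (y i a * y i b) * (y j a * y j b)
        = ∑ a, y i a * y i a * ((N:ℝ)/d) := by
      intro i
      rw [Finset.sum_comm]
      refine Finset.sum_congr rfl fun a _ => ?_
      rw [Finset.sum_comm]
      have : ∀ b : Fin d, ∑ j, (y i a * y i b) * (y j a * y j b)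
          = (y i a * y i b) * ((N:ℝ)/d * (if a = b then 1 else 0)) := by
        intro b; rw [← Finset.mul_sum, h1 a b]
      rw [Finset.sum_congr rfl fun b _ => this b]
      simp [mul_ite, Finset.sum_ite_eq]
    rw [Finset.sum_congr rfl fun i _ => step1 i]
    simp_rw [← Finset.sum_mul]
    rw [hS1]
    field_simp
  -- Cauchy-Schwarz on diagonal
  have hCS : (N:ℝ) ≤ ∑ i, (∑ a, y i a * y i a)^2 := by
    have h := sq_sum_le_card_mul_sum_sq (s := (Finset.univ : Finset (Fin N)))
      (f := fun i => ∑ a, y i a * y i a)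
    rw [hS1, Finset.card_univ, Fintype.card_fin] at h
    have hNpos : (0:ℝ) < N := by linarith
    nlinarith [h]
  -- off-diagonal energy bound
  set s : Finset (Fin N × Fin N) := Finset.univ.offDiag with hs
  have hconv : ∀ g : Fin N → Fin N → ℝ,
      ∑ i, ∑ j, (if i = j then 0 else g i j) = ∑ p ∈ s, g p.1 p.2 := by
    intro g
    rw [← Finset.sum_product']
    rw [hs, show (Finset.univ : Finset (Fin N)).offDiag = (Finset.univ ×ˢ Finset.univ).filter (fun p : Fin N × Fin N => p.1 ≠ p.2) by ext p; simp [Finset.mem_offDiag], Finset.sum_filter]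
    rw [Finset.univ_product_univ]
    refine Finset.sum_congr rfl fun p _ => ?_
    by_cases h : p.1 = p.2 <;> simp [h]
  have hE : ∑ p ∈ s, ((inner ℝ (y p.1) (y p.2) : ℝ))^2 ≤ (N:ℝ)^2/d - N := by
    rw [← hconv fun i j => ((inner ℝ (y i) (y j) : ℝ))^2]
    have : ∀ i : Fin N, ∑ j, (if i = j then 0 else ((inner ℝ (y i) (y j) : ℝ))^2)
        = (∑ j, ((inner ℝ (y i) (y j) : ℝ))^2) - ((inner ℝ (y i) (y i) : ℝ))^2 := by
      intro i
      have : ∀ j : Fin N, (if i = j then 0 else ((inner ℝ (y i) (y j) : ℝ))^2)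
          = ((inner ℝ (y i) (y j) : ℝ))^2 - (if i = j then ((inner ℝ (y i) (y j) : ℝ))^2 else 0) := by
        intro j; split <;> ring
      rw [Finset.sum_congr rfl fun j _ => this j, Finset.sum_sub_distrib,
        Finset.sum_ite_eq, if_pos (Finset.mem_univ i)]
    rw [Finset.sum_congr rfl fun i _ => this i, Finset.sum_sub_distrib]
    simp_rw [hinner]
    rw [hS2]
    linarith [hCS]
  have hEnn : (0:ℝ) ≤ ∑ p ∈ s, ((inner ℝ (y p.1) (y p.2) : ℝ))^2 :=
    Finset.sum_nonneg fun p _ => sq_nonneg _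
  -- cardinality
  set M : ℝ := (N:ℝ)^2 - N with hM
  have hcard : (s.card : ℝ) = M := by
    rw [hs, Finset.offDiag_card, Finset.card_univ, Fintype.card_fin]
    have : N ≤ N * N := Nat.le_mul_of_pos_left N (by omega)
    rw [hM]
    push_cast [Nat.cast_sub this]
    ring
  have hMpos : (0:ℝ) < M := by rw [hM]; nlinarith
  -- Jensen / power mean
  have hp1 : (1:ℝ) ≤ 2/q := (one_le_div hqpos).mpr hq2
  have jensen := Real.arith_mean_le_rpow_mean s (fun _ => 1/M)
    (fun p => |(inner ℝ (y p.1) (y p.2) : ℝ)|^q)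
    (fun i _ => by positivity)
    (by rw [Finset.sum_const, nsmul_eq_mul, hcard]; field_simp)
    (fun i _ => Real.rpow_nonneg (abs_nonneg _) q) hp1
  have hzp : ∀ p : Fin N × Fin N,
      (|(inner ℝ (y p.1) (y p.2) : ℝ)|^q) ^ ((2:ℝ)/q) = ((inner ℝ (y p.1) (y p.2) : ℝ))^2 := by
    intro p
    rw [← Real.rpow_mul (abs_nonneg _), mul_div_cancel₀ _ (ne_of_gt hqpos), Real.rpow_two, sq_abs]
  simp_rw [hzp, one_div_div] at jensen
  rw [← Finset.mul_sum, ← Finset.mul_sum] at jensen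
  -- assemble
  rw [hconv fun i j => |(inner ℝ (y i) (y j) : ℝ)|^q]
  have key : ∑ p ∈ s, |(inner ℝ (y p.1) (y p.2) : ℝ)|^q
      ≤ M * ((1/M) * ∑ p ∈ s, ((inner ℝ (y p.1) (y p.2) : ℝ))^2) ^ (q/2) := by
    have := mul_le_mul_of_nonneg_left jensen (le_of_lt hMpos)
    calc ∑ p ∈ s, |(inner ℝ (y p.1) (y p.2) : ℝ)|^q
        = M * ((1/M) * ∑ p ∈ s, |(inner ℝ (y p.1) (y p.2) : ℝ)|^q) := by
          field_simp
      _ ≤ M * ((1/M) * ∑ p ∈ s, ((inner ℝ (y p.1) (y p.2) : ℝ))^2) ^ (q/2) := this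
  refine le_trans key ?_
  have hbase : (1/M) * ∑ p ∈ s, ((inner ℝ (y p.1) (y p.2) : ℝ))^2
      ≤ ((N:ℝ) - d) / (d * ((N:ℝ) - 1)) := by
    have heq : (1/M) * ((N:ℝ)^2/d - N) = ((N:ℝ) - d) / (d * ((N:ℝ) - 1)) := by
      rw [hM]
      have h1 : (N:ℝ) - 1 ≠ 0 := by linarith
      have h2 : (N:ℝ) ≠ 0 := by linarith
      field_simp
    rw [← heq]
    exact mul_le_mul_of_nonneg_left hE (by positivity)
  refine mul_le_mul_of_nonneg_left ?_ (le_of_lt hMpos)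
  exact Real.rpow_le_rpow (by positivity) hbase (by positivity)
end

section
/- Let q ∈ [1, 2] and let y_1, ..., y_N be vectors in ℂ^d (not necessarily unit) with N > d forming a tight frame with frame constant N/d, i.e. Σ_{i=1}^N y_i y_i* = (N/d) I_d. Then Σ_{i ≠ j} |⟨y_i, y_j⟩|^q ≤ (N² - N) · ((N - d)/(d(N - 1)))^{q/2}. -/
lemma sum_rpow_le_card_rpow_mul {ι : Type*} (s : Finset ι) (f : ι → ℝ)
    (hf : ∀ i ∈ s, 0 ≤ f i) {q : ℝ} (hq1 : 1 ≤ q) (hq2 : q ≤ 2) :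
    ∑ i ∈ s, f i ^ q ≤ (s.card : ℝ) ^ (1 - q/2) * (∑ i ∈ s, f i ^ (2:ℝ)) ^ (q/2) := by
  have hq0 : (0:ℝ) < q := lt_of_lt_of_le one_pos hq1
  set p : ℝ := 2 / q with hp
  have hp1 : 1 ≤ p := (one_le_div hq0).mpr hq2
  have hA0 : 0 ≤ ∑ i ∈ s, f i ^ q :=
    Finset.sum_nonneg fun i hi => Real.rpow_nonneg (hf i hi) q
  have hB0 : 0 ≤ ∑ i ∈ s, f i ^ (2:ℝ) :=
    Finset.sum_nonneg fun i hi => Real.rpow_nonneg (hf i hi) 2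
  have key := Real.rpow_sum_le_const_mul_sum_rpow s (fun i => f i ^ q) hp1
  have habs : ∀ i ∈ s, |f i ^ q| = f i ^ q := fun i hi =>
    abs_of_nonneg (Real.rpow_nonneg (hf i hi) q)
  have hqp : q * p = 2 := by rw [hp]; field_simp
  have hpow : ∀ i ∈ s, |f i ^ q| ^ p = f i ^ (2:ℝ) := by
    intro i hi
    rw [habs i hi, ← Real.rpow_mul (hf i hi), hqp]
  rw [Finset.sum_congr rfl habs, Finset.sum_congr rfl hpow] at key
  have hA : (∑ i ∈ s, f i ^ q) = ((∑ i ∈ s, f i ^ q) ^ p) ^ (q/2) := by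
    rw [← Real.rpow_mul hA0]
    have : p * (q/2) = 1 := by linear_combination hqp / 2
    rw [this, Real.rpow_one]
  rw [hA]
  have h2 : (((s.card : ℝ)) ^ (p - 1) * ∑ i ∈ s, f i ^ (2:ℝ)) ^ (q/2)
      = (s.card : ℝ) ^ (1 - q/2) * (∑ i ∈ s, f i ^ (2:ℝ)) ^ (q/2) := by
    rw [Real.mul_rpow (Real.rpow_nonneg (Nat.cast_nonneg _) _) hB0,
      ← Real.rpow_mul (Nat.cast_nonneg _)]
    congr 2
    linear_combination hqp / 2
  rw [← h2]
  exact Real.rpow_le_rpow (Real.rpow_nonneg hA0 p) key (by positivity)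

/-- The `q`-energy (`q ∈ [1,2]`) of a tight frame of `N > d` vectors in `ℂ^d` with frame
constant `N/d` is at most `(N² - N)·((N-d)/(d(N-1)))^{q/2}`. -/
theorem q_energy_tight_frame_complex (d N : ℕ) (hdN : d < N)
    (q : ℝ) (hq1 : 1 ≤ q) (hq2 : q ≤ 2)
    (y : Fin N → EuclideanSpace ℂ (Fin d))
    (htf : ∑ i, Matrix.of (fun a b => y i a * star (y i b))
      = (((N : ℂ)) / d) • (1 : Matrix (Fin d) (Fin d) ℂ)) :
    ∑ i, ∑ j, (if i = j then 0 else ‖(inner ℂ (y i) (y j) : ℂ)‖ ^ q)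
      ≤ ((N : ℝ) ^ 2 - N) * (((N : ℝ) - d) / (d * ((N : ℝ) - 1))) ^ (q / 2) := by
  have hq0 : (0:ℝ) < q := lt_of_lt_of_le one_pos hq1
  rcases Nat.eq_zero_or_pos d with hd | hd
  · subst hd
    have hy : ∀ i, y i = 0 := fun i => Subsingleton.elim _ _
    have hL : ∀ i j : Fin N, (if i = j then (0:ℝ) else ‖(inner ℂ (y i) (y j) : ℂ)‖ ^ q) = 0 := by
      intro i j
      by_cases h : i = j
      · simp [h]
      · simp [h, hy, Real.zero_rpow hq0.ne']
    simp only [hL, Finset.sum_const_zero]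
    rw [Nat.cast_zero, zero_mul, div_zero, Real.zero_rpow (by positivity : q/2 ≠ 0), mul_zero]
  · -- main case
    have hN2 : 2 ≤ N := lt_of_le_of_lt hd hdN
    have hd0 : (d:ℂ) ≠ 0 := Nat.cast_ne_zero.mpr hd.ne'
    have hdR : (0:ℝ) < d := by exact_mod_cast hd
    have hNR : (0:ℝ) < N := by positivity
    have hN1R : (0:ℝ) < (N:ℝ) - 1 := by
      have : (1:ℝ) < N := by exact_mod_cast lt_of_lt_of_le one_lt_two hN2
      linarith
    have hNdR : (0:ℝ) ≤ (N:ℝ) - d := by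
      have : (d:ℝ) < N := by exact_mod_cast hdN
      linarith
    have hT : ∀ a b : Fin d,
        (∑ i, y i a * (starRingEnd ℂ) (y i b)) = if a = b then (N:ℂ)/d else 0 := by
      intro a b
      have h := congrFun (congrFun (congrArg (Matrix.of.symm) htf) a) b
      simpa [Matrix.sum_apply, Matrix.one_apply, Matrix.smul_apply, mul_ite, mul_one, mul_zero,
        RCLike.star_def] using h
    set G : Fin N → Fin N → ℂ := fun i j => inner ℂ (y i) (y j) with hGdef
    have hGexp : ∀ i j, G i j = ∑ a, (starRingEnd ℂ) (y i a) * y j a := by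
      intro i j
      simp [hGdef, PiLp.inner_apply, RCLike.inner_apply, mul_comm]
    have htrace : ∑ i, G i i = (N:ℂ) := by
      have h : ∑ i, G i i = ∑ a, ∑ i, y i a * (starRingEnd ℂ) (y i a) := by
        rw [Finset.sum_comm]
        exact Finset.sum_congr rfl fun i _ => by
          rw [hGexp]; exact Finset.sum_congr rfl fun a _ => mul_comm _ _
      rw [h]
      simp only [hT, if_pos rfl, ↓reduceIte]
      rw [Finset.sum_const, Finset.card_univ, Fintype.card_fin, nsmul_eq_mul]
      field_simp
    set F : Fin N → Fin N → Fin d → Fin d → ℂ :=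
      fun i j b a => (y i b * (starRingEnd ℂ) (y j b)) * ((starRingEnd ℂ) (y i a) * y j a)
      with hFdef
    have key : ∑ i, ∑ j, (starRingEnd ℂ) (G i j) * G i j = (N:ℂ)^2 / d := by
      calc ∑ i, ∑ j, (starRingEnd ℂ) (G i j) * G i j
          = ∑ i, ∑ j, ∑ b, ∑ a, F i j b a := by
            refine Finset.sum_congr rfl fun i _ => Finset.sum_congr rfl fun j _ => ?_
            rw [hGexp, map_sum, Finset.sum_mul_sum]
            exact Finset.sum_congr rfl fun b _ => Finset.sum_congr rfl fun a _ => by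
              simp only [hFdef, map_mul, Complex.conj_conj]
        _ = ∑ i, ∑ b, ∑ j, ∑ a, F i j b a :=
            Finset.sum_congr rfl fun i _ => Finset.sum_comm
        _ = ∑ b, ∑ i, ∑ j, ∑ a, F i j b a := Finset.sum_comm
        _ = ∑ b, ∑ i, ∑ a, ∑ j, F i j b a :=
            Finset.sum_congr rfl fun b _ => Finset.sum_congr rfl fun i _ => Finset.sum_comm
        _ = ∑ b, ∑ a, ∑ i, ∑ j, F i j b a :=
            Finset.sum_congr rfl fun b _ => Finset.sum_comm
        _ = ∑ b, ∑ a, (∑ i, y i b * (starRingEnd ℂ) (y i a)) *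
              (starRingEnd ℂ) (∑ j, y j b * (starRingEnd ℂ) (y j a)) := by
            refine Finset.sum_congr rfl fun b _ => Finset.sum_congr rfl fun a _ => ?_
            rw [map_sum, Finset.sum_mul_sum]
            exact Finset.sum_congr rfl fun i _ => Finset.sum_congr rfl fun j _ => by
              simp only [hFdef, map_mul, Complex.conj_conj]; ring
        _ = ∑ b, ∑ a, (if b = a then ((N:ℂ)/d)^2 else 0) := by
            refine Finset.sum_congr rfl fun b _ => Finset.sum_congr rfl fun a _ => ?_
            rw [hT b a]
            by_cases h : b = a <;> simp [h, map_div₀, sq]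
        _ = (N:ℂ)^2 / d := by
            simp only [Finset.sum_ite_eq, Finset.mem_univ, if_true]
            rw [Finset.sum_const, Finset.card_univ, Fintype.card_fin, nsmul_eq_mul]
            field_simp
    -- real second moment
    have hcz : ∀ z : ℂ, (starRingEnd ℂ) z * z = (((‖z‖^2 : ℝ)) : ℂ) := by
      intro z
      rw [mul_comm, Complex.mul_conj]
      norm_cast
      simp [Complex.normSq_eq_norm_sq]
    have hS2R : ∑ i, ∑ j, ‖G i j‖^2 = (N:ℝ)^2/(d:ℝ) := by
      apply Complex.ofReal_injective
      calc ((∑ i, ∑ j, ‖G i j‖^2 : ℝ) : ℂ)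
          = ∑ i, ∑ j, (((‖G i j‖^2 : ℝ)) : ℂ) := by push_cast; rfl
        _ = ∑ i, ∑ j, (starRingEnd ℂ) (G i j) * G i j :=
            Finset.sum_congr rfl fun i _ => Finset.sum_congr rfl fun j _ => (hcz _).symm
        _ = (N:ℂ)^2 / d := key
        _ = (((N:ℝ)^2/(d:ℝ) : ℝ) : ℂ) := by push_cast; rfl
    -- diagonal
    have hGii : ∀ i, G i i = ((‖y i‖ : ℂ))^2 := fun i => inner_self_eq_norm_sq_to_K (y i)
    have hnGii : ∀ i, ‖G i i‖ = ‖y i‖^2 := by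
      intro i
      rw [hGii, norm_pow, Complex.norm_real, norm_norm]
    have hsum_norm : ∑ i, ‖G i i‖ = (N:ℝ) := by
      apply Complex.ofReal_injective
      calc ((∑ i, ‖G i i‖ : ℝ) : ℂ) = ∑ i, ((‖G i i‖ : ℝ) : ℂ) := by push_cast; rfl
        _ = ∑ i, G i i := Finset.sum_congr rfl fun i _ => by
              rw [hnGii, hGii]; push_cast; rfl
        _ = (N:ℂ) := htrace
        _ = (((N:ℝ) : ℝ) : ℂ) := by push_cast; rfl
    have hdiag2 : (N:ℝ) ≤ ∑ i, ‖G i i‖^2 := by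
      have hcs := sq_sum_le_card_mul_sum_sq (s := (Finset.univ : Finset (Fin N)))
        (f := fun i => ‖G i i‖)
      rw [hsum_norm, Finset.card_univ, Fintype.card_fin] at hcs
      nlinarith
    -- splitting off-diagonal
    have hsplit : ∀ g : Fin N → Fin N → ℝ,
        (∑ i, ∑ j, if i = j then 0 else g i j) = (∑ i, ∑ j, g i j) - ∑ i, g i i := by
      intro g
      have h1 : ∀ i : Fin N, ∑ j, (if i = j then 0 else g i j) = (∑ j, g i j) - g i i := by
        intro i
        have h2 : ∀ j, (if i = j then 0 else g i j)
            = g i j - (if i = j then g i j else 0) := by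
          intro j; by_cases h : i = j <;> simp [h]
        rw [Finset.sum_congr rfl (fun j _ => h2 j), Finset.sum_sub_distrib]
        simp
      rw [Finset.sum_congr rfl (fun i _ => h1 i), Finset.sum_sub_distrib]
    have hE2 : (∑ i, ∑ j, if i = j then 0 else ‖G i j‖^2) ≤ (N:ℝ)*((N:ℝ)-d)/(d:ℝ) := by
      rw [hsplit, hS2R]
      have harith : (N:ℝ)^2/(d:ℝ) - (N:ℝ) = (N:ℝ)*((N:ℝ)-d)/(d:ℝ) + ((N:ℝ) - N) := by
        field_simp
        ring
      nlinarith [hdiag2]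
    -- off-diagonal as a Finset sum
    have hoff : ∀ g : Fin N → Fin N → ℝ,
        ∑ p ∈ (Finset.univ : Finset (Fin N)).offDiag, g p.1 p.2
          = ∑ i, ∑ j, (if i = j then 0 else g i j) := by
      intro g
      rw [show (Finset.univ : Finset (Fin N)).offDiag = (Finset.univ ×ˢ Finset.univ).filter
          (fun a : Fin N × Fin N => a.1 ≠ a.2) by ext; simp, Finset.sum_filter, ← Finset.sum_product']
      exact Finset.sum_congr rfl fun p _ => by
        by_cases h : p.1 = p.2 <;> simp [h]
    have hcard : (((Finset.univ : Finset (Fin N)).offDiag.card : ℝ)) = (N:ℝ)^2 - N := by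
      rw [Finset.offDiag_card, Finset.card_univ, Fintype.card_fin]
      have : N ≤ N * N := Nat.le_mul_of_pos_left N (lt_of_lt_of_le two_pos hN2)
      push_cast [Nat.cast_sub this]
      ring
    -- apply Hölder-type lemma
    set s := (Finset.univ : Finset (Fin N)).offDiag with hs
    have hHolder := sum_rpow_le_card_rpow_mul s (fun p => ‖G p.1 p.2‖)
      (fun p _ => norm_nonneg _) hq1 hq2
    have hr2 : ∀ p : Fin N × Fin N, ‖G p.1 p.2‖ ^ (2:ℝ) = ‖G p.1 p.2‖^2 := by
      intro p
      rw [show (2:ℝ) = ((2:ℕ):ℝ) by norm_cast, Real.rpow_natCast]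
    rw [Finset.sum_congr rfl (fun p _ => hr2 p)] at hHolder
    have hgoalL : (∑ i, ∑ j, if i = j then 0
        else ‖(inner ℂ (y i) (y j) : ℂ)‖ ^ q) = ∑ p ∈ s, ‖G p.1 p.2‖ ^ q :=
      (hoff (fun i j => ‖G i j‖ ^ q)).symm
    rw [hgoalL]
    set M : ℝ := (N:ℝ)^2 - N with hM
    have hMpos : 0 < M := by
      rw [hM]
      nlinarith [hN1R, hNR]
    set r : ℝ := ((N:ℝ) - d) / ((d:ℝ) * ((N:ℝ) - 1)) with hr
    have hrpos : 0 ≤ r := by positivity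
    have hsum2 : (∑ p ∈ s, ‖G p.1 p.2‖^2) ≤ M * r := by
      have heq : (∑ p ∈ s, ‖G p.1 p.2‖^2) = ∑ i, ∑ j, (if i = j then 0 else ‖G i j‖^2) :=
        hoff (fun i j => ‖G i j‖^2)
      have hMr : M * r = (N:ℝ)*((N:ℝ)-d)/(d:ℝ) := by
        rw [hM, hr]
        field_simp
      rw [heq, hMr]
      exact hE2
    calc ∑ p ∈ s, ‖G p.1 p.2‖ ^ q
        ≤ (s.card : ℝ) ^ (1 - q/2) * (∑ p ∈ s, ‖G p.1 p.2‖^2) ^ (q/2) := hHolder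
      _ ≤ (s.card : ℝ) ^ (1 - q/2) * (M * r) ^ (q/2) := by
          refine mul_le_mul_of_nonneg_left ?_ (Real.rpow_nonneg (Nat.cast_nonneg _) _)
          refine Real.rpow_le_rpow ?_ hsum2 (by positivity)
          exact Finset.sum_nonneg fun p _ => sq_nonneg _
      _ = M * r ^ (q/2) := by
          rw [hcard, Real.mul_rpow (le_of_lt hMpos) hrpos, ← mul_assoc,
            ← Real.rpow_add hMpos, show (1 - q/2) + q/2 = 1 by ring, Real.rpow_one]
      _ = ((N:ℝ)^2 - N) * (((N:ℝ) - d) / ((d:ℝ) * ((N:ℝ) - 1))) ^ (q/2) := by rw [hM, hr]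
end

section
/- Let r ∈ (0, 1], let x_1, ..., x_M be distinct points in the open interval (0, 1), and let H be a real polynomial of degree at most 2M such that H(x_i) = x_i^r and H'(x_i) = r·x_i^{r-1} for every i ∈ {1, ..., M}, and H(1) = 1. Then H(x) ≥ x^r for all x ∈ [0, 1]. -/
open Set

lemma my_rolle_finset (f f' : ℝ → ℝ)
    (hd : ∀ x ∈ Set.Ioi (0:ℝ), HasDerivAt f (f' x) x) :
    ∀ (n : ℕ) (S : Finset ℝ), S.card = n + 1 → (∀ s ∈ S, (0:ℝ) < s) →
      (∀ s ∈ S, f s = 0) →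
      ∃ T : Finset ℝ, T.card = n ∧
        (∀ u ∈ T, ∃ a ∈ S, ∃ b ∈ S, a < u ∧ u < b) ∧
        (∀ u ∈ T, u ∉ S) ∧ (∀ u ∈ T, f' u = 0) := by
  intro n
  induction n with
  | zero => intro S _ _ _; exact ⟨∅, by simp⟩
  | succ n ih =>
    intro S hcard hpos hz
    have hne : S.Nonempty := Finset.card_pos.mp (by omega)
    set a := S.min' hne with ha
    have haS : a ∈ S := S.min'_mem hne
    set S' := S.erase a with hS'
    have hcard' : S'.card = n + 1 := by rw [hS', Finset.card_erase_of_mem haS]; omega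
    have hne' : S'.Nonempty := Finset.card_pos.mp (by omega)
    set b := S'.min' hne' with hb
    have hbS' : b ∈ S' := S'.min'_mem hne'
    have hbS : b ∈ S := Finset.mem_of_mem_erase hbS'
    have hab : a < b := lt_of_le_of_ne (S.min'_le b hbS) (Ne.symm (Finset.ne_of_mem_erase hbS'))
    have ha0 : 0 < a := hpos a haS
    obtain ⟨ξ, hξ, hξ0⟩ := exists_hasDerivAt_eq_zero hab
      (fun y hy => ((hd y (lt_of_lt_of_le ha0 hy.1)).continuousAt.continuousWithinAt))
      (by rw [hz a haS, hz b hbS])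
      (fun y hy => hd y (lt_trans ha0 hy.1))
    obtain ⟨T', hT'card, hT'mem, hT'notmem, hT'zero⟩ := ih S' hcard'
      (fun s hs => hpos s (Finset.mem_of_mem_erase hs))
      (fun s hs => hz s (Finset.mem_of_mem_erase hs))
    have hT'gt : ∀ u ∈ T', b < u := by
      intro u hu
      obtain ⟨a', ha', _, _, hlt, _⟩ := hT'mem u hu
      exact lt_of_le_of_lt (S'.min'_le a' ha') hlt
    have hξT' : ξ ∉ T' := fun h => absurd (hT'gt ξ h) (not_lt.mpr (le_of_lt hξ.2))
    refine ⟨insert ξ T', ?_, ?_, ?_, ?_⟩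
    · rw [Finset.card_insert_of_notMem hξT', hT'card]
    · intro u hu
      rcases Finset.mem_insert.mp hu with rfl | hu
      · exact ⟨a, haS, b, hbS, hξ.1, hξ.2⟩
      · obtain ⟨a', ha', b', hb', h1, h2⟩ := hT'mem u hu
        exact ⟨a', Finset.mem_of_mem_erase ha', b', Finset.mem_of_mem_erase hb', h1, h2⟩
    · intro u hu
      rcases Finset.mem_insert.mp hu with rfl | hu
      · intro huS
        rcases eq_or_ne u a with rfl | hua
        · exact absurd hξ.1 (lt_irrefl _)
        · have hmem : u ∈ S' := Finset.mem_erase.mpr ⟨hua, huS⟩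
          exact absurd (S'.min'_le u hmem) (not_le.mpr hξ.2)
      · intro huS
        rcases eq_or_ne u a with rfl | hua
        · exact absurd (hT'gt _ hu) (not_lt.mpr (le_of_lt hab))
        · exact hT'notmem u hu (Finset.mem_erase.mpr ⟨hua, huS⟩)
    · intro u hu
      rcases Finset.mem_insert.mp hu with rfl | hu
      · exact hξ0
      · exact hT'zero u hu

lemma my_descend (e : ℕ → ℝ → ℝ)
    (hd : ∀ n, ∀ x ∈ Set.Ioi (0:ℝ), HasDerivAt (e n) (e (n+1) x) x) :
    ∀ (m n : ℕ) (S : Finset ℝ), S.card = m + 1 → (∀ s ∈ S, s ∈ Set.Ioc (0:ℝ) 1) →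
      (∀ s ∈ S, e n s = 0) → ∃ ξ ∈ Set.Ioc (0:ℝ) 1, e (n + m) ξ = 0 := by
  intro m
  induction m with
  | zero =>
    intro n S hcard hmem hz
    obtain ⟨s, hs⟩ := Finset.card_pos.mp (by omega : 0 < S.card)
    exact ⟨s, hmem s hs, by simpa using hz s hs⟩
  | succ m ih =>
    intro n S hcard hmem hz
    obtain ⟨T, hTcard, hTmem, _, hTzero⟩ := my_rolle_finset (e n) (e (n+1)) (hd n)
      (m+1) S hcard (fun s hs => (hmem s hs).1) hz
    obtain ⟨ξ, h1, h2⟩ := ih (n+1) T hTcard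
      (fun u hu => by
        obtain ⟨a, haS, b, hbS, hlt1, hlt2⟩ := hTmem u hu
        exact ⟨(hmem a haS).1.trans hlt1, hlt2.le.trans (hmem b hbS).2⟩)
      hTzero
    exact ⟨ξ, h1, by rwa [show n + (m+1) = (n+1) + m by omega]⟩

lemma my_family_deriv (r : ℝ) (P : Polynomial ℝ) (n : ℕ) (s : ℝ) (hs : s ≠ 0) :
    HasDerivAt (fun u : ℝ => (∏ k ∈ Finset.range n, (r - (k:ℝ))) * u ^ (r - (n:ℝ)) -
        ((Polynomial.derivative)^[n] P).eval u)
      ((∏ k ∈ Finset.range (n+1), (r - (k:ℝ))) * s ^ (r - ((n+1:ℕ):ℝ)) -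
        ((Polynomial.derivative)^[n+1] P).eval s) s := by
  have h1 : HasDerivAt (fun u : ℝ => u ^ (r - (n:ℝ))) ((r - (n:ℝ)) * s ^ (r - (n:ℝ) - 1)) s :=
    Real.hasDerivAt_rpow_const (Or.inl hs)
  have h2 := (h1.const_mul (∏ k ∈ Finset.range n, (r - (k:ℝ)))).sub
    (Polynomial.hasDerivAt ((Polynomial.derivative)^[n] P) s)
  convert h2 using 1
  case e'_4 => rfl
  case e'_5 => rfl
  case e'_8 => rfl
  rw [Finset.prod_range_succ, Function.iterate_succ_apply']
  push_cast
  rw [show r - ((n:ℝ)+1) = r - (n:ℝ) - 1 by ring]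
  ring
open Polynomial in
/-- The Hermite interpolant of `x^r`, `r ∈ (0,1]`, with doubled nodes at distinct points
`x_1, …, x_M ∈ (0,1)` and a simple node at `1`, lies above `x^r` on `[0,1]`. -/
theorem hermite_interpolant_ge (r : ℝ) (hr0 : 0 < r) (hr1 : r ≤ 1)
    (M : ℕ) (x : Fin M → ℝ)
    (hx : ∀ i, x i ∈ Set.Ioo (0 : ℝ) 1)
    (hinj : Function.Injective x)
    (H : Polynomial ℝ) (hdeg : H.natDegree ≤ 2 * M)
    (hval : ∀ i, H.eval (x i) = x i ^ r)
    (hder : ∀ i, (Polynomial.derivative H).eval (x i) = r * x i ^ (r - 1))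
    (h1 : H.eval 1 = 1) :
    ∀ t ∈ Set.Icc (0 : ℝ) 1, t ^ r ≤ H.eval t := by
  have key : ∀ t ∈ Set.Ioc (0:ℝ) 1, t ^ r ≤ H.eval t := by
    intro t ht
    rcases eq_or_lt_of_le ht.2 with rfl | ht1
    · rw [h1, Real.one_rpow]
    by_cases htx : ∃ i, t = x i
    · obtain ⟨i, rfl⟩ := htx; rw [hval i]
    push_neg at htx
    have ht0 := ht.1
    -- the auxiliary polynomials
    set q : Polynomial ℝ := ∏ i : Fin M, (X - C (x i)) with hq
    set w : Polynomial ℝ := (X - C 1) * q ^ 2 with hw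
    have hq_eval : ∀ s : ℝ, q.eval s = ∏ i : Fin M, (s - x i) := by
      intro s; simp [hq, eval_prod]
    have hq_xi : ∀ i, q.eval (x i) = 0 := by
      intro i
      rw [hq_eval]
      exact Finset.prod_eq_zero (Finset.mem_univ i) (by ring)
    have hqt : q.eval t ≠ 0 := by
      rw [hq_eval]
      exact Finset.prod_ne_zero_iff.mpr fun i _ => sub_ne_zero.mpr (htx i)
    have hw_eval : ∀ s : ℝ, w.eval s = (s - 1) * (q.eval s) ^ 2 := by
      intro s; simp [hw]
    have hwt_neg : w.eval t < 0 := by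
      rw [hw_eval]
      exact mul_neg_of_neg_of_pos (by linarith) (pow_two_pos_of_ne_zero hqt)
    have hwt_ne : w.eval t ≠ 0 := ne_of_lt hwt_neg
    set c : ℝ := (t ^ r - H.eval t) / w.eval t with hc
    set P : Polynomial ℝ := H + C c * w with hP
    have hcwt : c * w.eval t = t ^ r - H.eval t := div_mul_cancel₀ _ hwt_ne
    have hPt : P.eval t = t ^ r := by
      simp only [hP, eval_add, eval_mul, eval_C]
      rw [hcwt]; ring
    have hP1 : P.eval 1 = 1 := by
      simp only [hP, eval_add, eval_mul, eval_C, hw_eval]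
      rw [h1]; ring
    have hPxi : ∀ i, P.eval (x i) = x i ^ r := by
      intro i
      simp only [hP, eval_add, eval_mul, eval_C, hw_eval, hq_xi i]
      rw [hval i]; ring
    have hw'xi : ∀ i, (derivative w).eval (x i) = 0 := by
      intro i
      simp [hw, derivative_mul, derivative_pow, hq_xi i]
    have hP'xi : ∀ i, (derivative P).eval (x i) = r * x i ^ (r - 1) := by
      intro i
      simp only [hP, derivative_add, derivative_mul, derivative_C, zero_mul, zero_add,
        eval_add, eval_mul, eval_C, hw'xi i, mul_zero, add_zero]
      exact hder i
    -- the family of derivatives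
    set e : ℕ → ℝ → ℝ := fun n s =>
      (∏ k ∈ Finset.range n, (r - (k:ℝ))) * s ^ (r - (n:ℝ)) -
        ((Polynomial.derivative)^[n] P).eval s with he
    have hd : ∀ n, ∀ s ∈ Set.Ioi (0:ℝ), HasDerivAt (e n) (e (n+1) s) s := by
      intro n s hs
      have := my_family_deriv r P n s (ne_of_gt hs)
      simpa [he] using this
    have he0 : ∀ s : ℝ, e 0 s = s ^ r - P.eval s := by
      intro s; simp [he]
    have he1 : ∀ s : ℝ, e 1 s = r * s ^ (r - 1) - (derivative P).eval s := by
      intro s; simp [he]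
    -- initial zero set
    set img : Finset ℝ := Finset.image x Finset.univ with himgdef
    have himgcard : img.card = M := by
      rw [himgdef, Finset.card_image_of_injective _ hinj, Finset.card_univ, Fintype.card_fin]
    have himg_mem : ∀ s ∈ img, s ∈ Set.Ioc (0:ℝ) 1 := by
      intro s hs
      obtain ⟨i, _, rfl⟩ := Finset.mem_image.mp hs
      exact ⟨(hx i).1, le_of_lt (hx i).2⟩
    have h1img : (1:ℝ) ∉ img := by
      intro h
      obtain ⟨i, _, hi⟩ := Finset.mem_image.mp h
      exact absurd hi (ne_of_lt (hx i).2)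
    have htimg : t ∉ insert (1:ℝ) img := by
      intro h
      rcases Finset.mem_insert.mp h with h | h
      · exact absurd h (ne_of_lt ht1)
      · obtain ⟨i, _, hi⟩ := Finset.mem_image.mp h
        exact (htx i) hi.symm
    set S0 : Finset ℝ := insert t (insert 1 img) with hS0
    have hS0card : S0.card = M + 1 + 1 := by
      rw [hS0, Finset.card_insert_of_notMem htimg, Finset.card_insert_of_notMem h1img, himgcard]
    have hS0mem : ∀ s ∈ S0, s ∈ Set.Ioc (0:ℝ) 1 := by
      intro s hs
      rcases Finset.mem_insert.mp hs with rfl | hs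
      · exact ⟨ht0, le_of_lt ht1⟩
      rcases Finset.mem_insert.mp hs with rfl | hs
      · exact ⟨zero_lt_one, le_refl 1⟩
      · exact himg_mem s hs
    have hz0 : ∀ s ∈ S0, e 0 s = 0 := by
      intro s hs
      rw [he0]
      rcases Finset.mem_insert.mp hs with rfl | hs
      · rw [hPt]; ring
      rcases Finset.mem_insert.mp hs with rfl | hs
      · rw [hP1, Real.one_rpow]; ring
      · obtain ⟨i, _, rfl⟩ := Finset.mem_image.mp hs
        rw [hPxi i]; ring
    obtain ⟨T, hTcard, hTmem, hTnot, hTzero⟩ := my_rolle_finset (e 0) (e 1) (hd 0)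
      (M + 1) S0 hS0card (fun s hs => (hS0mem s hs).1) hz0
    -- second zero set
    have hdisj : Disjoint T img := by
      rw [Finset.disjoint_left]
      intro u hu humem
      exact hTnot u hu (by
        rw [hS0]
        exact Finset.mem_insert_of_mem (Finset.mem_insert_of_mem humem))
    set S1 : Finset ℝ := T ∪ img with hS1
    have hS1card : S1.card = 2 * M + 1 := by
      rw [hS1, Finset.card_union_of_disjoint hdisj, hTcard, himgcard]; omega
    have hS1mem : ∀ s ∈ S1, s ∈ Set.Ioc (0:ℝ) 1 := by
      intro s hs
      rcases Finset.mem_union.mp hs with hs | hs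
      · obtain ⟨a, haS, b, hbS, hlt1, hlt2⟩ := hTmem s hs
        exact ⟨(hS0mem a haS).1.trans hlt1, hlt2.le.trans (hS0mem b hbS).2⟩
      · exact himg_mem s hs
    have hz1 : ∀ s ∈ S1, e 1 s = 0 := by
      intro s hs
      rcases Finset.mem_union.mp hs with hs | hs
      · exact hTzero s hs
      · obtain ⟨i, _, rfl⟩ := Finset.mem_image.mp hs
        rw [he1, hP'xi i]; ring
    obtain ⟨ξ, hξmem, hξzero⟩ := my_descend e hd (2 * M) 1 S1 (by omega) hS1mem hz1
    rw [show 1 + 2 * M = 2 * M + 1 by omega] at hξzero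
    -- compute the top derivative of P
    have hwmonic : w.Monic := by
      exact (monic_X_sub_C 1).mul ((monic_prod_of_monic _ _ fun i _ => monic_X_sub_C (x i)).pow 2)
    have hqdeg : q.natDegree = M := by
      rw [hq, natDegree_prod _ _ (fun i _ => X_sub_C_ne_zero (x i))]
      simp [natDegree_X_sub_C]
    have hwdeg : w.natDegree = 2 * M + 1 := by
      rw [hw, Polynomial.Monic.natDegree_mul (monic_X_sub_C 1)
        ((monic_prod_of_monic _ _ fun i _ => monic_X_sub_C (x i)).pow 2),
        natDegree_X_sub_C, natDegree_pow, hqdeg]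
      omega
    have hPdeg : P.natDegree ≤ 2 * M + 1 := by
      rw [hP]
      refine le_trans (natDegree_add_le _ _) (max_le (by omega) ?_)
      exact le_trans (natDegree_C_mul_le _ _) (le_of_eq hwdeg)
    have hPcoeff : P.coeff (2 * M + 1) = c := by
      rw [hP, coeff_add, coeff_C_mul,
        coeff_eq_zero_of_natDegree_lt (by omega : H.natDegree < 2 * M + 1)]
      have : w.coeff (2 * M + 1) = 1 := by
        have := hwmonic.coeff_natDegree
        rwa [hwdeg] at this
      rw [this]; ring
    set Q : Polynomial ℝ := (Polynomial.derivative)^[2 * M + 1] P with hQ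
    have hQdeg : Q.natDegree ≤ 0 := by
      rw [hQ]
      exact le_trans (natDegree_iterate_derivative _ _) (by omega)
    have hQeval : ∀ s : ℝ, Q.eval s = ((Nat.factorial (2 * M + 1)) : ℝ) * c := by
      intro s
      rw [eq_C_of_natDegree_le_zero hQdeg]
      rw [eval_C, hQ, coeff_iterate_derivative, zero_add, Nat.descFactorial_self, hPcoeff,
        nsmul_eq_mul]
    -- sign analysis
    have hA : 0 ≤ ∏ k ∈ Finset.range (2 * M + 1), (r - (k:ℝ)) := by
      rw [Finset.prod_range_succ']
      have : ∀ k ∈ Finset.range (2 * M), (r - ((k + 1 : ℕ):ℝ)) = (-1) * (((k:ℝ) + 1) - r) := by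
        intro k _; push_cast; ring
      rw [Finset.prod_congr rfl this, Finset.prod_mul_distrib, Finset.prod_const]
      have hneg : ((-1:ℝ)) ^ (2 * M) = 1 := Even.neg_one_pow ⟨M, by ring⟩
      rw [Finset.card_range, hneg, Nat.cast_zero, sub_zero, one_mul]
      refine mul_nonneg (Finset.prod_nonneg fun k _ => by
        have : (0:ℝ) ≤ (k:ℝ) := Nat.cast_nonneg k
        linarith) (le_of_lt hr0)
    have hξpow : 0 < ξ ^ (r - ((2 * M + 1 : ℕ):ℝ)) := Real.rpow_pos_of_pos hξmem.1 _
    have hceq : (∏ k ∈ Finset.range (2 * M + 1), (r - (k:ℝ))) * ξ ^ (r - ((2 * M + 1 : ℕ):ℝ))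
        = ((Nat.factorial (2 * M + 1)) : ℝ) * c := by
      have := hξzero
      rw [he] at this
      have h := sub_eq_zero.mp this
      rw [h, ← hQ, hQeval]
    have hcpos : 0 ≤ c := by
      have hfact : (0:ℝ) < ((Nat.factorial (2 * M + 1)) : ℝ) := by positivity
      nlinarith [mul_nonneg hA (le_of_lt hξpow)]
    -- conclude
    have : t ^ r - H.eval t ≤ 0 := by
      rw [← hcwt]
      exact mul_nonpos_of_nonneg_of_nonpos hcpos (le_of_lt hwt_neg)
    linarith
  intro t ht
  rcases eq_or_lt_of_le ht.1 with rfl | ht0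
  · rw [Real.zero_rpow (ne_of_gt hr0)]
    have hlim : Filter.Tendsto (fun s => H.eval s) (nhdsWithin 0 (Set.Ioi 0))
        (nhds (H.eval 0)) :=
      ((Polynomial.continuous H).tendsto 0).mono_left nhdsWithin_le_nhds
    refine ge_of_tendsto hlim ?_
    filter_upwards [Ioc_mem_nhdsGT_of_mem (Set.mem_Ico.mpr ⟨le_refl 0, zero_lt_one⟩)] with s hs
    exact le_trans (Real.rpow_nonneg hs.1.le r) (key s hs)
  · exact key t ⟨ht0, ht.2⟩
end

section
/- Let d ≥ 2 be an integer, M = d(d+1)/2, β = √(1/(d+2)), and let q ∈ [1, 2). For an integer N with d < N < M, one has N²(β^q + (1 - β^q)/M) - N > (N² - N)·((N - d)/(d(N - 1)))^{q/2}, and for an integer N with N > M one has N²(β^q + (1 - β^q)/M) - N < (N² - N)·((N - d)/(d(N - 1)))^{q/2}. Moreover, the two sides are equal when N = M, and also equal for every N > d when q = 2. -/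
/-- The bound `N²(β^q + (1-β^q)/M) - N` coming from the moment bound for isotropic measures,
with `β = √(1/(d+2))` and `M = d(d+1)/2`. -/
noncomputable def momentEnergyBound (d N : ℕ) (q : ℝ) : ℝ :=
  (N : ℝ) ^ 2 * (Real.sqrt (1 / ((d : ℝ) + 2)) ^ q
      + (1 - Real.sqrt (1 / ((d : ℝ) + 2)) ^ q) / ((d : ℝ) * ((d : ℝ) + 1) / 2))
    - N

/-- The Welch-type bound `(N² - N)·((N-d)/(d(N-1)))^{q/2}`. -/
noncomputable def welchEnergyBound (d N : ℕ) (q : ℝ) : ℝ :=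
  ((N : ℝ) ^ 2 - N) * (((N : ℝ) - d) / ((d : ℝ) * ((N : ℝ) - 1))) ^ (q / 2)

lemma concave_combo {t u v A B C w : ℝ} (ht0 : 0 < t) (ht1 : t < 1)
    (hu : 0 ≤ u) (hv : 0 ≤ v) (huv : u ≠ v) (hA : 0 < A) (hB : 0 < B)
    (hC : A + B = C) (hw : C * w = A * u + B * v) :
    A * u ^ t + B * v ^ t < C * w ^ t := by
  have hC0 : 0 < C := by linarith
  have hsum : A / C + B / C = 1 := by field_simp; linarith
  have key := (Real.strictConcaveOn_rpow ht0 ht1).2 hu hv huv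
    (div_pos hA hC0) (div_pos hB hC0) hsum
  simp only [smul_eq_mul] at key
  have hw' : A / C * u + B / C * v = w := by
    field_simp
    try linarith
  rw [hw'] at key
  calc A * u ^ t + B * v ^ t = C * (A / C * u ^ t + B / C * v ^ t) := by
        field_simp
        try ring
    _ < C * w ^ t := by exact (mul_lt_mul_iff_right₀ hC0).2 key

lemma moment_formula (d N : ℕ) (hd : 2 ≤ d) (q : ℝ) :
    momentEnergyBound d N q
      = (N:ℝ)^2 * ((d:ℝ)*((d:ℝ)+1)/2 - 1) / ((d:ℝ)*((d:ℝ)+1)/2)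
          * (1/((d:ℝ)+2)) ^ (q/2)
        + (N:ℝ) * ((N:ℝ) - (d:ℝ)*((d:ℝ)+1)/2) / ((d:ℝ)*((d:ℝ)+1)/2) := by
  have hd2 : (2:ℝ) ≤ (d:ℝ) := by exact_mod_cast hd
  have ha : (0:ℝ) ≤ 1/((d:ℝ)+2) := by positivity
  have hs : Real.sqrt (1/((d:ℝ)+2)) ^ q = (1/((d:ℝ)+2)) ^ (q/2) := by
    rw [Real.sqrt_eq_rpow, ← Real.rpow_mul ha]
    congr 1
    ring
  rw [momentEnergyBound, hs]
  have hm : (d:ℝ)*((d:ℝ)+1)/2 ≠ 0 := by positivity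
  field_simp
  ring

lemma cast_M (d : ℕ) : ((d * (d + 1) / 2 : ℕ) : ℝ) = (d:ℝ)*((d:ℝ)+1)/2 := by
  have h2 : d * (d + 1) / 2 * 2 = d * (d + 1) :=
    Nat.div_mul_cancel (Nat.even_mul_succ_self d).two_dvd
  have := congrArg (Nat.cast : ℕ → ℝ) h2
  push_cast at this
  linarith

lemma d_lt_M (d : ℕ) (hd : 2 ≤ d) : d < d * (d + 1) / 2 := by
  have h2 : d * (d + 1) / 2 * 2 = d * (d + 1) :=
    Nat.div_mul_cancel (Nat.even_mul_succ_self d).two_dvd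
  have h3 : 3 * d ≤ d * (d + 1) := by nlinarith
  omega

set_option maxHeartbeats 1000000
/-- Comparison of the two upper bounds for the `q`-energy of tight frames: for `q ∈ [1,2)`
the moment bound is larger for `d < N < M`, smaller for `N > M`, equal at `N = M`, and the
two bounds agree for all `N > d` when `q = 2`. Here `M = d(d+1)/2`. -/
theorem compare_energy_bounds (d : ℕ) (hd : 2 ≤ d)
    (q : ℝ) (hq1 : 1 ≤ q) (hq2 : q < 2) :
    (∀ N : ℕ, d < N → N < d * (d + 1) / 2 →
      welchEnergyBound d N q < momentEnergyBound d N q) ∧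
    (∀ N : ℕ, d * (d + 1) / 2 < N →
      momentEnergyBound d N q < welchEnergyBound d N q) ∧
    momentEnergyBound d (d * (d + 1) / 2) q = welchEnergyBound d (d * (d + 1) / 2) q ∧
    (∀ N : ℕ, d < N → momentEnergyBound d N 2 = welchEnergyBound d N 2) := by
  have hd2 : (2:ℝ) ≤ (d:ℝ) := by exact_mod_cast hd
  set m : ℝ := (d:ℝ)*((d:ℝ)+1)/2 with hmdef
  have hm3 : (3:ℝ) ≤ m := by nlinarith
  have hm0 : m ≠ 0 := by positivity
  have ht0 : 0 < q/2 := by linarith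
  have ht1 : q/2 < 1 := by linarith
  have ha0 : (0:ℝ) < 1/((d:ℝ)+2) := by positivity
  have ha1 : 1/((d:ℝ)+2) < 1 := by
    rw [div_lt_one (by linarith)]; linarith
  -- common facts for a given N with d < N
  have core : ∀ N : ℕ, d < N →
      (((N:ℝ) < m → welchEnergyBound d N q < momentEnergyBound d N q) ∧
       (m < (N:ℝ) → momentEnergyBound d N q < welchEnergyBound d N q)) := by
    intro N hN
    have hn : (d:ℝ) + 1 ≤ (N:ℝ) := by exact_mod_cast hN
    set n : ℝ := (N:ℝ) with hndef
    have hn3 : (3:ℝ) ≤ n := by linarith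
    set x : ℝ := (n - d) / ((d:ℝ) * (n - 1)) with hxdef
    have hden : (0:ℝ) < (d:ℝ) * (n - 1) :=
      mul_pos (by linarith) (by linarith)
    have hx0 : 0 ≤ x := by
      apply div_nonneg _ hden.le; linarith
    have hx1 : x < 1 := by
      rw [div_lt_one hden]
      have h2 : 2*(n-1) ≤ (d:ℝ)*(n-1) := mul_le_mul_of_nonneg_right hd2 (by linarith)
      linarith
    set A : ℝ := n^2 * (m - 1) / m with hAdef
    set B : ℝ := n * (n - m) / m with hBdef
    set C : ℝ := n^2 - n with hCdef
    have hA : 0 < A :=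
      div_pos (mul_pos (by positivity) (by linarith)) (by linarith)
    have hC : 0 < C := by
      have h2 : 0 < n*(n-1) := mul_pos (by linarith) (by linarith)
      rw [hCdef]; nlinarith
    have hAB : A + B = C := by
      rw [hAdef, hBdef, hCdef]; field_simp; ring
    have hI : C * x = A * (1/((d:ℝ)+2)) + B * 1 := by
      rw [hAdef, hBdef, hCdef, hxdef, hmdef]
      have hn1 : n - 1 ≠ 0 := by linarith
      field_simp
      ring
    have hM : momentEnergyBound d N q = A * (1/((d:ℝ)+2)) ^ (q/2) + B := by
      rw [moment_formula d N hd q, hAdef, hBdef]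
    have hW : welchEnergyBound d N q = C * x ^ (q/2) := by
      rw [welchEnergyBound, hCdef, hxdef]
    constructor
    · intro hNm
      have hB : 0 < -B := by
        rw [hBdef]
        have : n * (n - m) < 0 :=
          mul_neg_of_pos_of_neg (by linarith) (by linarith)
        have := div_neg_of_neg_of_pos this (show (0:ℝ) < m by positivity)
        linarith
      have hw : A * (1/((d:ℝ)+2)) = C * x + (-B) * 1 := by linarith
      have key := concave_combo ht0 ht1 hx0 zero_le_one (ne_of_lt hx1)
        hC hB (show C + -B = A by linarith) hw
      rw [Real.one_rpow] at key
      rw [hM, hW]; linarith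
    · intro hNm
      have hB : 0 < B := by
        rw [hBdef]
        exact div_pos (mul_pos (by linarith) (by linarith)) (by linarith)
      have key := concave_combo ht0 ht1 ha0.le zero_le_one (ne_of_lt ha1)
        hA hB hAB hI
      rw [Real.one_rpow] at key
      rw [hM, hW]; linarith
  refine ⟨?_, ?_, ?_, ?_⟩
  · intro N hN1 hN2
    have hc : ((d * (d + 1) / 2 : ℕ):ℝ) = m := by rw [hmdef]; exact cast_M d
    exact (core N hN1).1 (by rw [← hc]; exact_mod_cast hN2)
  · intro N hN
    have hdN : d < N := lt_trans (d_lt_M d hd) hN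
    have hc : ((d * (d + 1) / 2 : ℕ):ℝ) = m := by rw [hmdef]; exact cast_M d
    exact (core N hdN).2 (by rw [← hc]; exact_mod_cast hN)
  · -- equality at N = M
    set N := d * (d + 1) / 2 with hNdef
    have hcast : ((N:ℕ):ℝ) = m := cast_M d
    have hxa : ((N:ℝ) - d) / ((d:ℝ) * ((N:ℝ) - 1)) = 1/((d:ℝ)+2) := by
      rw [hcast, hmdef]
      rw [div_eq_div_iff (by nlinarith) (by linarith)]
      ring
    rw [moment_formula d N hd q, welchEnergyBound, hxa, hcast, ← hmdef]
    have e2 : m^2*(m-1)/m = m^2 - m := by field_simp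
    rw [sub_self m]
    rw [e2]
    simp
  · intro N hN
    have hn : (d:ℝ) + 1 ≤ (N:ℝ) := by exact_mod_cast hN
    have hs : Real.sqrt (1/((d:ℝ)+2)) ^ (2:ℝ) = 1/((d:ℝ)+2) := by
      rw [Real.sqrt_eq_rpow, ← Real.rpow_mul ha0.le]
      norm_num
    have hx2 : (((N:ℝ) - d) / ((d:ℝ) * ((N:ℝ) - 1))) ^ ((2:ℝ)/2)
        = ((N:ℝ) - d) / ((d:ℝ) * ((N:ℝ) - 1)) := by
      norm_num
    rw [momentEnergyBound, welchEnergyBound, hs, hx2]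
    have h1 : (d:ℝ) ≠ 0 := by linarith
    have h2 : (N:ℝ) - 1 ≠ 0 := by intro h; nlinarith
    have h3 : (d:ℝ) + 2 ≠ 0 := by linarith
    field_simp
    ring
end

section
/- Let y_1, ..., y_N be vectors in ℝ^d with N ≥ 2 forming a tight frame with frame constant N/d, i.e. Σ_{i=1}^N y_i y_iᵀ = (N/d) I_d. Then for all i ≠ j, |⟨y_i, y_j⟩| ≤ N/(2d). -/
/-- The `∞`-moment bound: for a tight frame of `N ≥ 2` vectors in `ℝ^d` with frame constant
`N/d`, all off-diagonal inner products satisfy `|⟨y_i, y_j⟩| ≤ N/(2d)`. -/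
theorem infty_moment_tight_frame (d N : ℕ) (hN : 2 ≤ N)
    (y : Fin N → EuclideanSpace ℝ (Fin d))
    (htf : ∑ i, Matrix.of (fun a b => y i a * y i b)
      = ((N : ℝ) / d) • (1 : Matrix (Fin d) (Fin d) ℝ)) :
    ∀ i j, i ≠ j → |(inner ℝ (y i) (y j) : ℝ)| ≤ (N : ℝ) / (2 * d) := by
  intro i j hij
  set M : ℝ := (N : ℝ) / d with hMdef
  have hent : ∀ a b, (∑ k, y k a * y k b) = M * (if a = b then 1 else 0) := by
    intro a b
    have h := congrFun (congrFun htf a) b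
    simpa [Matrix.sum_apply, Matrix.one_apply, Matrix.smul_apply] using h
  have hinner : ∀ k, (inner ℝ (y i) (y k) : ℝ) = ∑ a, y i a * y k a := by
    intro k
    simp [PiLp.inner_apply, RCLike.inner_apply, conj_trivial, mul_comm]
  set t : ℝ := ∑ a, (y i a) ^ 2 with htdef
  have ht0 : 0 ≤ t := Finset.sum_nonneg fun a _ => sq_nonneg _
  have hii : (inner ℝ (y i) (y i) : ℝ) = t := by
    rw [hinner i]; exact Finset.sum_congr rfl fun a _ => (sq (y i a)).symm
  have hkey : ∑ k, (inner ℝ (y i) (y k) : ℝ) ^ 2 = M * t := by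
    have h1 : ∀ k, (inner ℝ (y i) (y k) : ℝ) ^ 2
        = ∑ a, ∑ b, y i a * y i b * (y k a * y k b) := by
      intro k
      rw [sq, hinner k, Finset.sum_mul_sum]
      exact Finset.sum_congr rfl fun a _ => Finset.sum_congr rfl fun b _ => by ring
    calc ∑ k, (inner ℝ (y i) (y k) : ℝ) ^ 2
        = ∑ k, ∑ a, ∑ b, y i a * y i b * (y k a * y k b) :=
          Finset.sum_congr rfl fun k _ => h1 k
      _ = ∑ a, ∑ b, ∑ k, y i a * y i b * (y k a * y k b) := by
          rw [Finset.sum_comm]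
          exact Finset.sum_congr rfl fun a _ => Finset.sum_comm
      _ = ∑ a, ∑ b, y i a * y i b * (M * (if a = b then 1 else 0)) := by
          refine Finset.sum_congr rfl fun a _ => Finset.sum_congr rfl fun b _ => ?_
          rw [← Finset.mul_sum, hent a b]
      _ = M * t := by
          simp [Finset.mul_sum, htdef]
          exact Finset.sum_congr rfl fun a _ => by ring
  set c : ℝ := (inner ℝ (y i) (y j) : ℝ) with hcdef
  have hsum2 : t ^ 2 + c ^ 2 ≤ M * t := by
    have hsub : ({i, j} : Finset (Fin N)) ⊆ Finset.univ := Finset.subset_univ _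
    have hle : ∑ k ∈ ({i, j} : Finset (Fin N)), (inner ℝ (y i) (y k) : ℝ) ^ 2
        ≤ ∑ k, (inner ℝ (y i) (y k) : ℝ) ^ 2 :=
      Finset.sum_le_sum_of_subset_of_nonneg hsub fun k _ _ => sq_nonneg _
    rw [Finset.sum_pair hij, hii] at hle
    rw [hkey] at hle
    exact hle
  have hM0 : 0 ≤ M := by positivity
  have hgoal : (N : ℝ) / (2 * d) = M / 2 := by
    rw [hMdef, div_div, mul_comm]
  rw [hgoal]
  have hsq : c ^ 2 ≤ (M / 2) ^ 2 := by nlinarith [sq_nonneg (2 * t - M)]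
  rw [abs_le]
  constructor <;> nlinarith [sq_nonneg (c - M / 2), sq_nonneg (c + M / 2)]
end

section
/- Let A be a real N×N matrix of rank d with 0 < d < N and A_{ii} = 1 for all i, and let p, q ∈ (1, ∞) satisfy 1/p + 1/q = 1. Then there exist vectors y_1, ..., y_N in ℝ^{N-d} forming a tight frame with frame constant N/(N-d), i.e. Σ_{i=1}^N y_i y_iᵀ = (N/(N-d)) I_{N-d}, such that (Σ_{i ≠ j} |A_{ij}|^p)^{1/p} · (Σ_{i ≠ j} |⟨y_i, y_j⟩|^q)^{1/q} ≥ N. -/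
/-- Bukh–Cox duality: for a real `N×N` matrix of rank `d` with unit diagonal, there is a
tight frame of `N` vectors in `ℝ^{N-d}` with frame constant `N/(N-d)` such that the product of
the `ℓ^p`-energy of `A` and the `ℓ^q`-energy of the frame is at least `N`. -/
theorem dual_tight_frame_holder (N d : ℕ) (hd : 0 < d) (hdN : d < N)
    (A : Matrix (Fin N) (Fin N) ℝ) (hrank : A.rank = d)
    (hdiag : ∀ i, A i i = 1)
    (p q : ℝ) (hp : 1 < p) (hq : 1 < q) (hpq : 1 / p + 1 / q = 1) :
    ∃ y : Fin N → EuclideanSpace ℝ (Fin (N - d)),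
      (∑ i, Matrix.of (fun a b => y i a * y i b)
        = ((N : ℝ) / ((N : ℝ) - d)) • (1 : Matrix (Fin (N - d)) (Fin (N - d)) ℝ)) ∧
      (N : ℝ) ≤ (∑ i, ∑ j, if i = j then 0 else |A i j| ^ p) ^ (1 / p)
        * (∑ i, ∑ j, if i = j then 0 else |(inner ℝ (y i) (y j) : ℝ)| ^ q) ^ (1 / q) := by
  classical
  have hNd : (0:ℝ) < (N:ℝ) - d := by
    have : (d:ℝ) < N := by exact_mod_cast hdN
    linarith
  have hcast : ((N - d : ℕ) : ℝ) = (N:ℝ) - d := by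
    rw [Nat.cast_sub hdN.le]
  -- the kernel of A as a submodule of Euclidean space
  let L : EuclideanSpace ℝ (Fin N) →ₗ[ℝ] EuclideanSpace ℝ (Fin N) := Matrix.toEuclideanLin A
  let K : Submodule ℝ (EuclideanSpace ℝ (Fin N)) := LinearMap.ker L
  have hker : Module.finrank ℝ K = N - d := by
    have h1 : Module.finrank ℝ (LinearMap.range L) + Module.finrank ℝ K = N := by
      have := LinearMap.finrank_range_add_finrank_ker L
      simpa using this
    have h2 : Module.finrank ℝ (LinearMap.range L) = d := by
      rw [Matrix.rank_eq_finrank_range_toLin A (EuclideanSpace.basisFun (Fin N) ℝ).toBasis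
        (EuclideanSpace.basisFun (Fin N) ℝ).toBasis] at hrank
      rw [← hrank, ← Matrix.toEuclideanLin_eq_toLin_orthonormal]
    omega
  -- an orthonormal basis of the kernel
  let b : OrthonormalBasis (Fin (N - d)) ℝ K :=
    (stdOrthonormalBasis ℝ K).reindex (finCongr (by rw [hker]))
  let c : Fin (N - d) → EuclideanSpace ℝ (Fin N) := fun a => (b a : EuclideanSpace ℝ (Fin N))
  have horth : ∀ a a', (∑ i, c a i * c a' i) = if a = a' then 1 else 0 := by
    intro a a'
    have h := (orthonormal_iff_ite.mp b.orthonormal) a a'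
    have h2 : (inner ℝ (c a) (c a') : ℝ) = if a = a' then 1 else 0 := by
      show (inner ℝ ((b a : EuclideanSpace ℝ (Fin N))) ((b a' : EuclideanSpace ℝ (Fin N))) : ℝ) = _
      rw [← Submodule.coe_inner]
      exact h
    rw [← h2]
    simp [PiLp.inner_apply, RCLike.inner_apply, conj_trivial]
    exact Finset.sum_congr rfl fun _ _ => mul_comm _ _
  have hker0 : ∀ a i, (∑ j, A i j * c a j) = 0 := by
    intro a i
    have hm : A.mulVec (c a) = 0 := by
      have := LinearMap.mem_ker.mp (b a).2
      exact congrArg WithLp.ofLp this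
    simpa [Matrix.mulVec, dotProduct] using congrFun hm i
  set s : ℝ := Real.sqrt ((N:ℝ) / ((N:ℝ) - d)) with hs
  have hs2 : s * s = (N:ℝ) / ((N:ℝ) - d) := Real.mul_self_sqrt (by positivity)
  -- the frame vectors
  set y : Fin N → EuclideanSpace ℝ (Fin (N - d)) := fun i => WithLp.toLp 2 (fun a => s * c a i) with hy
  have hyapp : ∀ i a, y i a = s * c a i := fun i a => rfl
  have hg : ∀ i j, (inner ℝ (y i) (y j) : ℝ) = (s * s) * ∑ a, c a i * c a j := by
    intro i j
    simp only [PiLp.inner_apply, RCLike.inner_apply, conj_trivial, hyapp]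
    rw [Finset.mul_sum]
    exact Finset.sum_congr rfl fun a _ => by ring
  refine ⟨y, ?_, ?_⟩
  · -- tight frame condition
    ext a a'
    simp only [Matrix.sum_apply, Matrix.of_apply, Matrix.smul_apply, smul_eq_mul, hyapp]
    have step : ∑ i, (s * c a i) * (s * c a' i) = (s * s) * ∑ i, c a i * c a' i := by
      rw [Finset.mul_sum]; exact Finset.sum_congr rfl fun i _ => by ring
    rw [step, horth, hs2, Matrix.one_apply]
  · -- Hölder inequality part
    -- total bilinear sum vanishes
    have hsum0 : ∑ i, ∑ j, A i j * (inner ℝ (y i) (y j) : ℝ) = 0 := by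
      have hrow : ∀ i, ∑ j, A i j * (inner ℝ (y i) (y j) : ℝ)
          = ∑ a, (s * s) * c a i * (∑ j, A i j * c a j) := by
        intro i
        have hterm : ∀ j, A i j * (inner ℝ (y i) (y j) : ℝ)
            = ∑ a, (s * s) * c a i * (A i j * c a j) := by
          intro j
          rw [hg, Finset.mul_sum, Finset.mul_sum]
          exact Finset.sum_congr rfl fun a _ => by ring
        rw [Finset.sum_congr rfl fun j _ => hterm j, Finset.sum_comm]
        exact Finset.sum_congr rfl fun a _ => by rw [Finset.mul_sum]
      calc ∑ i, ∑ j, A i j * (inner ℝ (y i) (y j) : ℝ)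
          = ∑ i, ∑ a, (s * s) * c a i * (∑ j, A i j * c a j) :=
            Finset.sum_congr rfl fun i _ => hrow i
        _ = 0 := by simp [hker0]
    -- diagonal sum equals N
    have hdsum : ∑ i, A i i * (inner ℝ (y i) (y i) : ℝ) = N := by
      have h1 : ∀ i, A i i * (inner ℝ (y i) (y i) : ℝ) = (s * s) * ∑ a, c a i * c a i := by
        intro i; rw [hdiag, one_mul, hg]
      rw [Finset.sum_congr rfl fun i _ => h1 i, ← Finset.mul_sum, Finset.sum_comm]
      have h2 : ∀ a : Fin (N - d), (∑ i, c a i * c a i) = 1 := by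
        intro a; rw [horth a a]; simp
      rw [Finset.sum_congr rfl fun a _ => h2 a]
      simp only [Finset.sum_const, Finset.card_univ, Fintype.card_fin, nsmul_eq_mul, mul_one]
      rw [hs2, hcast]
      field_simp
    -- off-diagonal sum equals -N
    have hoff : ∑ i, ∑ j, (if i = j then 0 else A i j * (inner ℝ (y i) (y j) : ℝ)) = -(N:ℝ) := by
      have hsplit : ∀ i, ∑ j, (if i = j then 0 else A i j * (inner ℝ (y i) (y j) : ℝ))
          = (∑ j, A i j * (inner ℝ (y i) (y j) : ℝ)) - A i i * (inner ℝ (y i) (y i) : ℝ) := by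
        intro i
        have h0 : ∑ j, (if i = j then A i j * (inner ℝ (y i) (y j) : ℝ) else 0)
            = A i i * (inner ℝ (y i) (y i) : ℝ) := by simp
        have h1 : ∀ j, (if i = j then 0 else A i j * (inner ℝ (y i) (y j) : ℝ))
            = A i j * (inner ℝ (y i) (y j) : ℝ)
              - (if i = j then A i j * (inner ℝ (y i) (y j) : ℝ) else 0) := by
          intro j; by_cases h : i = j <;> simp [h]
        rw [Finset.sum_congr rfl fun j _ => h1 j, Finset.sum_sub_distrib, h0]
      rw [Finset.sum_congr rfl fun i _ => hsplit i, Finset.sum_sub_distrib, hsum0, hdsum]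
      ring
    -- lower bound for the mixed absolute sum
    have hlow : (N:ℝ) ≤ ∑ i, ∑ j,
        (if i = j then 0 else |A i j|) * (if i = j then 0 else |(inner ℝ (y i) (y j) : ℝ)|) := by
      have h1 : (N:ℝ) = |∑ i, ∑ j, (if i = j then 0 else A i j * (inner ℝ (y i) (y j) : ℝ))| := by
        rw [hoff, abs_neg, abs_of_nonneg (by positivity : (0:ℝ) ≤ (N:ℝ))]
      rw [h1]
      calc |∑ i, ∑ j, (if i = j then 0 else A i j * (inner ℝ (y i) (y j) : ℝ))|
          ≤ ∑ i, |∑ j, (if i = j then 0 else A i j * (inner ℝ (y i) (y j) : ℝ))| :=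
            Finset.abs_sum_le_sum_abs _ _
        _ ≤ ∑ i, ∑ j, |if i = j then 0 else A i j * (inner ℝ (y i) (y j) : ℝ)| :=
            Finset.sum_le_sum fun i _ => Finset.abs_sum_le_sum_abs _ _
        _ = ∑ i, ∑ j, (if i = j then 0 else |A i j|)
              * (if i = j then 0 else |(inner ℝ (y i) (y j) : ℝ)|) := by
            refine Finset.sum_congr rfl fun i _ => Finset.sum_congr rfl fun j _ => ?_
            by_cases h : i = j <;> simp [h, abs_mul]
    -- Hölder
    have hc : Real.HolderConjugate p q := Real.holderConjugate_iff.mpr ⟨hp, by rwa [← one_div, ← one_div]⟩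
    have hHolder := Real.inner_le_Lp_mul_Lq (Finset.univ : Finset (Fin N × Fin N))
      (fun z => if z.1 = z.2 then 0 else |A z.1 z.2|)
      (fun z => if z.1 = z.2 then 0 else |(inner ℝ (y z.1) (y z.2) : ℝ)|) hc
    rw [Fintype.sum_prod_type, Fintype.sum_prod_type, Fintype.sum_prod_type] at hHolder
    have hp0 : p ≠ 0 := by positivity
    have hq0 : q ≠ 0 := by positivity
    have e1 : ∀ i j : Fin N, (abs (if i = j then (0:ℝ) else |A i j|)) ^ p
        = if i = j then 0 else |A i j| ^ p := by
      intro i j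
      by_cases h : i = j <;> simp [h, Real.zero_rpow hp0]
    have e2 : ∀ i j : Fin N, (abs (if i = j then (0:ℝ)
          else |(inner ℝ (y i) (y j) : ℝ)|)) ^ q
        = if i = j then 0 else |(inner ℝ (y i) (y j) : ℝ)| ^ q := by
      intro i j
      by_cases h : i = j <;> simp [h, Real.zero_rpow hq0]
    simp only [e1, e2] at hHolder
    exact le_trans hlow hHolder
end

section
/- Let p ≥ 2 and let A be a real N×N matrix of rank d with 0 < d < N and A_{ii} = 1 for all i. Then (Σ_{i ≠ j} |A_{ij}|^p)^{1/p} ≥ (N(N-1))^{1/p} · ((N - d)/(d(N - 1)))^{1/2}. -/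
open Finset Module Matrix

private lemma scalar_key_welch {N n : ℕ} (g : Fin n → Fin N → ℝ) (c : Fin N → Fin n → ℝ)
    (horth : ∀ k l, ∑ i, g k i * g l i = if k = l then 1 else 0)
    (A : Matrix (Fin N) (Fin N) ℝ)
    (hA : ∀ i j, A i j = ∑ k, c j k * g k i) :
    (∑ i, A i i) ^ 2 ≤ (n : ℝ) * ∑ i, ∑ j, A i j ^ 2 := by
  set t : Fin n → ℝ := fun k => ∑ i, g k i * c i k with ht
  have hAsq : ∀ j, ∑ i, A i j ^ 2 = ∑ k, c j k ^ 2 := by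
    intro j
    have h1 : ∀ i : Fin N, A i j ^ 2 = ∑ k, ∑ l, c j k * c j l * (g k i * g l i) := by
      intro i
      rw [hA, sq, Finset.sum_mul_sum]
      refine Finset.sum_congr rfl fun k _ => Finset.sum_congr rfl fun l _ => by ring
    calc ∑ i, A i j ^ 2 = ∑ i, ∑ k, ∑ l, c j k * c j l * (g k i * g l i) :=
            Finset.sum_congr rfl fun i _ => h1 i
      _ = ∑ k, ∑ l, c j k * c j l * ∑ i, g k i * g l i := by
            rw [Finset.sum_comm]
            refine Finset.sum_congr rfl fun k _ => ?_
            rw [Finset.sum_comm]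
            refine Finset.sum_congr rfl fun l _ => ?_
            rw [Finset.mul_sum]
      _ = ∑ k, c j k ^ 2 := by
            simp_rw [horth]
            simp [sq]
  have htr : ∑ i, A i i = ∑ k, t k := by
    simp_rw [ht, hA]
    rw [Finset.sum_comm]
    exact Finset.sum_congr rfl fun k _ => Finset.sum_congr rfl fun i _ => by ring
  have hcs1 : (∑ k, t k) ^ 2 ≤ (n : ℝ) * ∑ k, t k ^ 2 := by
    simpa using sq_sum_le_card_mul_sum_sq (s := (univ : Finset (Fin n))) (f := t)
  have hcs2 : ∀ k, t k ^ 2 ≤ ∑ i, c i k ^ 2 := by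
    intro k
    have := Finset.sum_mul_sq_le_sq_mul_sq univ (fun i => g k i) (fun i => c i k)
    have hg1 : ∑ i, g k i ^ 2 = 1 := by
      have := horth k k; simpa [sq] using this
    simpa [hg1] using this
  calc (∑ i, A i i) ^ 2 = (∑ k, t k) ^ 2 := by rw [htr]
    _ ≤ (n : ℝ) * ∑ k, t k ^ 2 := hcs1
    _ ≤ (n : ℝ) * ∑ k, ∑ i, c i k ^ 2 := by
        have : ∑ k, t k ^ 2 ≤ ∑ k, ∑ i, c i k ^ 2 := Finset.sum_le_sum fun k _ => hcs2 k
        exact mul_le_mul_of_nonneg_left this n.cast_nonneg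
    _ = (n : ℝ) * ∑ i, ∑ k, c i k ^ 2 := by rw [Finset.sum_comm]
    _ = (n : ℝ) * ∑ j, ∑ i, A i j ^ 2 := by
        congr 1
        exact Finset.sum_congr rfl fun j _ => (hAsq j).symm
    _ = (n : ℝ) * ∑ i, ∑ j, A i j ^ 2 := by rw [Finset.sum_comm]

private lemma trace_sq_le_rank_welch {N : ℕ} (A : Matrix (Fin N) (Fin N) ℝ) :
    (∑ i, A i i) ^ 2 ≤ (A.rank : ℝ) * ∑ i, ∑ j, A i j ^ 2 := by
  classical
  let e : (Fin N → ℝ) ≃ₗ[ℝ] EuclideanSpace ℝ (Fin N) := (WithLp.linearEquiv 2 ℝ (Fin N → ℝ)).symm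
  let V : Submodule ℝ (EuclideanSpace ℝ (Fin N)) := (Submodule.span ℝ (Set.range Aᵀ)).map (e : (Fin N → ℝ) →ₗ[ℝ] EuclideanSpace ℝ (Fin N))
  have hV : finrank ℝ V = A.rank := by
    rw [Matrix.rank_eq_finrank_span_cols]
    exact LinearEquiv.finrank_map_eq e _
  let b := stdOrthonormalBasis ℝ V
  let g : Fin (finrank ℝ V) → Fin N → ℝ := fun k i => (b k : EuclideanSpace ℝ (Fin N)) i
  have hmem : ∀ j, e (Aᵀ j) ∈ V :=
    fun j => Submodule.mem_map_of_mem (Submodule.subset_span ⟨j, rfl⟩)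
  let v : Fin N → V := fun j => ⟨e (Aᵀ j), hmem j⟩
  let c : Fin N → Fin (finrank ℝ V) → ℝ := fun j k => b.repr (v j) k
  have horth : ∀ k l, ∑ i, g k i * g l i = if k = l then 1 else 0 := by
    intro k l
    have h := orthonormal_iff_ite.mp b.orthonormal k l
    rw [Submodule.coe_inner] at h
    rw [← h, PiLp.inner_apply]
    simp [RCLike.inner_apply, g]
    exact Finset.sum_congr rfl fun _ _ => mul_comm _ _
  have hrepr : ∀ j, ((v j : EuclideanSpace ℝ (Fin N)))
      = ∑ k, c j k • (b k : EuclideanSpace ℝ (Fin N)) := by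
    intro j
    conv_lhs => rw [← b.sum_repr (v j)]
    push_cast
    rfl
  have hA : ∀ i j, A i j = ∑ k, c j k * g k i := by
    intro i j
    have h0 : A i j = (v j : EuclideanSpace ℝ (Fin N)) i := rfl
    rw [h0, hrepr j]
    rw [show ((∑ k, c j k • (b k : EuclideanSpace ℝ (Fin N))) i)
        = ∑ k, (c j k • (b k : EuclideanSpace ℝ (Fin N))) i by rw [WithLp.ofLp_sum, Finset.sum_apply]]
    simp [g, smul_eq_mul]
  have := scalar_key_welch g c horth A hA
  rwa [hV] at this

/-- Lower bound for the `p`-frame energy (`p ≥ 2`) of a real `N×N` matrix of rank `d` with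
unit diagonal: `(Σ_{i≠j} |A_{ij}|^p)^{1/p} ≥ (N(N-1))^{1/p}·((N-d)/(d(N-1)))^{1/2}`. -/
theorem p_frame_energy_welch_lower_bound (N d : ℕ) (hd : 0 < d) (hdN : d < N)
    (p : ℝ) (hp : 2 ≤ p)
    (A : Matrix (Fin N) (Fin N) ℝ) (hrank : A.rank = d)
    (hdiag : ∀ i, A i i = 1) :
    ((N : ℝ) * ((N : ℝ) - 1)) ^ (1 / p)
        * Real.sqrt (((N : ℝ) - d) / ((d : ℝ) * ((N : ℝ) - 1)))
      ≤ (∑ i, ∑ j, if i = j then 0 else |A i j| ^ p) ^ (1 / p) := by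
  classical
  have hN2 : 2 ≤ N := lt_of_le_of_lt hd hdN
  have hdR : (0:ℝ) < d := by exact_mod_cast hd
  have hNd : (d:ℝ) < N := by exact_mod_cast hdN
  have hN1 : (1:ℝ) ≤ (N:ℝ) - 1 := by
    have : (2:ℝ) ≤ N := by exact_mod_cast hN2
    linarith
  have hp0 : (0:ℝ) < p := by linarith
  set s : Finset (Fin N × Fin N) := Finset.univ.offDiag with hs
  have hsfilter : Finset.filter (fun x : Fin N × Fin N => ¬ x.1 = x.2) (univ ×ˢ univ) = s := by
    ext x; simp [hs, Finset.mem_offDiag]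
  set M : ℝ := (N:ℝ) * ((N:ℝ) - 1) with hM
  have hM0 : 0 < M := by nlinarith
  have hcard : (s.card : ℝ) = M := by
    rw [hs, Finset.offDiag_card]
    simp only [Finset.card_univ, Fintype.card_fin]
    have h1 : N ≤ N * N := Nat.le_mul_of_pos_left N (by omega)
    rw [Nat.cast_sub h1]
    push_cast
    rw [hM]; ring
  have hsum : ∀ f : Fin N → Fin N → ℝ,
      (∑ i, ∑ j, if i = j then 0 else f i j) = ∑ x ∈ s, f x.1 x.2 := by
    intro f
    rw [← hsfilter, Finset.sum_filter, ← Finset.sum_product']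
    exact Finset.sum_congr rfl fun x _ => by by_cases h : x.1 = x.2 <;> simp [h]
  set S2 : ℝ := ∑ i, ∑ j, A i j ^ 2 with hS2
  have hkey : (N:ℝ)^2 ≤ (d:ℝ) * S2 := by
    have h := trace_sq_le_rank_welch A
    rw [hrank] at h
    simpa [hdiag] using h
  set Q : ℝ := ∑ x ∈ s, A x.1 x.2 ^ 2 with hQdef
  have hQ : S2 = (N:ℝ) + Q := by
    have h1 : ∀ i, (∑ j, A i j ^ 2) = 1 + ∑ j, if i = j then 0 else A i j ^ 2 := by
      intro i
      have h2 : ∀ j, A i j ^ 2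
          = (if i = j then A i j ^ 2 else 0) + (if i = j then 0 else A i j ^ 2) :=
        fun j => by by_cases h : i = j <;> simp [h]
      calc ∑ j, A i j ^ 2
          = ∑ j, ((if i = j then A i j ^ 2 else 0) + (if i = j then 0 else A i j ^ 2)) :=
            Finset.sum_congr rfl fun j _ => h2 j
        _ = (∑ j, if i = j then A i j ^ 2 else 0) + ∑ j, if i = j then 0 else A i j ^ 2 :=
            Finset.sum_add_distrib
        _ = 1 + ∑ j, if i = j then 0 else A i j ^ 2 := by
            rw [Finset.sum_ite_eq]; simp [hdiag]
    calc S2 = ∑ i, (1 + ∑ j, if i = j then 0 else A i j ^ 2) :=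
          Finset.sum_congr rfl fun i _ => h1 i
      _ = (N:ℝ) + ∑ i, ∑ j, (if i = j then 0 else A i j ^ 2) := by
          rw [Finset.sum_add_distrib]; simp
      _ = (N:ℝ) + Q := by rw [hsum fun i j => A i j ^ 2]
  have hQge : (N:ℝ) * ((N:ℝ) - (d:ℝ)) / (d:ℝ) ≤ Q := by
    rw [div_le_iff₀ hdR]
    nlinarith [hkey, hQ]
  set c : ℝ := ((N:ℝ) - d) / ((d:ℝ) * ((N:ℝ) - 1)) with hc
  have hc0 : 0 ≤ c := by
    apply div_nonneg <;> nlinarith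
  have hMc : M * c ≤ Q := by
    have h : M * c = (N:ℝ) * ((N:ℝ) - (d:ℝ)) / (d:ℝ) := by
      rw [hM, hc]; field_simp
    rw [h]; exact hQge
  set E : ℝ := ∑ x ∈ s, |A x.1 x.2| ^ p with hE
  have habs : ∀ x : ℝ, (x ^ 2 : ℝ) ^ (p/2) = |x| ^ p := by
    intro x
    rw [← sq_abs, ← Real.rpow_natCast |x| 2, ← Real.rpow_mul (abs_nonneg x)]
    congr 1
    push_cast
    ring
  have hQnonneg : 0 ≤ Q := Finset.sum_nonneg fun x _ => sq_nonneg _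
  have hjensen : M * (Q / M) ^ (p/2) ≤ E := by
    have hw : ∀ x ∈ s, (0:ℝ) ≤ 1 / M := fun x _ => by positivity
    have hw' : ∑ _x ∈ s, (1:ℝ) / M = 1 := by
      rw [Finset.sum_const, nsmul_eq_mul, hcard]
      field_simp
    have hz : ∀ x ∈ s, (0:ℝ) ≤ A x.1 x.2 ^ 2 := fun x _ => sq_nonneg _
    have hp2 : (1:ℝ) ≤ p / 2 := by linarith
    have h := Real.rpow_arith_mean_le_arith_mean_rpow s (fun _ => 1 / M)
      (fun x => A x.1 x.2 ^ 2) hw hw' hz hp2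
    have hL : (∑ x ∈ s, 1 / M * A x.1 x.2 ^ 2) = Q / M := by
      rw [← Finset.mul_sum, ← hQdef]; ring
    have hR : (∑ x ∈ s, 1 / M * (A x.1 x.2 ^ 2) ^ (p/2)) = E / M := by
      rw [← Finset.mul_sum]
      rw [Finset.sum_congr rfl fun x _ => habs (A x.1 x.2), ← hE]
      ring
    rw [hL, hR] at h
    rw [← le_div_iff₀' hM0]
    exact h
  have hfinal : M * c ^ (p/2) ≤ E := by
    refine le_trans ?_ hjensen
    have hcQ : c ≤ Q / M := by
      rw [le_div_iff₀ hM0]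
      linarith [hMc]
    have := Real.rpow_le_rpow hc0 hcQ (by linarith : (0:ℝ) ≤ p/2)
    exact mul_le_mul_of_nonneg_left this hM0.le
  have hEnonneg : 0 ≤ M * c ^ (p/2) := by positivity
  have hstep := Real.rpow_le_rpow hEnonneg hfinal (by positivity : (0:ℝ) ≤ 1/p)
  have hLHS : (M * c ^ (p/2)) ^ (1/p) = M ^ (1/p) * Real.sqrt c := by
    rw [Real.mul_rpow hM0.le (Real.rpow_nonneg hc0 _), ← Real.rpow_mul hc0]
    have : p / 2 * (1/p) = 1/2 := by field_simp
    rw [this, Real.sqrt_eq_rpow]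
  rw [hsum fun i j => |A i j| ^ p, ← hE, ← hLHS]
  exact hstep
end

section
/- Let A be a real N×N matrix of rank d with 0 < d ≤ N and A_{ii} = 1 for all i. Then Σ_{i ≠ j} |A_{ij}| ≥ 2(N - d). -/
open Matrix Module Submodule Finset

/-- The rank of a complexified real matrix is at most the real rank. -/
lemma rank_complexify_le {N : ℕ} (A : Matrix (Fin N) (Fin N) ℝ) :
    (A.map (fun x => (x : ℂ))).rank ≤ A.rank := by
  classical
  set Ac := A.map (fun x => (x : ℂ)) with hAc
  set V : Submodule ℝ (Fin N → ℝ) := Submodule.span ℝ (Set.range Aᵀ) with hV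
  have hdim : finrank ℝ V = A.rank := (Matrix.rank_eq_finrank_span_cols A).symm
  let bV : Basis (Fin (finrank ℝ V)) ℝ V := Module.finBasis ℝ V
  let f : (Fin N → ℝ) →ₗ[ℝ] (Fin N → ℂ) :=
    LinearMap.compLeft Complex.ofRealAm.toLinearMap (Fin N)
  let w : Fin (finrank ℝ V) → (Fin N → ℂ) := fun i => f (bV i)
  have key : ∀ x ∈ V, f x ∈ Submodule.span ℂ (Set.range w) := by
    intro x hx
    have hx2 : x = ∑ i, bV.repr ⟨x, hx⟩ i • ((bV i : Fin N → ℝ)) := by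
      have h := bV.sum_repr ⟨x, hx⟩
      have := congrArg (Submodule.subtype V) h
      simpa only [map_sum, Submodule.subtype_apply, Submodule.coe_smul] using this.symm
    rw [hx2, map_sum]
    refine Submodule.sum_mem _ fun i _ => ?_
    rw [LinearMap.map_smul, ← algebraMap_smul ℂ (bV.repr ⟨x, hx⟩ i) (f (bV i))]
    exact Submodule.smul_mem _ _ (Submodule.subset_span ⟨i, rfl⟩)
  have hcols : ∀ j, Acᵀ j ∈ Submodule.span ℂ (Set.range w) := by
    intro j
    have h1 : Acᵀ j = f (Aᵀ j) := by
      funext i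
      simp [hAc, f, Matrix.map_apply, LinearMap.compLeft, Complex.ofRealAm, Algebra.ofId_apply]
    rw [h1]
    exact key _ (Submodule.subset_span ⟨j, rfl⟩)
  have hle : Submodule.span ℂ (Set.range Acᵀ) ≤ Submodule.span ℂ (Set.range w) := by
    rw [Submodule.span_le]
    rintro _ ⟨j, rfl⟩
    exact hcols j
  calc Ac.rank = finrank ℂ (Submodule.span ℂ (Set.range Acᵀ)) :=
        Matrix.rank_eq_finrank_span_cols Ac
    _ ≤ finrank ℂ (Submodule.span ℂ (Set.range w)) := Submodule.finrank_mono hle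
    _ ≤ Fintype.card (Fin (finrank ℝ V)) := finrank_range_le_card w
    _ = A.rank := by simp [hdim]

set_option linter.unnecessarySimpa false in
/-- Key estimate: if the columns of a unitary-type family `u` are orthonormal (expressed via
`hrow` on the rows), `Ec` has zero diagonal, and the first `k` quadratic forms equal `-1`,
then the total `ℓ¹` mass of `Ec` is at least `2k`. -/
lemma core_bound {N k : ℕ} (hkN : k ≤ N) (Ec : Matrix (Fin N) (Fin N) ℂ)
    (u : Fin N → Fin N → ℂ)
    (hdiagE : ∀ j, Ec j j = 0)
    (hrow : ∀ j l, ∑ i, u i j * (starRingEnd ℂ) (u i l) = if j = l then 1 else 0)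
    (hteq : ∀ i : Fin N, (i : ℕ) < k →
      (∑ j, ∑ l, (starRingEnd ℂ) (u i j) * (Ec j l * u i l)) = -1) :
    2 * (k : ℝ) ≤ ∑ j, ∑ l, ‖Ec j l‖ := by
  classical
  set t : Fin N → ℂ := fun i => ∑ j, ∑ l, (starRingEnd ℂ) (u i j) * (Ec j l * u i l) with ht
  have hconjrow : ∀ j l, (∑ i, (starRingEnd ℂ) (u i j) * u i l) = if j = l then 1 else 0 := by
    intro j l
    have h := congrArg (starRingEnd ℂ) (hrow j l)
    rw [map_sum] at h
    simpa [_root_.map_mul, apply_ite] using h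
  have htr : ∑ i, t i = 0 := by
    have swap : ∑ i, t i = ∑ j, ∑ l, Ec j l * (∑ i, (starRingEnd ℂ) (u i j) * u i l) := by
      simp only [ht]
      rw [Finset.sum_comm]
      refine Finset.sum_congr rfl fun j _ => ?_
      rw [Finset.sum_comm]
      refine Finset.sum_congr rfl fun l _ => ?_
      rw [Finset.mul_sum]
      exact Finset.sum_congr rfl fun i _ => by ring
    rw [swap]
    simp only [hconjrow]
    simp [mul_ite, hdiagE]
  set sfin : Finset (Fin N) := Finset.univ.filter (fun i => (i : ℕ) < k) with hsfin
  have hcard : sfin.card = k := by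
    have himg : sfin = Finset.map (Fin.castLEEmb hkN) Finset.univ := by
      ext x
      simp only [hsfin, Finset.mem_filter, Finset.mem_univ, true_and, Finset.mem_map,
        Fin.castLEEmb, Function.Embedding.coeFn_mk]
      constructor
      · intro hx
        exact ⟨⟨x, hx⟩, by simp [Fin.ext_iff, Fin.castLE]⟩
      · rintro ⟨y, rfl⟩; simpa using y.2
    rw [himg, Finset.card_map, Finset.card_univ, Fintype.card_fin]
  have hsum1 : ∑ i ∈ sfin, t i = -(k : ℂ) := by
    rw [Finset.sum_congr rfl (fun i hi => hteq i (by simpa [hsfin] using hi))]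
    simp [hcard]
  have hsum2 : ∑ i ∈ Finset.univ.filter (fun i : Fin N => ¬ ((i : ℕ) < k)), t i = (k : ℂ) := by
    have h2 : ∑ i ∈ sfin, t i
        + ∑ i ∈ Finset.univ.filter (fun i : Fin N => ¬ ((i : ℕ) < k)), t i = 0 := by
      rw [← htr, hsfin]
      exact Finset.sum_filter_add_sum_filter_not Finset.univ _ t
    rw [hsum1] at h2
    linear_combination h2
  have hnorm : ∀ j, ∑ i, (‖u i j‖) ^ 2 = 1 := by
    intro j
    have h := hrow j j
    rw [if_pos rfl] at h
    have heq : ∀ i : Fin N, u i j * (starRingEnd ℂ) (u i j)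
        = (((‖u i j‖) ^ 2 : ℝ) : ℂ) := by
      intro i
      rw [Complex.mul_conj, Complex.sq_norm]
    rw [Finset.sum_congr rfl fun i _ => heq i, ← Complex.ofReal_sum] at h
    exact_mod_cast h
  have hcs : ∀ j l, ∑ i, ‖u i j‖ * ‖u i l‖ ≤ 1 := by
    intro j l
    have h := Finset.sum_mul_sq_le_sq_mul_sq Finset.univ
      (fun i => ‖u i j‖) (fun i => ‖u i l‖)
    rw [hnorm j, hnorm l] at h
    have h0 : 0 ≤ ∑ i, ‖u i j‖ * ‖u i l‖ :=
      Finset.sum_nonneg fun i _ => mul_nonneg (norm_nonneg _) (norm_nonneg _)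
    nlinarith
  have habs : ∀ i, ‖t i‖
      ≤ ∑ j, ∑ l, ‖Ec j l‖ * (‖u i j‖ * ‖u i l‖) := by
    intro i
    refine (norm_sum_le _ _).trans (Finset.sum_le_sum fun j _ => ?_)
    refine (norm_sum_le _ _).trans (Finset.sum_le_sum fun l _ => ?_)
    apply le_of_eq
    simp only [norm_mul, Complex.norm_conj]
    ring
  have hT2 : ∑ i, ‖t i‖ ≤ ∑ j, ∑ l, ‖Ec j l‖ := by
    calc ∑ i, ‖t i‖
        ≤ ∑ i, ∑ j, ∑ l, ‖Ec j l‖ * (‖u i j‖ * ‖u i l‖) :=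
          Finset.sum_le_sum fun i _ => habs i
      _ = ∑ j, ∑ l, ‖Ec j l‖ * (∑ i, ‖u i j‖ * ‖u i l‖) := by
          rw [Finset.sum_comm]
          refine Finset.sum_congr rfl fun j _ => ?_
          rw [Finset.sum_comm]
          refine Finset.sum_congr rfl fun l _ => ?_
          rw [Finset.mul_sum]
      _ ≤ ∑ j, ∑ l, ‖Ec j l‖ * 1 := by
          refine Finset.sum_le_sum fun j _ => Finset.sum_le_sum fun l _ => ?_
          exact mul_le_mul_of_nonneg_left (hcs j l) (norm_nonneg _)
      _ = ∑ j, ∑ l, ‖Ec j l‖ := by simp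
  have hT1 : 2 * (k : ℝ) ≤ ∑ i, ‖t i‖ := by
    have split := Finset.sum_filter_add_sum_filter_not Finset.univ
      (fun i : Fin N => (i : ℕ) < k) (fun i => ‖t i‖)
    have e1 : ∑ i ∈ sfin, ‖t i‖ = (k : ℝ) := by
      have h1 : ∀ i ∈ sfin, ‖t i‖ = 1 := by
        intro i hi
        have h : t i = -1 := hteq i (by simpa [hsfin] using hi)
        rw [h]; simp
      rw [Finset.sum_congr rfl h1]
      simp [hcard]
    have e2 : (k : ℝ) ≤ ∑ i ∈ Finset.univ.filter (fun i : Fin N => ¬ ((i : ℕ) < k)),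
        ‖t i‖ := by
      calc (k : ℝ) = ‖(k : ℂ)‖ := by simp
        _ = ‖∑ i ∈ Finset.univ.filter (fun i : Fin N => ¬ ((i : ℕ) < k)), t i‖ := by
            rw [hsum2]
        _ ≤ _ := norm_sum_le _ _
    rw [hsfin] at e1
    linarith [split, e1, e2]
  linarith

/-- For any real `N×N` matrix of rank `d` with unit diagonal, the sum of absolute values of
the off-diagonal entries is at least `2(N - d)`. -/
theorem sum_abs_offdiag_lower_bound (N d : ℕ) (hd : 0 < d) (hdN : d ≤ N)
    (A : Matrix (Fin N) (Fin N) ℝ) (hrank : A.rank = d)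
    (hdiag : ∀ i, A i i = 1) :
    2 * ((N : ℝ) - d) ≤ ∑ i, ∑ j, if i = j then 0 else |A i j| := by
  classical
  set Ac := A.map (fun x => (x : ℂ)) with hAc
  have hr : Ac.rank ≤ d := by
    rw [hAc]
    calc (A.map (fun x => (x : ℂ))).rank ≤ A.rank := rank_complexify_le A
      _ = d := hrank
  set k := N - d with hk
  set L := Ac.mulVecLin with hL
  have hdimker : k ≤ finrank ℂ (LinearMap.ker L) := by
    have h1 := LinearMap.finrank_range_add_finrank_ker L
    have h2 : finrank ℂ (Fin N → ℂ) = N := by simp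
    have h3 : finrank ℂ (LinearMap.range L) = Ac.rank := rfl
    omega
  set E := EuclideanSpace ℂ (Fin N) with hE
  let e : E ≃ₗ[ℂ] (Fin N → ℂ) := WithLp.linearEquiv 2 ℂ (Fin N → ℂ)
  set W : Submodule ℂ E := (LinearMap.ker L).comap (e : E →ₗ[ℂ] (Fin N → ℂ)) with hW
  have hWdim : k ≤ finrank ℂ W := by
    have hmap : W = (LinearMap.ker L).map (e.symm : (Fin N → ℂ) →ₗ[ℂ] E) := by
      rw [hW, Submodule.comap_equiv_eq_map_symm]
    have := LinearEquiv.finrank_map_eq e.symm (LinearMap.ker L)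
    rw [← hmap] at this
    omega
  let c : OrthonormalBasis (Fin (finrank ℂ W)) ℂ W := stdOrthonormalBasis ℂ W
  let v : Fin N → E := fun i =>
    if h : (i : ℕ) < finrank ℂ W then (c ⟨i, h⟩ : E) else 0
  set s : Set (Fin N) := {i | (i : ℕ) < k} with hs
  have hvW : ∀ i ∈ s, v i ∈ W := by
    intro i hi
    have h : (i : ℕ) < finrank ℂ W := lt_of_lt_of_le hi hWdim
    simp only [v, dif_pos h]
    exact (c ⟨i, h⟩).2
  have hon : Orthonormal ℂ (s.restrict v) := by
    rw [orthonormal_iff_ite]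
    intro i j
    have hi : ((i : Fin N) : ℕ) < finrank ℂ W := lt_of_lt_of_le i.2 hWdim
    have hj : ((j : Fin N) : ℕ) < finrank ℂ W := lt_of_lt_of_le j.2 hWdim
    have hcc : ∀ (a b : Fin (finrank ℂ W)),
        (inner ℂ ((c a : E)) ((c b : E)) : ℂ) = if a = b then 1 else 0 := by
      intro a b
      rw [← Submodule.coe_inner, orthonormal_iff_ite.mp c.orthonormal]
    simp only [Set.restrict_apply, Set.restrict, v, dif_pos hi, dif_pos hj]
    rw [hcc]
    congr 1
    simp only [eq_iff_iff]
    constructor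
    · intro h
      have := congrArg Fin.val h
      exact Subtype.ext (Fin.ext this)
    · intro h
      have : ((i : Fin N) : ℕ) = ((j : Fin N) : ℕ) := congrArg Fin.val (congrArg Subtype.val h)
      exact Fin.ext this
  have hcard : finrank ℂ E = Fintype.card (Fin N) := by
    show finrank ℂ (EuclideanSpace ℂ (Fin N)) = _
    simp [finrank_euclideanSpace]
  obtain ⟨b, hb⟩ := hon.exists_orthonormalBasis_extension_of_card_eq hcard
  -- build the coordinate functions
  let u : Fin N → Fin N → ℂ := fun i => e (b i)
  have hinner : ∀ i i', ∑ j, (starRingEnd ℂ) (u i j) * u i' j = if i = i' then 1 else 0 := by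
    intro i i'
    have h := orthonormal_iff_ite.mp b.orthonormal i i'
    rw [← h, PiLp.inner_apply]
    simp only [RCLike.inner_apply]
    exact Finset.sum_congr rfl fun j _ => mul_comm _ _
  let U : Matrix (Fin N) (Fin N) ℂ := Matrix.of fun j i => u i j
  have hUU : U * Uᴴ = 1 := by
    apply mul_eq_one_comm.mp
    ext i i'
    rw [Matrix.mul_apply, Matrix.one_apply]
    simp only [Matrix.conjTranspose_apply, U, Matrix.of_apply]
    rw [← hinner i i']
    rfl
  have hrow : ∀ j l, ∑ i, u i j * (starRingEnd ℂ) (u i l) = if j = l then 1 else 0 := by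
    intro j l
    have h2 : (U * Uᴴ) j l = (1 : Matrix (Fin N) (Fin N) ℂ) j l := by rw [hUU]
    rw [Matrix.mul_apply, Matrix.one_apply] at h2
    simpa [U, Matrix.conjTranspose_apply] using h2
  -- kernel property
  have hker : ∀ i : Fin N, (i : ℕ) < k → Ac.mulVec (u i) = 0 := by
    intro i hi
    have hbi : b i ∈ W := by
      rw [hb i hi]
      exact hvW i hi
    rw [hW, Submodule.mem_comap, LinearMap.mem_ker, hL] at hbi
    simpa [Matrix.mulVecLin_apply] using hbi
  -- the perturbation matrix
  set Ec : Matrix (Fin N) (Fin N) ℂ :=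
    Matrix.of (fun j l => Ac j l - if j = l then 1 else 0) with hEc
  have hdiagE : ∀ j, Ec j j = 0 := by
    intro j
    simp [hEc, hAc, Matrix.map_apply, hdiag j]
  have hteq : ∀ i : Fin N, (i : ℕ) < k →
      (∑ j, ∑ l, (starRingEnd ℂ) (u i j) * (Ec j l * u i l)) = -1 := by
    intro i hi
    have hrow0 : ∀ j, ∑ l, Ec j l * u i l = - u i j := by
      intro j
      have hmv : ∑ l, Ac j l * u i l = 0 := by
        have := congrFun (hker i hi) j
        simpa [Matrix.mulVec, dotProduct] using this
      calc ∑ l, Ec j l * u i l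
          = ∑ l, (Ac j l * u i l - (if j = l then 1 else 0) * u i l) := by
            refine Finset.sum_congr rfl fun l _ => ?_
            simp only [hEc, Matrix.of_apply]
            ring
        _ = (∑ l, Ac j l * u i l) - ∑ l, (if j = l then 1 else 0) * u i l := by
            rw [Finset.sum_sub_distrib]
        _ = - u i j := by
            rw [hmv]
            simp [ite_mul]
    calc ∑ j, ∑ l, (starRingEnd ℂ) (u i j) * (Ec j l * u i l)
        = ∑ j, (starRingEnd ℂ) (u i j) * (∑ l, Ec j l * u i l) := by
          refine Finset.sum_congr rfl fun j _ => ?_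
          rw [Finset.mul_sum]
      _ = ∑ j, (starRingEnd ℂ) (u i j) * (- u i j) := by
          simp only [hrow0]
      _ = - ∑ j, (starRingEnd ℂ) (u i j) * u i j := by
          rw [← Finset.sum_neg_distrib]
          exact Finset.sum_congr rfl fun j _ => by ring
      _ = -1 := by
          have := hinner i i
          rw [if_pos rfl] at this
          rw [this]
  have hkN : k ≤ N := by omega
  have main := core_bound hkN Ec u hdiagE hrow hteq
  have hEcabs : ∀ j l, ‖Ec j l‖ = if j = l then 0 else |A j l| := by
    intro j l
    by_cases h : j = l
    · subst h; rw [hdiagE]; simp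
    · simp only [hEc, Matrix.of_apply, if_neg h, hAc, Matrix.map_apply, sub_zero]
      exact (Complex.norm_real _).trans (Real.norm_eq_abs _)
  have hfinal : ∑ j, ∑ l, ‖Ec j l‖
      = ∑ i, ∑ j, (if i = j then 0 else |A i j|) := by
    refine Finset.sum_congr rfl fun j _ => Finset.sum_congr rfl fun l _ => hEcabs j l
  rw [← hfinal]
  have hcast : ((N : ℝ) - d) = (k : ℝ) := by
    rw [hk]
    rw [Nat.cast_sub hdN]
  rw [hcast]
  exact main
end

section
/- Let C be a real symmetric n×n matrix with C_{ii} = 1 for all i and C ≠ I_n, whose maximal eigenvalue λ has eigenspace of dimension k. Let b > 1 be an integer and α ∈ [0, b/(b-1)], and set β = (-bλ + (bλ-1)α)/(b(1-λ)) and γ = (b + (1-b)α)/(b(1-λ)). Then the bn×bn matrix C(α,β,γ) = α I_{nb} + β (I_n ⊗ J_b) + γ (C ⊗ J_b) is positive semidefinite, has all diagonal entries equal to 1, and has rank at most bn - k; hence it is the Gram matrix of a set of bn unit vectors in ℝ^{bn-k}. -/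
open Kronecker

section Aux

open Matrix

lemma aux_spectral {n : ℕ} (C : Matrix (Fin n) (Fin n) ℝ) (hherm : C.IsHermitian) (y : Fin n → ℝ) :
    ∃ z : Fin n → ℝ, y ⬝ᵥ C *ᵥ y = ∑ i, hherm.eigenvalues i * (z i)^2 ∧ y ⬝ᵥ y = ∑ i, (z i)^2 := by
  classical
  set U : Matrix (Fin n) (Fin n) ℝ := (hherm.eigenvectorUnitary : Matrix (Fin n) (Fin n) ℝ) with hU
  have hUU : U * star U = 1 := Matrix.mem_unitaryGroup_iff.mp (hherm.eigenvectorUnitary).2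
  have hvm : y ᵥ* U = star U *ᵥ y := by
    rw [Matrix.star_eq_conjTranspose, Matrix.conjTranspose_eq_transpose_of_trivial,
      mulVec_transpose]
  refine ⟨star U *ᵥ y, ?_, ?_⟩
  · conv_lhs => rw [hherm.spectral_theorem, Unitary.conjStarAlgAut_apply, ← hU]
    rw [← mulVec_mulVec, ← mulVec_mulVec, dotProduct_mulVec y U, hvm]
    simp only [dotProduct, mulVec_diagonal, pow_two, Function.comp_apply,
      RCLike.ofReal_real_eq_id, id_eq]
    exact Finset.sum_congr rfl fun i _ => by ring
  · have h2 : (star U *ᵥ y) ⬝ᵥ (star U *ᵥ y) = (y ᵥ* U) ⬝ᵥ (star U *ᵥ y) := by rw [hvm]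
    rw [show ∑ i, ((star U *ᵥ y) i)^2 = (star U *ᵥ y) ⬝ᵥ (star U *ᵥ y) by
        simp [dotProduct, pow_two],
      h2, ← dotProduct_mulVec, mulVec_mulVec, hUU, one_mulVec]

lemma aux_eig_le {n : ℕ} (C : Matrix (Fin n) (Fin n) ℝ) (hherm : C.IsHermitian) (lam : ℝ)
    (hmaxeig : ∀ μ : ℝ, Module.End.HasEigenvalue (Matrix.toLin' C) μ → μ ≤ lam) (i : Fin n) :
    hherm.eigenvalues i ≤ lam := by
  apply hmaxeig
  apply Module.End.hasEigenvalue_of_hasEigenvector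
    (x := (WithLp.equiv 2 _) (hherm.eigenvectorBasis i))
  constructor
  · rw [Module.End.mem_eigenspace_iff, Matrix.toLin'_apply]
    exact hherm.mulVec_eigenvectorBasis i
  · intro h0
    have h1 : hherm.eigenvectorBasis i = 0 := by
      apply (WithLp.equiv 2 _).injective
      simpa using h0
    have := hherm.eigenvectorBasis.orthonormal.1 i
    rw [h1] at this
    simp at this

lemma aux_rayleigh {n : ℕ} (C : Matrix (Fin n) (Fin n) ℝ) (hherm : C.IsHermitian) (lam : ℝ)
    (hmaxeig : ∀ μ : ℝ, Module.End.HasEigenvalue (Matrix.toLin' C) μ → μ ≤ lam) (y : Fin n → ℝ) :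
    y ⬝ᵥ C *ᵥ y ≤ lam * (y ⬝ᵥ y) := by
  obtain ⟨z, h1, h2⟩ := aux_spectral C hherm y
  rw [h1, h2, Finset.mul_sum]
  exact Finset.sum_le_sum fun i _ =>
    mul_le_mul_of_nonneg_right (aux_eig_le C hherm lam hmaxeig i) (sq_nonneg _)

lemma aux_lam_gt {n : ℕ} (C : Matrix (Fin n) (Fin n) ℝ) (hherm : C.IsHermitian)
    (hdiag : ∀ i, C i i = 1) (hC : C ≠ 1) (lam : ℝ)
    (hmaxeig : ∀ μ : ℝ, Module.End.HasEigenvalue (Matrix.toLin' C) μ → μ ≤ lam) :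
    1 < lam := by
  classical
  by_contra hle
  push_neg at hle
  have hray : ∀ y : Fin n → ℝ, y ⬝ᵥ C *ᵥ y ≤ y ⬝ᵥ y := by
    intro y
    calc y ⬝ᵥ C *ᵥ y ≤ lam * (y ⬝ᵥ y) := aux_rayleigh C hherm lam hmaxeig y
    _ ≤ 1 * (y ⬝ᵥ y) := by
        apply mul_le_mul_of_nonneg_right hle
        simpa [dotProduct, pow_two] using Finset.sum_nonneg
          (fun i (_ : i ∈ Finset.univ) => mul_self_nonneg (y i))
    _ = y ⬝ᵥ y := one_mul _
  obtain ⟨i, j, hij⟩ : ∃ i j, C i j ≠ (1 : Matrix (Fin n) (Fin n) ℝ) i j := by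
    by_contra h; push_neg at h; exact hC (by ext i j; exact h i j)
  have hne : i ≠ j := by
    intro h; subst h; rw [hdiag, Matrix.one_apply_eq] at hij; exact hij rfl
  have hs : C i j ≠ 0 := by rwa [Matrix.one_apply_ne hne] at hij
  set s := C i j with hsdef
  set x : Fin n → ℝ := (Pi.single i 1 : Fin n → ℝ) + s • (Pi.single j 1 : Fin n → ℝ) with hx
  have hCji : C j i = s := by
    have h := congrFun (congrFun hherm i) j
    rw [Matrix.conjTranspose_apply, star_trivial] at h
    rw [hsdef]; exact h
  have hquad : x ⬝ᵥ C *ᵥ x = 1 + 3 * s^2 := by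
    rw [hx]
    simp [Matrix.mulVec_add, Matrix.mulVec_smul, Matrix.mulVec_single,
      add_dotProduct, smul_dotProduct, dotProduct_add, dotProduct_smul,
      single_dotProduct, dotProduct_single, hdiag, hCji]
    ring
  have hxx : x ⬝ᵥ x = 1 + s^2 := by
    rw [hx]
    simp [add_dotProduct, smul_dotProduct, dotProduct_add, dotProduct_smul,
      single_dotProduct, dotProduct_single, Pi.single_apply, hne, hne.symm]
    ring
  have hfin := hray x
  rw [hquad, hxx] at hfin
  have hs2 : 0 < s^2 := by positivity
  linarith

lemma aux_kron_quad {n b : ℕ} (A : Matrix (Fin n) (Fin n) ℝ) (x : Fin n × Fin b → ℝ) :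
    x ⬝ᵥ (A ⊗ₖ (Matrix.of fun _ _ => (1 : ℝ))) *ᵥ x
      = (fun i => ∑ j, x (i, j)) ⬝ᵥ A *ᵥ (fun i => ∑ j, x (i, j)) := by
  simp only [dotProduct, mulVec, Fintype.sum_prod_type, Matrix.kroneckerMap_apply,
    Matrix.of_apply, mul_one, Finset.mul_sum, Finset.sum_mul]
  apply Finset.sum_congr rfl; intro i _
  rw [Finset.sum_comm]
  apply Finset.sum_congr rfl; intro i' _
  rw [Finset.sum_comm]

lemma aux_kron_mulVec {n b : ℕ} (A : Matrix (Fin n) (Fin n) ℝ) (v : Fin n → ℝ) (p : Fin n × Fin b) :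
    ((A ⊗ₖ (Matrix.of fun _ _ => (1 : ℝ))) *ᵥ (fun q : Fin n × Fin b => v q.1)) p
      = (b : ℝ) * (A *ᵥ v) p.1 := by
  simp only [mulVec, dotProduct, Fintype.sum_prod_type, Matrix.kroneckerMap_apply,
    Matrix.of_apply, mul_one, Finset.sum_const, Finset.card_univ, Fintype.card_fin,
    nsmul_eq_mul, Finset.mul_sum]

lemma aux_sum_extend {r m : ℕ} (h : r ≤ m) (f g : Fin r → ℝ) :
    (∑ t : Fin m, (if ht : (t : ℕ) < r then f ⟨t, ht⟩ else 0)
        * (if ht : (t : ℕ) < r then g ⟨t, ht⟩ else 0))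
      = ∑ t : Fin r, f t * g t := by
  have h1 : ∀ t : Fin m, (if ht : (t:ℕ) < r then f ⟨t,ht⟩ else 0)
        * (if ht : (t:ℕ) < r then g ⟨t,ht⟩ else 0)
      = (fun s : ℕ => if hs : s < r then f ⟨s,hs⟩ * g ⟨s,hs⟩ else 0) (t : ℕ) := by
    intro t; by_cases ht : (t:ℕ) < r <;> simp [ht]
  rw [Finset.sum_congr rfl (fun t _ => h1 t),
    Fin.sum_univ_eq_sum_range (fun s : ℕ => if hs : s < r then f ⟨s,hs⟩ * g ⟨s,hs⟩ else 0) m,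
    ← Finset.sum_subset (Finset.range_subset_range.mpr h)
      (fun t _ ht => by simp [Finset.mem_range.not.mp ht]),
    ← Fin.sum_univ_eq_sum_range]
  exact Finset.sum_congr rfl fun t _ => by simp [t.2]

end Aux

open Matrix in
open scoped MatrixOrder in
set_option maxHeartbeats 2000000 in

/-- The one-parameter family of Gram matrices: if `C ≠ I_n` is real symmetric with unit
diagonal and its maximal eigenvalue `λ` has eigenspace of dimension `k`, then for `b > 1`
and `α ∈ [0, b/(b-1)]`, with `β = (-bλ + (bλ-1)α)/(b(1-λ))` and `γ = (b + (1-b)α)/(b(1-λ))`,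
the `bn×bn` matrix `α I + β (I_n ⊗ J_b) + γ (C ⊗ J_b)` is positive semidefinite with unit
diagonal and rank at most `bn - k`; hence it is the Gram matrix of `bn` unit vectors in
`ℝ^{bn-k}`. -/
theorem gram_family (n k b : ℕ) (hb : 1 < b)
    (C : Matrix (Fin n) (Fin n) ℝ) (hsymm : C.IsSymm) (hdiag : ∀ i, C i i = 1)
    (hC : C ≠ 1)
    (lam : ℝ)
    (heig : Module.End.HasEigenvalue (Matrix.toLin' C) lam)
    (hmaxeig : ∀ μ : ℝ, Module.End.HasEigenvalue (Matrix.toLin' C) μ → μ ≤ lam)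
    (hk : Module.finrank ℝ (Module.End.eigenspace (Matrix.toLin' C) lam) = k)
    (α : ℝ) (hα0 : 0 ≤ α) (hα1 : α ≤ (b : ℝ) / ((b : ℝ) - 1)) :
    ∀ β γ : ℝ,
      β = (-(b : ℝ) * lam + ((b : ℝ) * lam - 1) * α) / ((b : ℝ) * (1 - lam)) →
      γ = ((b : ℝ) + (1 - (b : ℝ)) * α) / ((b : ℝ) * (1 - lam)) →
      ∀ D : Matrix (Fin n × Fin b) (Fin n × Fin b) ℝ,
        D = α • (1 : Matrix (Fin n × Fin b) (Fin n × Fin b) ℝ)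
            + β • ((1 : Matrix (Fin n) (Fin n) ℝ) ⊗ₖ (Matrix.of fun _ _ => (1 : ℝ)))
            + γ • (C ⊗ₖ (Matrix.of fun _ _ => (1 : ℝ))) →
        D.PosSemidef ∧ (∀ i, D i i = 1) ∧ D.rank ≤ b * n - k ∧
          ∃ v : Fin n × Fin b → EuclideanSpace ℝ (Fin (b * n - k)),
            (∀ i, ‖v i‖ = 1) ∧ ∀ i j, D i j = (inner ℝ (v i) (v j) : ℝ) := by
  classical
  intro β γ hβ hγ D hD
  have hb' : (1:ℝ) < (b:ℝ) := by exact_mod_cast hb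
  have hb0 : (0:ℝ) < (b:ℝ) := by linarith
  have hherm : C.IsHermitian := by
    rw [Matrix.IsHermitian, Matrix.conjTranspose_eq_transpose_of_trivial]; exact hsymm
  have hlam : 1 < lam := aux_lam_gt C hherm hdiag hC lam hmaxeig
  have hden : (b:ℝ) * (1 - lam) ≠ 0 :=
    mul_ne_zero (ne_of_gt hb0) (ne_of_lt (by linarith))
  have habg : α + β + γ = 1 := by rw [hβ, hγ]; field_simp [sub_ne_zero.mpr (ne_of_lt hlam)]; ring
  have hker0 : α + (b:ℝ) * β + (b:ℝ) * γ * lam = 0 := by rw [hβ, hγ]; field_simp [sub_ne_zero.mpr (ne_of_lt hlam)]; ring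
  have hγ0 : γ ≤ 0 := by
    rw [hγ]
    apply div_nonpos_of_nonneg_of_nonpos
    · have h1 : α * ((b:ℝ) - 1) ≤ (b:ℝ) := by
        rw [← le_div_iff₀ (by linarith : (0:ℝ) < (b:ℝ) - 1)]; exact hα1
      nlinarith
    · nlinarith
  -- positive semidefiniteness
  have hpsd : D.PosSemidef := by
    apply Matrix.PosSemidef.of_dotProduct_mulVec_nonneg
    · rw [Matrix.IsHermitian, Matrix.conjTranspose_eq_transpose_of_trivial]
      ext p q
      rw [Matrix.transpose_apply, hD]
      simp only [Matrix.add_apply, Matrix.smul_apply, Matrix.kroneckerMap_apply,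
        Matrix.of_apply, Matrix.one_apply, smul_eq_mul, mul_one]
      have h1 : C q.1 p.1 = C p.1 q.1 := by
        have h := congrFun (congrFun hherm p.1) q.1
        rw [Matrix.conjTranspose_apply, star_trivial] at h
        exact h
      have h2 : (if q = p then (1:ℝ) else 0) = (if p = q then (1:ℝ) else 0) := by
        simp [eq_comm]
      have h3 : (if q.1 = p.1 then (1:ℝ) else 0) = (if p.1 = q.1 then (1:ℝ) else 0) := by
        simp [eq_comm]
      rw [h1, h2, h3]
    · intro x
      rw [star_trivial]
      set y : Fin n → ℝ := fun i => ∑ j, x (i, j) with hy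
      have hQ : x ⬝ᵥ D *ᵥ x = α * (x ⬝ᵥ x) + β * (y ⬝ᵥ y) + γ * (y ⬝ᵥ C *ᵥ y) := by
        rw [hD, Matrix.add_mulVec, Matrix.add_mulVec, dotProduct_add,
          dotProduct_add, Matrix.smul_mulVec, Matrix.smul_mulVec,
          Matrix.smul_mulVec, Matrix.one_mulVec, dotProduct_smul,
          dotProduct_smul, dotProduct_smul, aux_kron_quad, aux_kron_quad,
          Matrix.one_mulVec]
        simp [smul_eq_mul, hy]
      rw [hQ]
      have hray := aux_rayleigh C hherm lam hmaxeig y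
      have hxx0 : 0 ≤ x ⬝ᵥ x :=
        Finset.sum_nonneg fun p _ => mul_self_nonneg (x p)
      have hyy0 : 0 ≤ y ⬝ᵥ y :=
        Finset.sum_nonneg fun i _ => mul_self_nonneg (y i)
      have hCS : y ⬝ᵥ y ≤ (b:ℝ) * (x ⬝ᵥ x) := by
        have hstep : ∀ i, (y i)^2 ≤ (b:ℝ) * ∑ j, (x (i,j))^2 := by
          intro i
          simpa [hy, Finset.card_univ] using
            (sq_sum_le_card_mul_sum_sq (s := (Finset.univ : Finset (Fin b)))
              (f := fun j => x (i,j)))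
        calc y ⬝ᵥ y = ∑ i, (y i)^2 := by simp [dotProduct, pow_two]
        _ ≤ ∑ i, (b:ℝ) * ∑ j, (x (i,j))^2 := Finset.sum_le_sum fun i _ => hstep i
        _ = (b:ℝ) * (x ⬝ᵥ x) := by
            rw [← Finset.mul_sum]
            simp [dotProduct, Fintype.sum_prod_type, pow_two]
      have hγterm : γ * (lam * (y ⬝ᵥ y)) ≤ γ * (y ⬝ᵥ C *ᵥ y) :=
        mul_le_mul_of_nonpos_left hray hγ0
      have hβval : β = -α / b - γ * lam := by
        field_simp at hker0 ⊢
        linarith [hker0]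
      rw [hβval]
      have hprod : 0 ≤ (α / b) * ((b:ℝ) * (x ⬝ᵥ x) - y ⬝ᵥ y) :=
        mul_nonneg (div_nonneg hα0 hb0.le) (by linarith)
      have e1 : (-α / (b:ℝ) - γ * lam) * (y ⬝ᵥ y)
          = -(α / (b:ℝ) * (y ⬝ᵥ y)) - γ * (lam * (y ⬝ᵥ y)) := by ring
      have hprod' : α / (b:ℝ) * ((b:ℝ) * (x ⬝ᵥ x) - y ⬝ᵥ y)
          = α * (x ⬝ᵥ x) - α / (b:ℝ) * (y ⬝ᵥ y) := by
        field_simp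
      rw [e1]
      rw [hprod'] at hprod
      linarith [hγterm, hprod]
  -- unit diagonal
  have hdiagD : ∀ p : Fin n × Fin b, D p p = 1 := by
    intro p
    rw [hD]
    simp [Matrix.one_apply, hdiag p.1]
    linarith
  -- rank bound
  have hcard : Module.finrank ℝ (Fin n × Fin b → ℝ) = b * n := by
    rw [Module.finrank_fintype_fun_eq_card, Fintype.card_prod, Fintype.card_fin,
      Fintype.card_fin, Nat.mul_comm]
  have hrn := LinearMap.finrank_range_add_finrank_ker (D.mulVecLin)
  rw [hcard] at hrn
  have hkerge : k ≤ Module.finrank ℝ (LinearMap.ker D.mulVecLin) := by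
    have hmem : ∀ v, v ∈ Module.End.eigenspace (Matrix.toLin' C) lam →
        (LinearMap.funLeft ℝ ℝ (Prod.fst : Fin n × Fin b → Fin n)) v
          ∈ LinearMap.ker D.mulVecLin := by
      intro v hv
      rw [LinearMap.mem_ker]
      have hCv : C *ᵥ v = lam • v := by
        rw [Module.End.mem_eigenspace_iff] at hv
        rw [← Matrix.toLin'_apply]; exact hv
      have hfl : (⇑(LinearMap.funLeft ℝ ℝ (Prod.fst : Fin n × Fin b → Fin n)) v)
          = (fun q : Fin n × Fin b => v q.1) := rfl
      ext p
      rw [Matrix.mulVecLin_apply, hfl, hD, Matrix.add_mulVec, Matrix.add_mulVec]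
      simp only [Pi.add_apply, Matrix.smul_mulVec, Matrix.one_mulVec, Pi.smul_apply,
        smul_eq_mul, Pi.zero_apply]
      rw [aux_kron_mulVec, aux_kron_mulVec, hCv]
      simp only [Pi.smul_apply, smul_eq_mul, Matrix.one_mulVec]
      linear_combination (v p.1) * hker0
    have hsurj : Function.Surjective (Prod.fst : Fin n × Fin b → Fin n) :=
      fun i => ⟨(i, ⟨0, Nat.lt_of_lt_of_le Nat.zero_lt_one hb.le⟩), rfl⟩
    let ψ : (Module.End.eigenspace (Matrix.toLin' C) lam) →ₗ[ℝ] (Fin n × Fin b → ℝ) :=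
      (LinearMap.funLeft ℝ ℝ (Prod.fst : Fin n × Fin b → Fin n)).comp
        (Module.End.eigenspace (Matrix.toLin' C) lam).subtype
    have hψinj : Function.Injective ψ :=
      (LinearMap.funLeft_injective_of_surjective ℝ ℝ _ hsurj).comp Subtype.coe_injective
    let φ : (Module.End.eigenspace (Matrix.toLin' C) lam) →ₗ[ℝ] LinearMap.ker D.mulVecLin :=
      ψ.codRestrict _ (fun v => hmem v.1 v.2)
    have hφinj : Function.Injective φ := fun a b h => hψinj (congrArg Subtype.val h)
    calc k = Module.finrank ℝ (Module.End.eigenspace (Matrix.toLin' C) lam) := hk.symm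
    _ ≤ _ := LinearMap.finrank_le_finrank_of_injective hφinj
  have hrankD : D.rank ≤ b * n - k := by
    rw [Matrix.rank]
    omega
  refine ⟨hpsd, hdiagD, hrankD, ?_⟩
  -- Gram vectors
  set S := CFC.sqrt D with hSdef
  have hSS : S * S = D := CFC.sqrt_mul_sqrt_self D hpsd.nonneg
  have hSherm : S.IsHermitian := (CFC.sqrt_nonneg D).posSemidef.1
  have hSsymm : ∀ p q, S p q = S q p := by
    intro p q
    have h := congrFun (congrFun hSherm q) p
    rw [Matrix.conjTranspose_apply, star_trivial] at h
    exact h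
  have hSker : LinearMap.ker S.mulVecLin = LinearMap.ker D.mulVecLin := by
    ext x
    simp only [LinearMap.mem_ker, Matrix.mulVecLin_apply]
    constructor
    · intro h; rw [← hSS, ← Matrix.mulVec_mulVec, h, Matrix.mulVec_zero]
    · intro h
      have hTS : S *ᵥ x = x ᵥ* S := by
        rw [← Matrix.mulVec_transpose]
        congr 1
        rw [← Matrix.conjTranspose_eq_transpose_of_trivial, hSherm]
      have h0 : (S *ᵥ x) ⬝ᵥ (S *ᵥ x) = 0 := by
        calc (S *ᵥ x) ⬝ᵥ (S *ᵥ x) = (x ᵥ* S) ⬝ᵥ (S *ᵥ x) := by rw [← hTS]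
        _ = x ⬝ᵥ (S *ᵥ (S *ᵥ x)) := (Matrix.dotProduct_mulVec x S (S *ᵥ x)).symm
        _ = x ⬝ᵥ D *ᵥ x := by rw [Matrix.mulVec_mulVec, hSS]
        _ = 0 := by rw [h, dotProduct_zero]
      have hz := dotProduct_star_self_eq_zero (v := S *ᵥ x)
      rw [star_trivial] at hz
      exact hz.mp h0
  have hrankS : S.rank ≤ b * n - k := by
    have h1 := LinearMap.finrank_range_add_finrank_ker (S.mulVecLin)
    rw [hSker, hcard] at h1
    have h2 : S.rank = D.rank := by rw [Matrix.rank, Matrix.rank]; omega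
    rw [h2]; exact hrankD
  let E := WithLp.linearEquiv 2 ℝ (Fin n × Fin b → ℝ)
  let S' : Submodule ℝ (EuclideanSpace ℝ (Fin n × Fin b)) :=
    (LinearMap.range S.mulVecLin).map E.symm.toLinearMap
  have hfr : Module.finrank ℝ S' ≤ b * n - k := by
    rw [LinearEquiv.finrank_map_eq]
    exact hrankS
  have hu : ∀ i, E.symm (fun l => S l i) ∈ S' := by
    intro i
    have hcol : S *ᵥ Pi.single i 1 = (fun l => S l i) := by
      funext l; simp [Matrix.mulVec_single]
    exact ⟨S *ᵥ Pi.single i 1, LinearMap.mem_range_self _ _, by rw [hcol]; rfl⟩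
  set r := Module.finrank ℝ S' with hr
  let ob := stdOrthonormalBasis ℝ S'
  let c : (Fin n × Fin b) → EuclideanSpace ℝ (Fin r) :=
    fun i => ob.repr ⟨E.symm (fun l => S l i), hu i⟩
  let v : Fin n × Fin b → EuclideanSpace ℝ (Fin (b * n - k)) :=
    fun i => (WithLp.equiv 2 _).symm
      (fun t : Fin (b * n - k) => if ht : (t:ℕ) < r then c i ⟨t, ht⟩ else 0)
  have hinner : ∀ i j, (inner ℝ (v i) (v j) : ℝ) = D i j := by
    intro i j
    have h1 : (inner ℝ (v i) (v j) : ℝ)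
        = ∑ t : Fin (b * n - k), (if ht : (t:ℕ) < r then c i ⟨t, ht⟩ else 0)
            * (if ht : (t:ℕ) < r then c j ⟨t, ht⟩ else 0) := by
      simp [v, PiLp.inner_apply, RCLike.inner_apply]
      exact Finset.sum_congr rfl fun x _ => by split_ifs <;> ring
    rw [h1, aux_sum_extend hfr]
    have h2 : ∑ t : Fin r, c i t * c j t = (inner ℝ (c i) (c j) : ℝ) := by
      simp [PiLp.inner_apply, RCLike.inner_apply]
      exact Finset.sum_congr rfl fun x _ => mul_comm _ _
    rw [h2]
    have h3 : (inner ℝ (c i) (c j) : ℝ)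
        = (inner ℝ (E.symm (fun l => S l i)) (E.symm (fun l => S l j)) : ℝ) := by
      rw [show c i = ob.repr ⟨E.symm (fun l => S l i), hu i⟩ from rfl,
        show c j = ob.repr ⟨E.symm (fun l => S l j), hu j⟩ from rfl,
        LinearIsometryEquiv.inner_map_map]
      exact Submodule.coe_inner _ _ _
    rw [h3]
    have h4 : (inner ℝ (E.symm (fun l => S l i)) (E.symm (fun l => S l j)) : ℝ)
        = ∑ l, S l i * S l j := by
      simp [PiLp.inner_apply, RCLike.inner_apply, E, WithLp.linearEquiv]
      exact Finset.sum_congr rfl fun x _ => mul_comm _ _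
    rw [h4, ← hSS]
    rw [Matrix.mul_apply]
    exact Finset.sum_congr rfl fun l _ => by rw [hSsymm i l]
  refine ⟨v, ?_, fun i j => (hinner i j).symm⟩
  intro i
  have h5 := real_inner_self_eq_norm_mul_norm (v i)
  rw [hinner i i, hdiagD i] at h5
  rcases mul_self_eq_one_iff.mp h5.symm with h | h
  · exact h
  · nlinarith [norm_nonneg (v i)]
end

section
/- Let C be the M×M Gram matrix of unit representatives of a tight simplex in RP^{k-1}, i.e. C is a real symmetric positive semidefinite matrix of rank k with C_{ii} = 1, |C_{ij}| = β for all i ≠ j where β = √((M-k)/(k(M-1))), and C² = (M/k)·C. Then for every integer b ≥ 1 and every real p > 1 there exists a real symmetric positive semidefinite bM×bM matrix A of rank bM - k with A_{ii} = 1 for all i (the Gram matrix of unit representatives of a projective code in RP^{bM-k-1}) such that (Σ_{i ≠ j} |A_{ij}|^p)^{1/p} = bM / ((bM)²(β^{p/(p-1)} + (1 - β^{p/(p-1)})/M) - bM)^{1 - 1/p}. -/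
/-- The common absolute inner product `β = √((M-k)/(k(M-1)))` of a tight simplex with `M`
points in `RP^{k-1}`. -/
noncomputable def tightSimplexBeta (M k : ℕ) : ℝ :=
  Real.sqrt (((M : ℝ) - k) / ((k : ℝ) * ((M : ℝ) - 1)))

open Matrix Finset

lemma rank_one_sub_add_rank {n : Type*} [Fintype n] [DecidableEq n]
    (G : Matrix n n ℝ) (h : G * G = G) :
    ((1 : Matrix n n ℝ) - G).rank + G.rank = Fintype.card n := by
  have hrange : LinearMap.range ((1 - G).mulVecLin) = LinearMap.ker G.mulVecLin := by
    ext x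
    constructor
    · rintro ⟨y, rfl⟩
      have : G *ᵥ ((1 - G) *ᵥ y) = (G * (1 - G)) *ᵥ y := by
        rw [← Matrix.mulVec_mulVec]
      simp only [LinearMap.mem_ker, Matrix.mulVecLin_apply, this, Matrix.mul_sub,
        Matrix.mul_one, h, sub_self, Matrix.zero_mulVec]
    · intro hx
      refine ⟨x, ?_⟩
      simp only [LinearMap.mem_ker, Matrix.mulVecLin_apply] at hx ⊢
      rw [Matrix.sub_mulVec, Matrix.one_mulVec, hx, sub_zero]
  have h2 := LinearMap.finrank_range_add_finrank_ker (G.mulVecLin)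
  rw [Matrix.rank, Matrix.rank, hrange]
  rw [Module.finrank_pi ℝ] at h2
  omega

lemma posSemidef_smul_idem {n : Type*} [Fintype n] [DecidableEq n]
    (E : Matrix n n ℝ) (hsym : Eᵀ = E) (hid : E * E = E) {c : ℝ} (hc : 0 ≤ c) :
    (c • E).PosSemidef := by
  have hpsd : E.PosSemidef := by
    have h1 : Eᴴ * E = E := by
      rw [Matrix.conjTranspose_eq_transpose_of_trivial, hsym, hid]
    have := Matrix.posSemidef_conjTranspose_mul_self E
    rwa [h1] at this
  constructor
  · show (c • E)ᴴ = c • E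
    rw [Matrix.conjTranspose_smul, Matrix.conjTranspose_eq_transpose_of_trivial, hsym]
    simp
  · intro x
    exact (hpsd.smul hc).2 x

lemma sum_ite_count {α : Type*} [Fintype α] [DecidableEq α] (i : α) (u v : ℝ) :
    ∑ j : α, (if i = j then u else v) = u + ((Fintype.card α : ℝ) - 1) * v := by
  have h : ∀ j : α, (if i = j then u else v) = v + (if i = j then u - v else 0) := by
    intro j; split <;> ring
  simp_rw [h]
  rw [Finset.sum_add_distrib, Finset.sum_const, Finset.sum_ite_eq, if_pos (Finset.mem_univ i),
    Finset.card_univ, nsmul_eq_mul]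
  ring

lemma quad_sum_count (b m : ℕ) (t1 t2 : ℝ) :
    (∑ x : Fin b, ∑ x1 : Fin m, ∑ x2 : Fin b, ∑ x3 : Fin m,
      if x1 = x3 then if x = x2 then (0:ℝ) else t1 else t2)
    = (b:ℝ) * (m:ℝ) * (((b:ℝ)-1) * t1 + (b:ℝ) * ((m:ℝ)-1) * t2) := by
  simp_rw [sum_ite_count, Fintype.card_fin]
  simp_rw [Finset.sum_add_distrib]
  simp_rw [sum_ite_count, Fintype.card_fin, Finset.sum_const, Finset.card_univ,
    Fintype.card_fin, nsmul_eq_mul]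
  ring

lemma double_sum_count (b m : ℕ) (t1 t2 : ℝ) :
    (∑ x : Fin b × Fin m, ∑ y : Fin b × Fin m,
      (if x.2 = y.2 then (if x.1 = y.1 then 0 else t1) else t2))
    = (b:ℝ) * (m:ℝ) * (((b:ℝ)-1) * t1 + (b:ℝ) * ((m:ℝ)-1) * t2) := by
  rw [← quad_sum_count b m t1 t2, Fintype.sum_prod_type]
  refine Finset.sum_congr rfl fun a _ => ?_
  refine Finset.sum_congr rfl fun a1 _ => ?_
  rw [Fintype.sum_prod_type]

noncomputable def sharpTau (M k b : ℕ) (p : ℝ) : ℝ :=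
  ((b : ℝ) * ((M : ℝ) - 1) * tightSimplexBeta M k ^ (p / (p - 1)) + ((b : ℝ) - 1))⁻¹

theorem aux_main (M k : ℕ) (hk : 0 < k) (hkM : k < M)
    (C : Matrix (Fin M) (Fin M) ℝ) (hpsd : C.PosSemidef) (hrank : C.rank = k)
    (hdiag : ∀ i, C i i = 1)
    (hoff : ∀ i j, i ≠ j → |C i j| = tightSimplexBeta M k)
    (htight : C * C = ((M : ℝ) / (k : ℝ)) • C)
    (b : ℕ) (hb : 1 ≤ b) (p : ℝ) (hp : 1 < p) :
    ∃ A' : Matrix (Fin b × Fin M) (Fin b × Fin M) ℝ,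
      A'.PosSemidef ∧ A'.rank + k = b * M ∧ (∀ x, A' x x = 1) ∧
      (∑ x, ∑ y, if x = y then 0 else |A' x y| ^ p)
        = (b : ℝ) * (M : ℝ) * sharpTau M k b p ^ (p - 1) := by
  -- basic positivity facts
  have hM2 : 2 ≤ M := by omega
  set β := tightSimplexBeta M k with hβdef
  have hkR : (0:ℝ) < k := by exact_mod_cast hk
  have hMR : (0:ℝ) < M := by positivity
  have hMk : (0:ℝ) < (M:ℝ) - k := by
    have : (k:ℝ) < M := by exact_mod_cast hkM
    linarith
  have hM1 : (0:ℝ) < (M:ℝ) - 1 := by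
    have : (1:ℝ) < M := by exact_mod_cast hM2.trans_lt' one_lt_two
    linarith
  have hβpos : 0 < β := by
    rw [hβdef, tightSimplexBeta]
    apply Real.sqrt_pos.mpr
    positivity
  have hβsq : β ^ 2 = ((M:ℝ) - k) / ((k:ℝ) * ((M:ℝ)-1)) := by
    rw [hβdef, tightSimplexBeta, Real.sq_sqrt (by positivity)]
  have hp0 : (0:ℝ) < p := by linarith
  have hp1 : (0:ℝ) < p - 1 := by linarith
  set q := p / (p - 1) with hq
  set s := β ^ q with hs
  have hspos : 0 < s := Real.rpow_pos_of_pos hβpos q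
  have hbR : (1:ℝ) ≤ b := by exact_mod_cast hb
  have hbpos : (0:ℝ) < b := by linarith
  have hden : 0 < (b:ℝ)*((M:ℝ)-1)*s + ((b:ℝ)-1) := by
    have h1 : 0 < (b:ℝ)*((M:ℝ)-1)*s := by positivity
    linarith
  set τ := sharpTau M k b p with hτdef
  have hτeq : τ = ((b:ℝ)*((M:ℝ)-1)*s + ((b:ℝ)-1))⁻¹ := rfl
  have hτpos : 0 < τ := by rw [hτeq]; exact inv_pos.mpr hden
  have hτ : τ * ((b:ℝ)*((M:ℝ)-1)*s + ((b:ℝ)-1)) = 1 := by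
    rw [hτeq]; exact inv_mul_cancel₀ hden.ne'
  set w := τ * β ^ (q - 2) with hw
  have hwpos : 0 < w := mul_pos hτpos (Real.rpow_pos_of_pos hβpos _)
  -- key algebraic relation
  have hβq2 : β ^ (q-2) * β ^ (2:ℕ) = s := by
    rw [← Real.rpow_natCast β 2, ← Real.rpow_add hβpos]
    norm_num [hs]
  have h1 : β ^ (q-2) * (((M:ℝ)-k)) = s * ((k:ℝ)*((M:ℝ)-1)) := by
    rw [hβsq] at hβq2
    field_simp at hβq2
    linarith [hβq2]
  have hkey : (b:ℝ) * w * ((M:ℝ) - k) = (1 - ((b:ℝ)-1) * τ) * k := by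
    rw [hw]
    linear_combination ((b:ℝ)*τ) * h1 + (k:ℝ) * hτ
  have hb0 : (b:ℝ) ≠ 0 := hbpos.ne'
  have hk0 : (k:ℝ) ≠ 0 := hkR.ne'
  have hM0 : (M:ℝ) ≠ 0 := hMR.ne'
  have hMk0 : (M:ℝ) - k ≠ 0 := hMk.ne'
  have hwsub : w = (1 - ((b:ℝ)-1) * τ) * k / ((b:ℝ) * ((M:ℝ) - k)) := by
    field_simp
    linear_combination hkey
  set a₁ := 1 + τ with ha₁def
  set a₂ := (b:ℝ) * w * (M:ℝ) / k with ha₂def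
  have ha₁ : 0 < a₁ := by rw [ha₁def]; linarith
  have ha₂ : 0 < a₂ := by rw [ha₂def]; positivity
  -- symmetry of C and entrywise tightness
  have hCsymm : ∀ i j, C j i = C i j := by
    intro i j
    have := hpsd.1
    rw [Matrix.IsHermitian, Matrix.conjTranspose_eq_transpose_of_trivial] at this
    calc C j i = Cᵀ i j := rfl
    _ = C i j := by rw [this]
  have hCC : ∀ i j, (∑ l, C i l * C l j) = ((M:ℝ)/(k:ℝ)) * C i j := by
    intro i j
    have := congrFun (congrFun htight i) j
    simpa [Matrix.mul_apply, Matrix.smul_apply, smul_eq_mul] using this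
  -- the projections
  set H : Matrix (Fin b × Fin M) (Fin b × Fin M) ℝ :=
    Matrix.of (fun x y => if x.2 = y.2 then ((b:ℝ))⁻¹ else 0) with hH
  set G : Matrix (Fin b × Fin M) (Fin b × Fin M) ℝ :=
    Matrix.of (fun x y => ((k:ℝ) / ((b:ℝ) * (M:ℝ))) * C x.2 y.2) with hG
  have hHapp : ∀ x y, H x y = if x.2 = y.2 then ((b:ℝ))⁻¹ else 0 := fun x y => rfl
  have hGapp : ∀ x y, G x y = ((k:ℝ) / ((b:ℝ) * (M:ℝ))) * C x.2 y.2 := fun x y => rfl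
  have hHH : H * H = H := by
    ext x y
    rw [Matrix.mul_apply, Fintype.sum_prod_type]
    simp only [hHapp, ite_mul, mul_ite, zero_mul, mul_zero]
    simp only [Finset.sum_ite_eq, Finset.mem_univ, if_pos, Finset.sum_const,
      Finset.card_univ, Fintype.card_fin, nsmul_eq_mul]
    by_cases hxy : x.2 = y.2
    · simp [hxy]
      field_simp
    · simp [hxy]
  have hHG : H * G = G := by
    ext x y
    rw [Matrix.mul_apply, Fintype.sum_prod_type]
    simp only [hHapp, hGapp, ite_mul, zero_mul]
    simp only [Finset.sum_ite_eq, Finset.mem_univ, if_pos, Finset.sum_const,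
      Finset.card_univ, Fintype.card_fin, nsmul_eq_mul]
    field_simp
  have hGH : G * H = G := by
    ext x y
    rw [Matrix.mul_apply, Fintype.sum_prod_type]
    simp only [hHapp, hGapp, mul_ite, mul_zero]
    simp only [Finset.sum_ite_eq', Finset.mem_univ, if_pos, Finset.sum_const,
      Finset.card_univ, Fintype.card_fin, nsmul_eq_mul]
    field_simp
  have hGG : G * G = G := by
    ext x y
    rw [Matrix.mul_apply, Fintype.sum_prod_type]
    simp only [hGapp]
    have : ∀ r : Fin b, ∑ l : Fin M,
        ((k:ℝ) / ((b:ℝ) * (M:ℝ))) * C x.2 l * (((k:ℝ) / ((b:ℝ) * (M:ℝ))) * C l y.2)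
        = ((k:ℝ) / ((b:ℝ) * (M:ℝ)))^2 * (((M:ℝ)/(k:ℝ)) * C x.2 y.2) := by
      intro r
      rw [← hCC x.2 y.2, Finset.mul_sum]
      congr 1; ext l; ring
    rw [Finset.sum_congr rfl (fun r _ => this r), Finset.sum_const, Finset.card_univ,
      Fintype.card_fin, nsmul_eq_mul]
    field_simp
  have hHsym : Hᵀ = H := by
    ext x y
    simp only [Matrix.transpose_apply, hHapp]
    exact if_congr eq_comm rfl rfl
  have hGsym : Gᵀ = G := by
    ext x y
    simp only [Matrix.transpose_apply, hGapp, hCsymm]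
  set E₁ : Matrix (Fin b × Fin M) (Fin b × Fin M) ℝ := 1 - H with hE₁
  set E₂ : Matrix (Fin b × Fin M) (Fin b × Fin M) ℝ := H - G with hE₂
  have hE₁E₁ : E₁ * E₁ = E₁ := by
    rw [hE₁]
    simp only [Matrix.sub_mul, Matrix.mul_sub, Matrix.one_mul, Matrix.mul_one, hHH]
    abel
  have hE₂E₂ : E₂ * E₂ = E₂ := by
    rw [hE₂]
    simp only [Matrix.sub_mul, Matrix.mul_sub, hHH, hHG, hGH, hGG]
    abel
  have hE₁E₂ : E₁ * E₂ = 0 := by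
    rw [hE₁, hE₂]
    simp only [Matrix.sub_mul, Matrix.mul_sub, Matrix.one_mul, Matrix.mul_one, hHH, hHG]
    abel
  have hE₂E₁ : E₂ * E₁ = 0 := by
    rw [hE₁, hE₂]
    simp only [Matrix.sub_mul, Matrix.mul_sub, Matrix.one_mul, Matrix.mul_one, hHH, hGH]
    abel
  have hE₁sym : E₁ᵀ = E₁ := by rw [hE₁, Matrix.transpose_sub, Matrix.transpose_one, hHsym]
  have hE₂sym : E₂ᵀ = E₂ := by rw [hE₂, Matrix.transpose_sub, hHsym, hGsym]
  set A' : Matrix (Fin b × Fin M) (Fin b × Fin M) ℝ := a₁ • E₁ + a₂ • E₂ with hA'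
  refine ⟨A', ?_, ?_, ?_, ?_⟩
  · exact (posSemidef_smul_idem E₁ hE₁sym hE₁E₁ ha₁.le).add
      (posSemidef_smul_idem E₂ hE₂sym hE₂E₂ ha₂.le)
  · -- rank
    have hFA : ((1 : Matrix (Fin b × Fin M) (Fin b × Fin M) ℝ) - G) * A' = A' := by
      have hF : (1 : Matrix (Fin b × Fin M) (Fin b × Fin M) ℝ) - G = E₁ + E₂ := by
        rw [hE₁, hE₂]; abel
      rw [hF, hA']
      simp only [Matrix.mul_add, Matrix.add_mul, Matrix.mul_smul, Matrix.smul_mul,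
        hE₁E₁, hE₂E₂, hE₁E₂, hE₂E₁, smul_zero, add_zero, zero_add]
    have hXA : (a₁⁻¹ • E₁ + a₂⁻¹ • E₂) * A'
        = (1 : Matrix (Fin b × Fin M) (Fin b × Fin M) ℝ) - G := by
      have hF : (1 : Matrix (Fin b × Fin M) (Fin b × Fin M) ℝ) - G = E₁ + E₂ := by
        rw [hE₁, hE₂]; abel
      rw [hF, hA']
      simp only [Matrix.mul_add, Matrix.add_mul, Matrix.mul_smul, Matrix.smul_mul,
        hE₁E₁, hE₂E₂, hE₁E₂, hE₂E₁, smul_zero, add_zero, zero_add, smul_smul,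
        mul_inv_cancel₀ ha₁.ne', mul_inv_cancel₀ ha₂.ne', one_smul]
    have hrk1 : A'.rank ≤ ((1 : Matrix (Fin b × Fin M) (Fin b × Fin M) ℝ) - G).rank := by
      conv_lhs => rw [← hFA]
      exact Matrix.rank_mul_le_left _ _
    have hrk2 : ((1 : Matrix (Fin b × Fin M) (Fin b × Fin M) ℝ) - G).rank ≤ A'.rank := by
      conv_lhs => rw [← hXA]
      exact Matrix.rank_mul_le_right _ _
    have hrkA : A'.rank = ((1 : Matrix (Fin b × Fin M) (Fin b × Fin M) ℝ) - G).rank :=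
      le_antisymm hrk1 hrk2
    -- rank G = k
    have hGrank : G.rank = k := by
      set L : Matrix (Fin b × Fin M) (Fin M) ℝ :=
        Matrix.of (fun x j => if x.2 = j then ((k:ℝ) / ((b:ℝ) * (M:ℝ))) else 0) with hL
      set R : Matrix (Fin M) (Fin b × Fin M) ℝ :=
        Matrix.of (fun j y => if j = y.2 then (1:ℝ) else 0) with hR
      have hLCR : L * (C * R) = G := by
        ext x y
        rw [Matrix.mul_apply]
        simp only [hL, Matrix.of_apply, ite_mul, zero_mul, Finset.sum_ite_eq,
          Finset.mem_univ, if_pos]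
        rw [Matrix.mul_apply]
        simp only [hR, Matrix.of_apply, mul_ite, mul_zero, Finset.sum_ite_eq',
          Finset.mem_univ, if_pos]
        rw [hGapp]
        ring
      have hle : G.rank ≤ k := by
        rw [← hLCR, ← hrank]
        calc (L * (C * R)).rank ≤ (C * R).rank := Matrix.rank_mul_le_right _ _
        _ ≤ C.rank := Matrix.rank_mul_le_left _ _
      have r₀ : Fin b := ⟨0, by omega⟩
      set L' : Matrix (Fin M) (Fin b × Fin M) ℝ :=
        Matrix.of (fun i x => if x = (r₀, i) then ((b:ℝ) * (M:ℝ) / (k:ℝ)) else 0) with hL'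
      set R' : Matrix (Fin b × Fin M) (Fin M) ℝ :=
        Matrix.of (fun x j => if x = (r₀, j) then (1:ℝ) else 0) with hR'
      have hLGR : L' * (G * R') = C := by
        ext i j
        rw [Matrix.mul_apply]
        simp only [hL', Matrix.of_apply, ite_mul, zero_mul, Finset.sum_ite_eq',
          Finset.mem_univ, if_pos]
        rw [Matrix.mul_apply]
        simp only [hR', Matrix.of_apply, mul_ite, mul_zero, Finset.sum_ite_eq',
          Finset.mem_univ, if_pos]
        rw [hGapp]
        field_simp
      have hge : k ≤ G.rank := by
        rw [← hrank, ← hLGR]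
        calc (L' * (G * R')).rank ≤ (G * R').rank := Matrix.rank_mul_le_right _ _
        _ ≤ G.rank := Matrix.rank_mul_le_left _ _
      omega
    have hcard := rank_one_sub_add_rank G hGG
    rw [Fintype.card_prod, Fintype.card_fin, Fintype.card_fin] at hcard
    omega
  · -- diagonal
    intro x
    have hval : A' x x = a₁ * (1 - (b:ℝ)⁻¹)
        + a₂ * ((b:ℝ)⁻¹ - ((k:ℝ) / ((b:ℝ) * (M:ℝ))) * 1) := by
      rw [hA']
      simp only [Matrix.add_apply, Matrix.smul_apply, hE₁, hE₂, Matrix.sub_apply,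
        Matrix.one_apply_eq, hHapp, hGapp, if_pos rfl, smul_eq_mul, hdiag, if_true, eq_self_iff_true]
    rw [hval, ha₁def, ha₂def, hwsub]
    field_simp
    ring
  · -- the sum
    have hA'same : ∀ x y : Fin b × Fin M, x.2 = y.2 → x.1 ≠ y.1 → A' x y = -τ := by
      intro x y h2 h1
      have hxy : x ≠ y := fun hc => h1 (by rw [hc])
      have hval : A' x y = a₁ * (0 - (b:ℝ)⁻¹)
          + a₂ * ((b:ℝ)⁻¹ - ((k:ℝ) / ((b:ℝ) * (M:ℝ))) * 1) := by
        rw [hA']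
        simp only [Matrix.add_apply, Matrix.smul_apply, hE₁, hE₂, Matrix.sub_apply,
          Matrix.one_apply_ne hxy, hHapp, hGapp, if_pos h2, smul_eq_mul, h2, hdiag, if_true, eq_self_iff_true]
      rw [hval, ha₁def, ha₂def, hwsub]
      field_simp
      ring
    have hA'diff : ∀ x y : Fin b × Fin M, x.2 ≠ y.2 → A' x y = -(w * C x.2 y.2) := by
      intro x y h2
      have hxy : x ≠ y := fun hc => h2 (by rw [hc])
      have hval : A' x y = a₁ * (0 - 0)
          + a₂ * (0 - ((k:ℝ) / ((b:ℝ) * (M:ℝ))) * C x.2 y.2) := by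
        rw [hA']
        simp only [Matrix.add_apply, Matrix.smul_apply, hE₁, hE₂, Matrix.sub_apply,
          Matrix.one_apply_ne hxy, hHapp, hGapp, if_neg h2, smul_eq_mul]
      rw [hval, ha₂def]
      field_simp
      ring
    have hterm : ∀ x y : Fin b × Fin M, (if x = y then (0:ℝ) else |A' x y| ^ p)
        = if x.2 = y.2 then (if x.1 = y.1 then 0 else τ ^ p) else (w * β) ^ p := by
      intro x y
      by_cases h2 : x.2 = y.2
      · by_cases h1 : x.1 = y.1
        · have hxy : x = y := Prod.ext h1 h2
          simp [hxy]
        · have hxy : x ≠ y := fun hc => h1 (by rw [hc])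
          rw [if_neg hxy, if_pos h2, if_neg h1, hA'same x y h2 h1, abs_neg,
            abs_of_pos hτpos]
      · have hxy : x ≠ y := fun hc => h2 (by rw [hc])
        rw [if_neg hxy, if_neg h2, hA'diff x y h2, abs_neg, abs_mul,
          abs_of_pos hwpos, hoff _ _ h2]
    calc (∑ x : Fin b × Fin M, ∑ y : Fin b × Fin M, if x = y then (0:ℝ) else |A' x y| ^ p)
        = ∑ x : Fin b × Fin M, ∑ y : Fin b × Fin M,
            (if x.2 = y.2 then (if x.1 = y.1 then 0 else τ ^ p) else (w * β) ^ p) := by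
          refine Finset.sum_congr rfl fun x _ => Finset.sum_congr rfl fun y _ => hterm x y
      _ = (b:ℝ) * (M:ℝ) * (((b:ℝ)-1) * τ ^ p + (b:ℝ) * ((M:ℝ)-1) * (w * β) ^ p) :=
          double_sum_count b M (τ ^ p) ((w * β) ^ p)
      _ = (b : ℝ) * (M : ℝ) * τ ^ (p - 1) := by
          have hq1 : β ^ (q - 2) * β = β ^ (q - 1) := by
            nth_rewrite 2 [← Real.rpow_one β]
            rw [← Real.rpow_add hβpos]
            congr 1
            ring
          have hqp : (q - 1) * p = q := by
            rw [hq]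
            field_simp
            ring
          have hwβ : (w * β) ^ p = τ ^ p * s := by
            rw [hw, mul_assoc, hq1, Real.mul_rpow hτpos.le (Real.rpow_nonneg hβpos.le _),
              ← Real.rpow_mul hβpos.le, hqp, ← hs]
          have hτp : τ ^ p = τ ^ (p - 1) * τ := by
            nth_rewrite 3 [← Real.rpow_one τ]
            rw [← Real.rpow_add hτpos]
            congr 1
            ring
          rw [hwβ, hτp]
          linear_combination ((b:ℝ) * (M:ℝ) * τ ^ (p-1)) * hτ
/-- Construction of sharp codes: if `C` is the Gram matrix of unit representatives of a tight
simplex with `M` points in `RP^{k-1}`, then for every `b ≥ 1` and every real `p > 1` there is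
a Gram matrix `A` of `bM` unit vectors in `ℝ^{bM-k}` (a projective code in `RP^{bM-k-1}`)
attaining the `p`-frame energy lower bound. -/
theorem sharp_code_construction (M k : ℕ) (hk : 0 < k) (hkM : k < M)
    (C : Matrix (Fin M) (Fin M) ℝ) (hpsd : C.PosSemidef) (hrank : C.rank = k)
    (hdiag : ∀ i, C i i = 1)
    (hoff : ∀ i j, i ≠ j → |C i j| = tightSimplexBeta M k)
    (htight : C * C = ((M : ℝ) / (k : ℝ)) • C) :
    ∀ b : ℕ, 1 ≤ b → ∀ p : ℝ, 1 < p →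
      ∃ A : Matrix (Fin (b * M)) (Fin (b * M)) ℝ,
        A.PosSemidef ∧ A.rank = b * M - k ∧ (∀ i, A i i = 1) ∧
        (∑ i, ∑ j, if i = j then 0 else |A i j| ^ p) ^ (1 / p)
          = ((b * M : ℕ) : ℝ)
            / (((b * M : ℕ) : ℝ) ^ 2
                * (tightSimplexBeta M k ^ (p / (p - 1))
                  + (1 - tightSimplexBeta M k ^ (p / (p - 1))) / (M : ℝ))
              - ((b * M : ℕ) : ℝ)) ^ (1 - 1 / p) := by
  intro b hb p hp
  obtain ⟨A', hApsd, hArank, hAdiag, hAsum⟩ :=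
    aux_main M k hk hkM C hpsd hrank hdiag hoff htight b hb p hp
  set e : Fin b × Fin M ≃ Fin (b * M) := finProdFinEquiv with he
  refine ⟨Matrix.reindex e e A', ?_, ?_, ?_, ?_⟩
  · rw [Matrix.reindex_apply]
    exact hApsd.submatrix _
  · rw [Matrix.rank_reindex]
    omega
  · intro i
    rw [Matrix.reindex_apply, Matrix.submatrix_apply]
    exact hAdiag _
  · -- positivity preliminaries
    have hM2 : 2 ≤ M := by omega
    have hkR : (0:ℝ) < k := by exact_mod_cast hk
    have hMR : (0:ℝ) < M := by positivity
    have hMk : (0:ℝ) < (M:ℝ) - k := by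
      have : (k:ℝ) < M := by exact_mod_cast hkM
      linarith
    have hM1 : (0:ℝ) < (M:ℝ) - 1 := by
      have : (1:ℝ) < M := by exact_mod_cast hM2.trans_lt' one_lt_two
      linarith
    have hβpos : 0 < tightSimplexBeta M k := by
      rw [tightSimplexBeta]
      apply Real.sqrt_pos.mpr
      positivity
    have hp0 : (0:ℝ) < p := by linarith
    set s := tightSimplexBeta M k ^ (p / (p - 1)) with hs
    have hspos : 0 < s := Real.rpow_pos_of_pos hβpos _
    have hbR : (1:ℝ) ≤ b := by exact_mod_cast hb
    have hbpos : (0:ℝ) < b := by linarith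
    have hden : 0 < (b:ℝ)*((M:ℝ)-1)*s + ((b:ℝ)-1) := by
      have h1 : 0 < (b:ℝ)*((M:ℝ)-1)*s := by positivity
      linarith
    set τ := sharpTau M k b p with hτdef
    have hτeq : τ = ((b:ℝ)*((M:ℝ)-1)*s + ((b:ℝ)-1))⁻¹ := rfl
    have hτpos : 0 < τ := by rw [hτeq]; exact inv_pos.mpr hden
    set N := (b:ℝ) * (M:ℝ) with hN
    have hNpos : 0 < N := by positivity
    -- transport the sum
    have htrans : (∑ i, ∑ j, if i = j then (0:ℝ) else |(Matrix.reindex e e A') i j| ^ p)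
        = ∑ x, ∑ y, (if x = y then (0:ℝ) else |A' x y| ^ p) := by
      have h1 : ∀ x : Fin b × Fin M,
          (∑ j : Fin (b*M), if x = e.symm j then (0:ℝ) else |A' x (e.symm j)| ^ p)
            = ∑ y, if x = y then (0:ℝ) else |A' x y| ^ p :=
        fun x => Equiv.sum_comp e.symm (fun y => if x = y then (0:ℝ) else |A' x y| ^ p)
      calc (∑ i, ∑ j, if i = j then (0:ℝ) else |(Matrix.reindex e e A') i j| ^ p)
          = ∑ i, ∑ j, (if e.symm i = e.symm j then (0:ℝ)
              else |A' (e.symm i) (e.symm j)| ^ p) := by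
            refine Finset.sum_congr rfl fun i _ => Finset.sum_congr rfl fun j _ => ?_
            rw [Matrix.reindex_apply, Matrix.submatrix_apply]
            exact if_congr (Equiv.apply_eq_iff_eq e.symm).symm rfl rfl
        _ = ∑ i, (∑ y, if e.symm i = y then (0:ℝ) else |A' (e.symm i) y| ^ p) :=
            Finset.sum_congr rfl fun i _ => h1 (e.symm i)
        _ = ∑ x, ∑ y, (if x = y then (0:ℝ) else |A' x y| ^ p) :=
            Equiv.sum_comp e.symm
              (fun x => ∑ y, if x = y then (0:ℝ) else |A' x y| ^ p)
    rw [htrans, hAsum]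
    -- rewrite the right-hand side casts
    have hNR : ((b * M : ℕ) : ℝ) = N := by rw [hN]; push_cast; ring
    rw [hNR]
    -- denominator identity
    have hD : N ^ 2 * (s + (1 - s) / (M:ℝ)) - N = N / τ := by
      rw [hτeq, div_inv_eq_mul, hN]
      field_simp
      ring
    rw [hD]
    -- final rpow algebra
    have hp0' : p ≠ 0 := by positivity
    have hsplit : N = N ^ (1/p) * N ^ (1 - 1/p) := by
      rw [← Real.rpow_add hNpos, show 1/p + (1 - 1/p) = 1 by ring, Real.rpow_one]
    have h5 : (p - 1) * (1 / p) = 1 - 1 / p := by field_simp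
    have hNz0 : N ^ (1 - 1/p) ≠ 0 := (Real.rpow_pos_of_pos hNpos _).ne'
    rw [Real.mul_rpow hNpos.le (Real.rpow_nonneg hτpos.le _), ← Real.rpow_mul hτpos.le, h5,
      Real.div_rpow hNpos.le hτpos.le, div_div_eq_mul_div, eq_div_iff hNz0]
    linear_combination (-(τ ^ (1 - 1/p))) * hsplit
end
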